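/- arXiv:2208.00762 — 3 statements merged into one kernel-verified Lean document; each statement's English description precedes it below -/
import Mathlib

section
/- Let V and W be Lebesgue lattices and J : V → ℝ, K : W → ℝ Daniell integrals. The integral I on L(V ⊗ W) defined by iterated integration I(f) = J(Kf) is the unique Daniell integral on L(V ⊗ W) satisfying I(g ⊗ h) = J(g)·K(h) for all g ∈ V, h ∈ W. -/
open Filter Topology

/-- `Pdom M`: dominated pointwise limits of sequences in `M`
(sequence `f₀, f₁, …` with `|fₙ| ≤ f₀` for `n ≥ 1`, converging pointwise). -/
def Pdom {Z : Type*} (M : Set (Z → ℝ)) : Set (Z → ℝ) :=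
  { f | ∃ F : ℕ → Z → ℝ, (∀ n, F n ∈ M) ∧ (∀ n, |F (n + 1)| ≤ F 0) ∧
      ∀ z, Tendsto (fun n => F n z) atTop (𝓝 (f z)) }

/-- `U` is a vector subspace of the functions `Z → ℝ`. -/
def IsSubspace {Z : Type*} (U : Set (Z → ℝ)) : Prop :=
  (0 : Z → ℝ) ∈ U ∧ (∀ f g, f ∈ U → g ∈ U → f + g ∈ U) ∧
    ∀ (c : ℝ) (f), f ∈ U → c • f ∈ U

/-- A Riesz space of functions: a subspace closed under pointwise absolute value. -/
def IsRiesz {Z : Type*} (R : Set (Z → ℝ)) : Prop :=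
  IsSubspace R ∧ ∀ f, f ∈ R → |f| ∈ R

/-- A Lebesgue lattice: a Riesz space closed under dominated pointwise limits. -/
def IsLebesgue {Z : Type*} (L : Set (Z → ℝ)) : Prop :=
  IsRiesz L ∧ Pdom L ⊆ L

/-- smallest Riesz space containing `M`. -/
def RGen {Z : Type*} (M : Set (Z → ℝ)) : Set (Z → ℝ) :=
  ⋂₀ { R | IsRiesz R ∧ M ⊆ R }

/-- smallest Lebesgue lattice containing `M`. -/
def LGen {Z : Type*} (M : Set (Z → ℝ)) : Set (Z → ℝ) :=
  ⋂₀ { L | IsLebesgue L ∧ M ⊆ L }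

/-- Daniell integral on `R`: additive, homogeneous, monotone, continuous under
decreasing convergence to `0`. -/
def IsDaniell {Z : Type*} (R : Set (Z → ℝ)) (I : (Z → ℝ) → ℝ) : Prop :=
  IsRiesz R ∧
  (∀ f g, f ∈ R → g ∈ R → I (f + g) = I f + I g) ∧
  (∀ (c : ℝ) (f), f ∈ R → I (c • f) = c * I f) ∧
  (∀ f, f ∈ R → I f ≤ I |f|) ∧
  ∀ F : ℕ → Z → ℝ, (∀ n, F n ∈ R) → (∀ n, 0 ≤ F (n + 1)) →
    (∀ n, F (n + 1) ≤ F n) →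
    (∀ z, Tendsto (fun n => F n z) atTop (𝓝 0)) →
    Tendsto (fun n => I (F n)) atTop (𝓝 0)

/-- elementary tensor `(g ⊗ h)(x, y) = g x * h y`. -/
def tensor {X Y : Type*} (g : X → ℝ) (h : Y → ℝ) : X × Y → ℝ :=
  fun p => g p.1 * h p.2

/-- tensor product `V ⊗ W`: finite sums of elementary tensors. -/
def TensorSet {X Y : Type*} (V : Set (X → ℝ)) (W : Set (Y → ℝ)) :
    Set (X × Y → ℝ) :=
  { f | ∃ (k : ℕ) (g : Fin k → X → ℝ) (h : Fin k → Y → ℝ),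
      (∀ i, g i ∈ V) ∧ (∀ i, h i ∈ W) ∧ f = ∑ i, tensor (g i) (h i) }

/-- `iterP U m`: `U₁ = U`, `U_{m+1} = P(U_m)` (0-indexed). -/
def iterP {Z : Type*} (U : Set (Z → ℝ)) : ℕ → Set (Z → ℝ)
  | 0 => U
  | n + 1 => Pdom (iterP U n)

namespace Fub

variable {Z : Type*}

/-! ### Riesz space helpers -/

theorem riesz_zero {R : Set (Z → ℝ)} (hR : IsRiesz R) : (0 : Z → ℝ) ∈ R := hR.1.1

theorem riesz_add {R : Set (Z → ℝ)} (hR : IsRiesz R) {f g : Z → ℝ}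
    (hf : f ∈ R) (hg : g ∈ R) : f + g ∈ R := hR.1.2.1 f g hf hg

theorem riesz_smul {R : Set (Z → ℝ)} (hR : IsRiesz R) (c : ℝ) {f : Z → ℝ}
    (hf : f ∈ R) : c • f ∈ R := hR.1.2.2 c f hf

theorem riesz_abs {R : Set (Z → ℝ)} (hR : IsRiesz R) {f : Z → ℝ}
    (hf : f ∈ R) : |f| ∈ R := hR.2 f hf

theorem riesz_neg {R : Set (Z → ℝ)} (hR : IsRiesz R) {f : Z → ℝ}
    (hf : f ∈ R) : -f ∈ R := by
  have := riesz_smul hR (-1) hf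
  simpa using this

theorem riesz_sub {R : Set (Z → ℝ)} (hR : IsRiesz R) {f g : Z → ℝ}
    (hf : f ∈ R) (hg : g ∈ R) : f - g ∈ R := by
  have := riesz_add hR hf (riesz_neg hR hg)
  simpa [sub_eq_add_neg] using this

theorem sup_eq_half (f g : Z → ℝ) : f ⊔ g = (2⁻¹ : ℝ) • (f + g + |f - g|) := by
  funext z
  simp only [Pi.sup_apply, Pi.smul_apply, Pi.add_apply, Pi.abs_apply, Pi.sub_apply, smul_eq_mul]
  rcases le_total (f z) (g z) with h | h
  · rw [max_eq_right h, abs_of_nonpos (by linarith)]; ring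
  · rw [max_eq_left h, abs_of_nonneg (by linarith)]; ring

theorem riesz_sup {R : Set (Z → ℝ)} (hR : IsRiesz R) {f g : Z → ℝ}
    (hf : f ∈ R) (hg : g ∈ R) : f ⊔ g ∈ R := by
  rw [sup_eq_half]
  exact riesz_smul hR _ (riesz_add hR (riesz_add hR hf hg) (riesz_abs hR (riesz_sub hR hf hg)))

theorem riesz_inf {R : Set (Z → ℝ)} (hR : IsRiesz R) {f g : Z → ℝ}
    (hf : f ∈ R) (hg : g ∈ R) : f ⊓ g ∈ R := by
  have h : f ⊓ g = -((-f) ⊔ (-g)) := by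
    funext z
    simp only [Pi.inf_apply, Pi.neg_apply, Pi.sup_apply]
    rw [← min_neg_neg, neg_neg, neg_neg]
  rw [h]
  exact riesz_neg hR (riesz_sup hR (riesz_neg hR hf) (riesz_neg hR hg))

theorem riesz_finsum {R : Set (Z → ℝ)} (hR : IsRiesz R) {ι : Type*} (s : Finset ι)
    (u : ι → Z → ℝ) (hu : ∀ i ∈ s, u i ∈ R) : (∑ i ∈ s, u i) ∈ R := by
  classical
  induction s using Finset.induction_on with
  | empty => simpa using riesz_zero hR
  | insert _ _ hnot ih =>
    rw [Finset.sum_insert hnot]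
    exact riesz_add hR (hu _ (Finset.mem_insert_self _ _))
      (ih fun i hi => hu i (Finset.mem_insert_of_mem hi))

/-! ### Lebesgue lattice / LGen helpers -/

theorem isLebesgue_univ : IsLebesgue (Set.univ : Set (Z → ℝ)) := by
  refine ⟨⟨⟨trivial, fun _ _ _ _ => trivial, fun _ _ _ => trivial⟩, fun _ _ => trivial⟩, fun _ _ => trivial⟩

theorem lgen_isLebesgue (M : Set (Z → ℝ)) : IsLebesgue (LGen M) := by
  constructor
  · constructor
    · refine ⟨fun A hA => hA.1.1.1.1, fun f g hf hg A hA => hA.1.1.1.2.1 f g (hf A hA) (hg A hA),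
        fun c f hf A hA => hA.1.1.1.2.2 c f (hf A hA)⟩
    · exact fun f hf A hA => hA.1.1.2 f (hf A hA)
  · intro f hf A hA
    refine hA.1.2 ?_
    obtain ⟨F, hF, hd, hc⟩ := hf
    exact ⟨F, fun n => hF n A hA, hd, hc⟩

theorem subset_lgen (M : Set (Z → ℝ)) : M ⊆ LGen M :=
  fun f hf A hA => hA.2 hf

theorem lgen_subset {M A : Set (Z → ℝ)} (hA : IsLebesgue A) (hMA : M ⊆ A) : LGen M ⊆ A :=
  fun f hf => hf A ⟨hA, hMA⟩

theorem lgen_mono {M M' : Set (Z → ℝ)} (h : M ⊆ M') : LGen M ⊆ LGen M' :=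
  lgen_subset (lgen_isLebesgue M') (h.trans (subset_lgen M'))

/-- prepend a dominator to get a `Pdom` witness. -/
theorem pdom_of_prepend {M : Set (Z → ℝ)} {F : ℕ → Z → ℝ} {D f : Z → ℝ}
    (hD : D ∈ M) (hF : ∀ n, F n ∈ M) (hdom : ∀ n, |F n| ≤ D)
    (hconv : ∀ z, Tendsto (fun n => F n z) atTop (𝓝 (f z))) : f ∈ Pdom M := by
  refine ⟨fun n => Nat.casesOn n D F, fun n => by cases n <;> simp [hD, hF], fun n => hdom n, ?_⟩
  intro z
  have : Tendsto (fun n => (fun m => Nat.casesOn m D F z) (n + 1)) atTop (𝓝 (f z)) := by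
    simpa using hconv z
  exact (tendsto_add_atTop_iff_nat 1).mp this

/-! ### partial min / max sequences -/

/-- partial minimum of a real sequence -/
def pmin (a : ℕ → ℝ) : ℕ → ℝ
  | 0 => a 0
  | n + 1 => min (pmin a n) (a (n + 1))

def pmax (a : ℕ → ℝ) : ℕ → ℝ
  | 0 => a 0
  | n + 1 => max (pmax a n) (a (n + 1))

theorem pmin_le (a : ℕ → ℝ) (n : ℕ) : pmin a n ≤ a n := by
  cases n with
  | zero => exact le_refl _
  | succ n => exact min_le_right _ _

theorem pmin_antitone (a : ℕ → ℝ) : Antitone (pmin a) := by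
  refine antitone_nat_of_succ_le fun n => min_le_left _ _

theorem le_pmin {a : ℕ → ℝ} {c : ℝ} (h : ∀ n, c ≤ a n) (n : ℕ) : c ≤ pmin a n := by
  induction n with
  | zero => exact h 0
  | succ n ih => exact le_min ih (h (n + 1))

theorem pmin_le_of_le {a : ℕ → ℝ} {n m : ℕ} (h : m ≤ n) : pmin a n ≤ a m :=
  le_trans (pmin_antitone a h) (pmin_le a m)

theorem pmin_tendsto_iInf {a : ℕ → ℝ} (hb : BddBelow (Set.range a)) :
    Tendsto (pmin a) atTop (𝓝 (⨅ m, a m)) := by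
  obtain ⟨c, hc⟩ := hb
  have hc' : ∀ n, c ≤ a n := fun n => hc ⟨n, rfl⟩
  have hbp : BddBelow (Set.range (pmin a)) := ⟨c, fun x ⟨n, hn⟩ => hn ▸ le_pmin hc' n⟩
  have h1 : Tendsto (pmin a) atTop (𝓝 (⨅ n, pmin a n)) :=
    tendsto_atTop_ciInf (pmin_antitone a) hbp
  have h2 : (⨅ n, pmin a n) = ⨅ m, a m := by
    apply le_antisymm
    · exact le_ciInf fun m => (ciInf_le hbp m).trans (pmin_le a m)
    · exact le_ciInf fun n => le_pmin (fun m => ciInf_le ⟨c, hc⟩ m) n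
  rwa [h2] at h1

theorem pmax_monotone (a : ℕ → ℝ) : Monotone (pmax a) :=
  monotone_nat_of_le_succ fun n => le_max_left _ _

theorem le_pmax (a : ℕ → ℝ) (n : ℕ) : a n ≤ pmax a n := by
  cases n with
  | zero => exact le_refl _
  | succ n => exact le_max_right _ _

theorem pmax_le {a : ℕ → ℝ} {c : ℝ} (h : ∀ n, a n ≤ c) (n : ℕ) : pmax a n ≤ c := by
  induction n with
  | zero => exact h 0
  | succ n ih => exact max_le ih (h (n + 1))

theorem le_pmax_of_le {a : ℕ → ℝ} {n m : ℕ} (h : m ≤ n) : a m ≤ pmax a n :=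
  le_trans (le_pmax a m) (pmax_monotone a h)

theorem pmax_tendsto_iSup {a : ℕ → ℝ} (hb : BddAbove (Set.range a)) :
    Tendsto (pmax a) atTop (𝓝 (⨆ m, a m)) := by
  obtain ⟨c, hc⟩ := hb
  have hc' : ∀ n, a n ≤ c := fun n => hc ⟨n, rfl⟩
  have hbp : BddAbove (Set.range (pmax a)) := ⟨c, fun x ⟨n, hn⟩ => hn ▸ pmax_le hc' n⟩
  have h1 : Tendsto (pmax a) atTop (𝓝 (⨆ n, pmax a n)) :=
    tendsto_atTop_ciSup (pmax_monotone a) hbp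
  have h2 : (⨆ n, pmax a n) = ⨆ m, a m := by
    apply le_antisymm
    · exact ciSup_le fun n => pmax_le (fun m => le_ciSup ⟨c, hc⟩ m) n
    · exact ciSup_le fun m => (le_pmax a m).trans (le_ciSup hbp m)
  rwa [h2] at h1

end Fub

namespace Fub
variable {Z : Type*}

/-! ### Daniell integral helpers -/

section Daniell
variable {R : Set (Z → ℝ)} {I : (Z → ℝ) → ℝ} (hD : IsDaniell R I)
include hD

theorem daniell_zero : I 0 = 0 := by
  have := hD.2.2.1 0 0 (riesz_zero hD.1)
  simpa using this

theorem daniell_smul (c : ℝ) {f : Z → ℝ} (hf : f ∈ R) : I (c • f) = c * I f :=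
  hD.2.2.1 c f hf

theorem daniell_add {f g : Z → ℝ} (hf : f ∈ R) (hg : g ∈ R) : I (f + g) = I f + I g :=
  hD.2.1 f g hf hg

theorem daniell_neg {f : Z → ℝ} (hf : f ∈ R) : I (-f) = -I f := by
  have := hD.2.2.1 (-1) f hf
  simpa using this

theorem daniell_sub {f g : Z → ℝ} (hf : f ∈ R) (hg : g ∈ R) : I (f - g) = I f - I g := by
  have h1 : f - g = f + (-g) := by funext z; simp [sub_eq_add_neg]
  rw [h1, daniell_add hD hf (riesz_neg hD.1 hg), daniell_neg hD hg]; ring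

theorem daniell_nonneg {f : Z → ℝ} (hf : f ∈ R) (h : 0 ≤ f) : 0 ≤ I f := by
  have habs : |f| = f := by
    funext z; exact abs_of_nonneg (by exact h z)
  have h1 : I (-f) ≤ I |(-f)| := hD.2.2.2.1 (-f) (riesz_neg hD.1 hf)
  have h2 : |(-f)| = f := by rw [abs_neg, habs]
  rw [h2, daniell_neg hD hf] at h1
  linarith

theorem daniell_mono {f g : Z → ℝ} (hf : f ∈ R) (hg : g ∈ R) (h : f ≤ g) : I f ≤ I g := by
  have := daniell_nonneg hD (riesz_sub hD.1 hg hf) (fun z => by simpa using h z)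
  have h2 := daniell_sub hD hg hf
  linarith [h2 ▸ this]

theorem daniell_abs_le {f : Z → ℝ} (hf : f ∈ R) : |I f| ≤ I |f| := by
  rcases abs_cases (I f) with ⟨h1, _⟩ | ⟨h1, _⟩
  · rw [h1]; exact hD.2.2.2.1 f hf
  · rw [h1, ← daniell_neg hD hf]
    have := hD.2.2.2.1 (-f) (riesz_neg hD.1 hf)
    simpa [abs_neg] using this

theorem daniell_finsum {ι : Type*} (s : Finset ι) (u : ι → Z → ℝ)
    (hu : ∀ i ∈ s, u i ∈ R) : I (∑ i ∈ s, u i) = ∑ i ∈ s, I (u i) := by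
  classical
  induction s using Finset.induction_on with
  | empty => simpa using daniell_zero hD
  | insert a s' hnot ih =>
    rw [Finset.sum_insert hnot, Finset.sum_insert hnot,
      daniell_add hD (hu _ (Finset.mem_insert_self _ _))
        (riesz_finsum hD.1 s' u (fun i hi => hu i (Finset.mem_insert_of_mem hi))),
      ih (fun i hi => hu i (Finset.mem_insert_of_mem hi))]

end Daniell

/-! ### Dominated convergence theorem for Daniell integrals on Lebesgue lattices -/

theorem daniell_dct {L : Set (Z → ℝ)} {I : (Z → ℝ) → ℝ}
    (hL : IsLebesgue L) (hI : IsDaniell L I) {F : ℕ → Z → ℝ} {f D : Z → ℝ}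
    (hF : ∀ n, F n ∈ L) (hf : f ∈ L) (hD : D ∈ L) (hdom : ∀ n, |F n| ≤ D)
    (hconv : ∀ z, Tendsto (fun n => F n z) atTop (𝓝 (f z))) :
    Tendsto (fun n => I (F n)) atTop (𝓝 (I f)) := by
  classical
  have hR := hL.1
  -- the decreasing tail-sup sequence
  set a : ℕ → ℕ → Z → ℝ := fun n m z => |F (n + m) z - f z| with ha
  have hbound : ∀ n m z, a n m z ≤ D z + |f z| := by
    intro n m z
    have h1 : |F (n + m) z| ≤ D z := hdom (n + m) z
    calc a n m z ≤ |F (n+m) z| + |f z| := abs_sub _ _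
      _ ≤ D z + |f z| := by linarith
  have hbdd : ∀ n z, BddAbove (Set.range (fun m => a n m z)) :=
    fun n z => ⟨D z + |f z|, fun x ⟨m, hm⟩ => hm ▸ hbound n m z⟩
  set g : ℕ → Z → ℝ := fun n z => ⨆ m, a n m z with hg
  have hg_nonneg : ∀ n, (0 : Z → ℝ) ≤ g n := by
    intro n z
    exact le_trans (abs_nonneg _) (le_ciSup (hbdd n z) 0)
  have hg_le : ∀ n z, g n z ≤ D z + |f z| := fun n z => ciSup_le fun m => hbound n m z
  -- membership of g n in L
  have hFf : ∀ n, |F n - f| ∈ L := fun n => riesz_abs hR (riesz_sub hR (hF n) hf)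
  have hgmem : ∀ n, g n ∈ L := by
    intro n
    apply hL.2
    apply pdom_of_prepend (D := D + |f|)
      (F := fun j => fun z => pmax (fun m => a n m z) j)
    · exact riesz_add hR hD (riesz_abs hR hf)
    · intro j
      have : (fun z => pmax (fun m => a n m z) j) = ∑ m ∈ Finset.range (j+1), 0 + (fun z => pmax (fun m => a n m z) j) := by simp
      -- show membership by induction on j
      clear this
      induction j with
      | zero => convert hFf n using 1; funext z; simp [ha, pmax]
      | succ j ih =>
        have h1 : (fun z => pmax (fun m => a n m z) (j+1))
            = (fun z => pmax (fun m => a n m z) j) ⊔ |F (n + (j+1)) - f| := by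
          funext z; simp [pmax, Pi.sup_apply, max_comm, ha]
        rw [h1]
        exact riesz_sup hR ih (hFf _)
    · intro j z
      have h0 : (0:ℝ) ≤ pmax (fun m => a n m z) j :=
        le_trans (abs_nonneg (F (n + 0) z - f z)) (le_pmax_of_le (a := fun m => a n m z) (Nat.zero_le j))
      have h1 : pmax (fun m => a n m z) j ≤ D z + |f z| := pmax_le (fun m => hbound n m z) j
      simp only [Pi.abs_apply, Pi.add_apply]
      rw [abs_of_nonneg h0]
      exact h1
    · intro z
      exact pmax_tendsto_iSup (hbdd n z)
  -- g is antitone, tends to 0 pointwise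
  have hg_anti : ∀ n, g (n + 1) ≤ g n := by
    intro n z
    refine ciSup_le fun m => ?_
    have : n + 1 + m = n + (m + 1) := by omega
    rw [show a (n+1) m z = a n (m+1) z by rw [ha]; simp only; rw [this]]
    exact le_ciSup (hbdd n z) (m + 1)
  have hg_to0 : ∀ z, Tendsto (fun n => g n z) atTop (𝓝 0) := by
    intro z
    rw [Metric.tendsto_atTop]
    intro ε hε
    have := (Metric.tendsto_atTop.mp (hconv z)) (ε/2) (by linarith)
    obtain ⟨N, hN⟩ := this
    refine ⟨N, fun n hn => ?_⟩
    have h1 : g n z ≤ ε/2 := by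
      refine ciSup_le fun m => ?_
      have := hN (n + m) (by omega)
      rw [Real.dist_eq] at this
      exact le_of_lt this
    have h2 : (0:ℝ) ≤ g n z := hg_nonneg n z
    rw [Real.dist_eq]
    rw [abs_of_nonneg (by simpa using h2)]
    simpa using lt_of_le_of_lt h1 (by linarith)
  -- apply the Daniell continuity axiom
  have hIg : Tendsto (fun n => I (g n)) atTop (𝓝 0) :=
    hI.2.2.2.2 g hgmem (fun n => hg_nonneg (n+1)) (fun n => hg_anti n) hg_to0
  -- squeeze
  have hkey : ∀ n, |I (F n) - I f| ≤ I (g n) := by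
    intro n
    rw [← daniell_sub hI (hF n) hf]
    refine le_trans (daniell_abs_le hI (riesz_sub hI.1 (hF n) hf)) ?_
    refine daniell_mono hI (hFf n) (hgmem n) ?_
    intro z
    simp only [Pi.abs_apply, Pi.sub_apply]
    exact le_trans (by rw [ha]; exact le_of_eq (by simp)) (le_ciSup (hbdd n z) 0)
  rw [tendsto_iff_dist_tendsto_zero]
  refine squeeze_zero (fun n => dist_nonneg) (fun n => ?_) hIg
  rw [Real.dist_eq]
  exact hkey n

end Fub

namespace Fub
variable {Z : Type*}

/-- **Theorem B**: any `Pdom`-closed superset of a Riesz space contains the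
generated Lebesgue lattice. -/
theorem lgen_riesz_subset_of_pdom_closed {R A : Set (Z → ℝ)}
    (hR : IsRiesz R) (hRA : R ⊆ A) (hP : Pdom A ⊆ A) : LGen R ⊆ A := by
  classical
  set C : Set (Z → ℝ) := ⋂₀ { B | R ⊆ B ∧ Pdom B ⊆ B } with hC
  have hRC : R ⊆ C := fun f hf B hB => hB.1 hf
  have hPC : Pdom C ⊆ C := by
    intro f hf B hB
    refine hB.2 ?_
    obtain ⟨F, hF, hd, hc⟩ := hf
    exact ⟨F, fun n => hF n B hB, hd, hc⟩
  have hCmin : ∀ B, R ⊆ B → Pdom B ⊆ B → C ⊆ B := fun B h1 h2 =>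
    Set.sInter_subset_of_mem ⟨h1, h2⟩
  -- closure under abs
  have habs : ∀ f ∈ C, |f| ∈ C := by
    have : C ⊆ {f | f ∈ C ∧ |f| ∈ C} := by
      refine hCmin _ (fun f hf => ⟨hRC hf, hRC (hR.2 f hf)⟩) ?_
      rintro f ⟨F, hF, hd, hc⟩
      have hfC : f ∈ C := hPC ⟨F, fun n => (hF n).1, hd, hc⟩
      refine ⟨hfC, hPC ?_⟩
      refine ⟨fun n => |F n|, fun n => (hF n).2, ?_, ?_⟩
      · intro n z
        simp only [Pi.abs_apply, abs_abs]
        exact le_trans (hd n z) (le_abs_self _)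
      · intro z
        simp only [Pi.abs_apply]
        exact (continuous_abs.tendsto _).comp (hc z)
    exact fun f hf => (this hf).2
  -- closure under smul
  have hsmul : ∀ (c : ℝ), ∀ f ∈ C, c • f ∈ C := by
    intro c
    have : C ⊆ {f | f ∈ C ∧ c • f ∈ C} := by
      refine hCmin _ (fun f hf => ⟨hRC hf, hRC (hR.1.2.2 c f hf)⟩) ?_
      rintro f ⟨F, hF, hd, hc⟩
      have hfC : f ∈ C := hPC ⟨F, fun n => (hF n).1, hd, hc⟩
      refine ⟨hfC, hPC ?_⟩
      refine pdom_of_prepend (M := C) (D := |c • F 0|) (F := fun n => c • F n)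
        (habs _ ((hF 0).2)) (fun n => (hF n).2) ?_ ?_
      · intro n z
        simp only [Pi.abs_apply, Pi.smul_apply, smul_eq_mul, abs_mul]
        rcases n with _ | n
        · exact le_refl _
        · have h1 : |F (n+1) z| ≤ F 0 z := hd n z
          have h2 : F 0 z ≤ |F 0 z| := le_abs_self _
          exact mul_le_mul_of_nonneg_left (le_trans h1 h2) (abs_nonneg c)
      · intro z
        simp only [Pi.smul_apply, smul_eq_mul]
        exact (hc z).const_mul c
    exact fun f hf => (this hf).2
  -- closure under adding an element of R
  have haddR : ∀ f ∈ C, ∀ r ∈ R, f + r ∈ C := by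
    have : C ⊆ {f | f ∈ C ∧ ∀ r ∈ R, f + r ∈ C} := by
      refine hCmin _ (fun f hf => ⟨hRC hf, fun r hr => hRC (hR.1.2.1 _ _ hf hr)⟩) ?_
      rintro f ⟨F, hF, hd, hc⟩
      have hfC : f ∈ C := hPC ⟨F, fun n => (hF n).1, hd, hc⟩
      refine ⟨hfC, fun r hr => hPC ?_⟩
      refine pdom_of_prepend (M := C) (D := F 0 + |r|) (F := fun n => F n + r)
        ((hF 0).2 |r| (hR.2 r hr)) (fun n => (hF n).2 r hr) ?_ ?_
      · intro n z
        simp only [Pi.abs_apply, Pi.add_apply]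
        have h0 : (0:ℝ) ≤ F 0 z := le_trans (abs_nonneg _) (hd 0 z)
        rcases n with _ | n
        · calc |F 0 z + r z| ≤ |F 0 z| + |r z| := abs_add_le _ _
            _ ≤ F 0 z + |r z| := by rw [abs_of_nonneg h0]
        · have h1 : |F (n+1) z| ≤ F 0 z := hd n z
          calc |F (n+1) z + r z| ≤ |F (n+1) z| + |r z| := abs_add_le _ _
            _ ≤ F 0 z + |r z| := by linarith
      · intro z
        simp only [Pi.add_apply]
        exact (hc z).add_const (r z)
    exact fun f hf => (this hf).2
  -- closure under addition
  have hadd : ∀ f ∈ C, ∀ g ∈ C, f + g ∈ C := by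
    have : C ⊆ {g | g ∈ C ∧ ∀ f ∈ C, f + g ∈ C} := by
      refine hCmin _ (fun r hr => ⟨hRC hr, fun f hf => haddR f hf r hr⟩) ?_
      rintro g ⟨G, hG, hd, hc⟩
      have hgC : g ∈ C := hPC ⟨G, fun n => (hG n).1, hd, hc⟩
      refine ⟨hgC, fun f hf => hPC ?_⟩
      refine pdom_of_prepend (M := C) (D := |f| + G 0) (F := fun n => f + G n)
        ((hG 0).2 |f| (habs f hf)) (fun n => (hG n).2 f hf) ?_ ?_
      · intro n z
        simp only [Pi.abs_apply, Pi.add_apply]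
        rcases n with _ | n
        · calc |f z + G 0 z| ≤ |f z| + |G 0 z| := abs_add_le _ _
            _ ≤ |f z| + G 0 z := by
              have h1 : |G 1 z| ≤ G 0 z := hd 0 z
              have h2 : (0:ℝ) ≤ G 0 z := le_trans (abs_nonneg _) h1
              have := le_abs_self (G 0 z)
              nlinarith [abs_nonneg (G 0 z), abs_abs (G 0 z), abs_of_nonneg h2]
        · have h1 : |G (n+1) z| ≤ G 0 z := hd n z
          calc |f z + G (n+1) z| ≤ |f z| + |G (n+1) z| := abs_add_le _ _
            _ ≤ |f z| + G 0 z := by linarith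
      · intro z
        simp only [Pi.add_apply]
        exact tendsto_const_nhds.add (hc z)
    exact fun f hf g hg => ((this hg).2) f hf
  have hCleb : IsLebesgue C := by
    refine ⟨⟨⟨hRC (hR.1.1), fun f g hf hg => hadd f hf g hg, fun c f hf => hsmul c f hf⟩,
      fun f hf => habs f hf⟩, hPC⟩
  exact (lgen_subset hCleb hRC).trans (hCmin A hRA hP)

end Fub

namespace Fub
variable {Z : Type*}

/-! ### the ℓ¹-type gauge on `Fin k → ℝ` -/

def nsum {k : ℕ} (c : Fin k → ℝ) : ℝ := ∑ i, |c i|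

theorem nsum_nonneg {k : ℕ} (c : Fin k → ℝ) : 0 ≤ nsum c :=
  Finset.sum_nonneg fun i _ => abs_nonneg _

theorem nsum_smul {k : ℕ} (t : ℝ) (c : Fin k → ℝ) : nsum (t • c) = |t| * nsum c := by
  simp [nsum, Finset.mul_sum, abs_mul]

theorem nsum_eq_zero_iff {k : ℕ} {c : Fin k → ℝ} : nsum c = 0 ↔ c = 0 := by
  constructor
  · intro h
    funext i
    have := (Finset.sum_eq_zero_iff_of_nonneg (fun i _ => abs_nonneg (c i))).mp h i
      (Finset.mem_univ i)
    simpa using this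
  · intro h; simp [h, nsum]

theorem norm_le_nsum {k : ℕ} (c : Fin k → ℝ) : ‖c‖ ≤ nsum c := by
  rw [pi_norm_le_iff_of_nonneg (nsum_nonneg c)]
  intro i
  rw [Real.norm_eq_abs]
  exact Finset.single_le_sum (fun j _ => abs_nonneg (c j)) (Finset.mem_univ i)

theorem continuous_nsum {k : ℕ} : Continuous (nsum (k := k)) :=
  continuous_finset_sum _ fun i _ => (continuous_apply i).abs

theorem nsum_pos {k : ℕ} {c : Fin k → ℝ} (hc : c ≠ 0) : 0 < nsum c :=
  lt_of_le_of_ne (nsum_nonneg c) (fun h => hc (nsum_eq_zero_iff.mp h.symm))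

theorem nsum_neg {k : ℕ} (c : Fin k → ℝ) : nsum (-c) = nsum c := by
  simp [nsum]

/-! ### composition with continuous positively homogeneous maps -/

theorem homog_comp_mem {V : Set (Z → ℝ)} (hV : IsLebesgue V) {k : ℕ}
    {g : Fin k → Z → ℝ} (hg : ∀ i, g i ∈ V) {φ : (Fin k → ℝ) → ℝ}
    (hcont : Continuous φ) (hhom : ∀ t : ℝ, 0 ≤ t → ∀ c, φ (t • c) = t * φ c) :
    (fun z => φ (fun i => g i z)) ∈ V := by
  classical
  have hR : IsRiesz V := hV.1
  -- bound on the "sphere"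
  set S : Set (Fin k → ℝ) := {v | nsum v = 1} with hS
  have hSc : IsCompact S := by
    apply Metric.isCompact_of_isClosed_isBounded
    · exact isClosed_eq continuous_nsum continuous_const
    · refine (Metric.isBounded_closedBall (x := (0 : Fin k → ℝ)) (r := 1)).subset ?_
      intro v hv
      rw [Metric.mem_closedBall, dist_zero_right]
      exact (norm_le_nsum v).trans (le_of_eq hv)
  obtain ⟨M0, hM0⟩ := hSc.exists_bound_of_continuousOn hcont.continuousOn
  set M : ℝ := max M0 0 with hM
  have hMnn : 0 ≤ M := le_max_right _ _
  have hMS : ∀ v ∈ S, |φ v| ≤ M := by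
    intro v hv
    have h1 : |φ v| ≤ M0 := by simpa [Real.norm_eq_abs] using hM0 v hv
    exact h1.trans (le_max_left _ _)
  have hphi0 : φ 0 = 0 := by
    have := hhom 2 (by norm_num) 0
    rw [smul_zero] at this
    linarith
  have hphib : ∀ c, |φ c| ≤ M * nsum c := by
    intro c
    by_cases hc : c = 0
    · simp [hc, hphi0, nsum]
    · have hpos := nsum_pos hc
      have hu : nsum ((nsum c)⁻¹ • c) = 1 := by
        rw [nsum_smul, abs_of_nonneg (inv_nonneg.mpr hpos.le), inv_mul_cancel₀ hpos.ne']
      have hcu : (nsum c) • ((nsum c)⁻¹ • c) = c := by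
        rw [smul_smul, mul_inv_cancel₀ hpos.ne', one_smul]
      have := hhom (nsum c) hpos.le ((nsum c)⁻¹ • c)
      rw [hcu] at this
      rw [this, abs_mul, abs_of_nonneg hpos.le, mul_comm]
      exact mul_le_mul_of_nonneg_right (hMS _ hu) hpos.le
  -- dense sequence
  have hsep : TopologicalSpace.SeparableSpace (Fin k → ℝ) := inferInstance
  set d : ℕ → Fin k → ℝ := TopologicalSpace.denseSeq (Fin k → ℝ) with hd
  have hdr : DenseRange d := TopologicalSpace.denseRange_denseSeq _
  -- the approximating family
  set Θ : ℕ → ℕ → (Fin k → ℝ) → ℝ := fun L m c =>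
    if nsum (d m) = 0 then M * nsum c
    else (φ (d m) / nsum (d m)) * nsum c + L * nsum (c - (nsum c / nsum (d m)) • d m)
    with hΘ
  have hkey : ∀ (L m : ℕ) c, nsum (d m) ≠ 0 →
      Θ L m c = φ ((nsum c / nsum (d m)) • d m)
        + L * nsum (c - (nsum c / nsum (d m)) • d m) := by
    intro L m c hm
    have ht : (0:ℝ) ≤ nsum c / nsum (d m) :=
      div_nonneg (nsum_nonneg c) (nsum_nonneg (d m))
    rw [hΘ]
    simp only [if_neg hm]
    rw [hhom _ ht]
    ring
  have hnsum_t : ∀ (m : ℕ) (c : Fin k → ℝ), nsum (d m) ≠ 0 →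
      nsum ((nsum c / nsum (d m)) • d m) = nsum c := by
    intro m c hm
    rw [nsum_smul, abs_of_nonneg (div_nonneg (nsum_nonneg c) (nsum_nonneg (d m))),
      div_mul_cancel₀ _ hm]
  have hlow : ∀ (L m : ℕ) c, -(M * nsum c) ≤ Θ L m c := by
    intro L m c
    by_cases hm : nsum (d m) = 0
    · rw [hΘ]; simp only [if_pos hm]
      have := mul_nonneg hMnn (nsum_nonneg c)
      linarith
    · rw [hkey L m c hm]
      have h1 : -(M * nsum c) ≤ φ ((nsum c / nsum (d m)) • d m) := by
        have := hphib ((nsum c / nsum (d m)) • d m)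
        rw [hnsum_t m c hm] at this
        linarith [neg_abs_le (φ ((nsum c / nsum (d m)) • d m))]
      have h2 : (0:ℝ) ≤ (L:ℝ) * nsum (c - (nsum c / nsum (d m)) • d m) :=
        mul_nonneg (Nat.cast_nonneg L) (nsum_nonneg _)
      linarith
  have hbdd : ∀ (L : ℕ) c, BddBelow (Set.range fun m => Θ L m c) :=
    fun L c => ⟨-(M * nsum c), fun x ⟨m, hm⟩ => hm ▸ hlow L m c⟩
  set Φ : ℕ → (Fin k → ℝ) → ℝ := fun L c => ⨅ m, Θ L m c with hΦ
  have hΦlow : ∀ L c, -(M * nsum c) ≤ Φ L c := fun L c => le_ciInf fun m => hlow L m c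
  have hΘ0 : ∀ L m, Θ L m 0 = 0 := by
    intro L m
    by_cases hm : nsum (d m) = 0
    · rw [hΘ]; simp [if_pos hm, nsum_eq_zero_iff.mpr rfl]
    · rw [hkey L m 0 hm]
      have h0 : nsum (0 : Fin k → ℝ) = 0 := nsum_eq_zero_iff.mpr rfl
      rw [h0, zero_div, zero_smul, sub_zero, h0, hphi0]
      ring
  have hΦ0 : ∀ L, Φ L 0 = 0 := by
    intro L
    rw [hΦ]
    simp only
    rw [show (fun m => Θ L m 0) = fun _ => (0:ℝ) from funext fun m => hΘ0 L m]
    exact ciInf_const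
  -- upper approximation
  have hupper : ∀ (L : ℕ) c, c ≠ 0 → ∀ ε : ℝ, 0 < ε → Φ L c ≤ φ c + ε := by
    intro L c hc ε hε
    have hcpos := nsum_pos hc
    set ε1 : ℝ := ε / 2 with hε1
    set ε2 : ℝ := ε / (2 * (L + 1)) with hε2
    have hε1p : 0 < ε1 := by positivity
    have hε2p : 0 < ε2 := by positivity
    -- the open set of good parameters
    set O0 : Set (Fin k → ℝ) := {x | 0 < nsum x} with hO0
    have hO0open : IsOpen O0 := isOpen_lt continuous_const continuous_nsum
    set F1 : (Fin k → ℝ) → ℝ × ℝ := fun x =>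
      (nsum (c - (nsum c / nsum x) • x), φ ((nsum c / nsum x) • x)) with hF1
    have hF1cont : ContinuousOn F1 O0 := by
      have hsm : ContinuousOn (fun x : Fin k → ℝ => (nsum c / nsum x) • x) O0 := by
        refine ContinuousOn.smul (f := fun x : Fin k → ℝ => nsum c / nsum x) (g := id) ?_ ?_
        · exact (continuousOn_const.div continuous_nsum.continuousOn
            (fun x hx => ne_of_gt hx))
        · exact continuousOn_id
      apply ContinuousOn.prodMk
      · exact continuous_nsum.comp_continuousOn (continuousOn_const.sub hsm)
      · exact hcont.comp_continuousOn hsm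
    set U : Set (ℝ × ℝ) := Set.Iio ε2 ×ˢ Metric.ball (φ c) ε1 with hU
    have hUopen : IsOpen U := (isOpen_Iio).prod Metric.isOpen_ball
    have hgoodopen : IsOpen (O0 ∩ F1 ⁻¹' U) :=
      hF1cont.isOpen_inter_preimage hO0open hUopen
    have hcin : c ∈ O0 ∩ F1 ⁻¹' U := by
      constructor
      · exact hcpos
      · have h1 : (nsum c / nsum c) • c = c := by
          rw [div_self hcpos.ne', one_smul]
        simp only [hF1, Set.mem_preimage, hU, Set.mem_prod, h1]
        constructor
        · have h00 : nsum (0 : Fin k → ℝ) = 0 := nsum_eq_zero_iff.mpr rfl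
          simpa [Set.mem_Iio, sub_self, h00] using hε2p
        · simpa [Metric.mem_ball, dist_self] using hε1p
    obtain ⟨m, hm⟩ := hdr.exists_mem_open hgoodopen ⟨c, hcin⟩
    have hmpos : 0 < nsum (d m) := hm.1
    have hΘm := hkey L m c hmpos.ne'
    have hfm : |φ ((nsum c / nsum (d m)) • d m) - φ c| < ε1 := by
      have := hm.2
      simp only [hF1, Set.mem_preimage, hU, Set.mem_prod, Metric.mem_ball, Real.dist_eq] at this
      exact this.2
    have hnm : nsum (c - (nsum c / nsum (d m)) • d m) < ε2 := by
      have := hm.2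
      simp only [hF1, Set.mem_preimage, hU, Set.mem_prod, Set.mem_Iio] at this
      exact this.1
    calc Φ L c ≤ Θ L m c := ciInf_le (hbdd L c) m
      _ = φ ((nsum c / nsum (d m)) • d m) + L * nsum (c - (nsum c / nsum (d m)) • d m) := hΘm
      _ ≤ (φ c + ε1) + L * ε2 := by
          have h1 : φ ((nsum c / nsum (d m)) • d m) ≤ φ c + ε1 := by
            have := abs_lt.mp hfm
            linarith [this.2]
          have h2 : (L:ℝ) * nsum (c - (nsum c / nsum (d m)) • d m) ≤ L * ε2 :=
            mul_le_mul_of_nonneg_left hnm.le (Nat.cast_nonneg L)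
          linarith
      _ ≤ φ c + ε := by
          have hL : (L:ℝ) * ε2 ≤ ε / 2 := by
            rw [hε2]
            rw [mul_div_assoc']
            rw [div_le_div_iff₀ (by positivity) (by norm_num)]
            have : (L:ℝ) ≤ L + 1 := by linarith
            nlinarith [hε.le, Nat.cast_nonneg (α := ℝ) L]
          rw [hε1]
          linarith
  -- uniform-in-L bound
  have hΦbound : ∀ (L : ℕ) c, |Φ L c| ≤ (M + 1) * nsum c := by
    intro L c
    by_cases hc : c = 0
    · simp [hc, hΦ0, nsum_eq_zero_iff.mpr rfl]
    · have h1 := hΦlow L c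
      have h2 := hupper L c hc (nsum c) (nsum_pos hc)
      have h3 := hphib c
      rw [abs_le]
      constructor
      · nlinarith [nsum_nonneg c]
      · have := abs_le.mp h3
        nlinarith [nsum_nonneg c]
  -- pointwise convergence Φ L c → φ c
  have hΦtend : ∀ c, Tendsto (fun L : ℕ => Φ L c) atTop (𝓝 (φ c)) := by
    intro c
    by_cases hc : c = 0
    · rw [hc, hphi0]
      rw [show (fun L : ℕ => Φ L 0) = fun _ => (0:ℝ) from funext fun L => hΦ0 L]
      exact tendsto_const_nhds
    · rw [Metric.tendsto_atTop]
      intro ε hε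
      have hcpos := nsum_pos hc
      -- continuity of φ at c, in nsum-distance
      obtain ⟨δ, hδpos, hδ⟩ : ∃ δ > 0, ∀ x, nsum (x - c) < δ → |φ x - φ c| < ε / 2 := by
        obtain ⟨δ, hδpos, hδ⟩ := Metric.continuous_iff.mp hcont c (ε/2) (by linarith)
        refine ⟨δ, hδpos, fun x hx => ?_⟩
        have : dist x c < δ := by
          rw [dist_eq_norm]
          exact lt_of_le_of_lt (norm_le_nsum _) hx
        have := hδ x this
        rwa [Real.dist_eq] at this
      set L0 : ℕ := Nat.ceil ((M * nsum c + |φ c| + ε) / δ) with hL0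
      refine ⟨L0, fun L hL => ?_⟩
      have hlowL : φ c - ε / 2 ≤ Φ L c := by
        refine le_ciInf fun m => ?_
        by_cases hm : nsum (d m) = 0
        · rw [hΘ]; simp only [if_pos hm]
          have := hphib c
          have := le_abs_self (φ c)
          have := abs_le.mp (hphib c)
          linarith
        · rw [hkey L m c hm]
          set x : Fin k → ℝ := (nsum c / nsum (d m)) • d m with hx
          have hnx : nsum x = nsum c := hnsum_t m c hm
          by_cases hnear : nsum (x - c) < δ
          · have h1 := hδ x hnear
            have h2 : (0:ℝ) ≤ (L:ℝ) * nsum (c - x) :=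
              mul_nonneg (Nat.cast_nonneg L) (nsum_nonneg _)
            have := abs_lt.mp h1
            linarith [this.1]
          · push_neg at hnear
            have h1 : φ x ≥ -(M * nsum c) := by
              have := abs_le.mp (hphib x)
              rw [hnx] at this
              linarith [this.1]
            have h2 : (L:ℝ) * nsum (c - x) ≥ L * δ := by
              have : nsum (c - x) ≥ δ := by
                rw [show c - x = -(x - c) by abel, nsum_neg]
                exact hnear
              exact mul_le_mul_of_nonneg_left this (Nat.cast_nonneg L)
            have h3 : (L:ℝ) * δ ≥ M * nsum c + |φ c| + ε := by
              have hLc : ((M * nsum c + |φ c| + ε) / δ) ≤ (L:ℝ) := by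
                refine le_trans (Nat.le_ceil _) ?_
                exact_mod_cast hL
              rw [ge_iff_le, ← div_le_iff₀ hδpos] at *
              linarith [hLc]
            have h4 := le_abs_self (φ c)
            linarith
      have huppL : Φ L c ≤ φ c + ε / 2 := hupper L c hc (ε/2) (by linarith)
      rw [Real.dist_eq, abs_lt]
      constructor <;> linarith
  -- memberships
  set nsumg : Z → ℝ := fun z => nsum (fun i => g i z) with hnsumg
  have hnsumgmem : nsumg ∈ V := by
    have : nsumg = ∑ i : Fin k, |g i| := by
      funext z
      simp only [hnsumg, nsum, Finset.sum_apply, Pi.abs_apply]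
    rw [this]
    exact riesz_finsum hR _ _ fun i _ => riesz_abs hR (hg i)
  have hΘmem : ∀ L m, (fun z => Θ L m (fun i => g i z)) ∈ V := by
    intro L m
    by_cases hm : nsum (d m) = 0
    · have : (fun z => Θ L m (fun i => g i z)) = M • nsumg := by
        funext z
        rw [hΘ]
        simp only [if_pos hm, Pi.smul_apply, smul_eq_mul, hnsumg]
      rw [this]
      exact riesz_smul hR M hnsumgmem
    · have : (fun z => Θ L m (fun i => g i z)) =
          (φ (d m) / nsum (d m)) • nsumg
          + (L:ℝ) • (∑ i : Fin k, |g i - (d m i / nsum (d m)) • nsumg|) := by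
        funext z
        rw [hΘ]
        simp only [if_neg hm, Pi.add_apply, Pi.smul_apply, smul_eq_mul, Finset.sum_apply,
          Pi.abs_apply, Pi.sub_apply, hnsumg]
        congr 1
        congr 1
        rw [nsum]
        refine Finset.sum_congr rfl fun i _ => ?_
        simp only [Pi.sub_apply, Pi.smul_apply, smul_eq_mul]
        congr 1
        ring
      rw [this]
      refine riesz_add hR (riesz_smul hR _ hnsumgmem) (riesz_smul hR _ ?_)
      refine riesz_finsum hR _ _ fun i _ => riesz_abs hR ?_
      exact riesz_sub hR (hg i) (riesz_smul hR _ hnsumgmem)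
  have hΦmem : ∀ L, (fun z => Φ L (fun i => g i z)) ∈ V := by
    intro L
    apply hV.2
    refine pdom_of_prepend (M := V)
      (D := |fun z => Θ L 0 (fun i => g i z)| + M • nsumg)
      (F := fun n z => pmin (fun m => Θ L m (fun i => g i z)) n)
      (riesz_add hR (riesz_abs hR (hΘmem L 0)) (riesz_smul hR M hnsumgmem)) ?_ ?_ ?_
    · intro n
      induction n with
      | zero => exact hΘmem L 0
      | succ n ih =>
        show (fun z => pmin (fun m => Θ L m (fun i => g i z)) (n+1)) ∈ V
        have : (fun z => pmin (fun m => Θ L m (fun i => g i z)) (n+1))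
            = (fun z => pmin (fun m => Θ L m (fun i => g i z)) n)
              ⊓ (fun z => Θ L (n+1) (fun i => g i z)) := by
          funext z; simp [pmin, Pi.inf_apply]
        rw [this]
        exact riesz_inf hR ih (hΘmem L (n+1))
    · intro n z
      simp only [Pi.abs_apply, Pi.add_apply, Pi.smul_apply, smul_eq_mul]
      rw [abs_le]
      have h1 : pmin (fun m => Θ L m (fun i => g i z)) n ≤ Θ L 0 (fun i => g i z) :=
        pmin_le_of_le (Nat.zero_le n)
      have h2 : -(M * nsum (fun i => g i z)) ≤ pmin (fun m => Θ L m (fun i => g i z)) n :=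
        le_pmin (fun m => hlow L m _) n
      have h3 : Θ L 0 (fun i => g i z) ≤ |Θ L 0 (fun i => g i z)| := le_abs_self _
      have h4 : (0:ℝ) ≤ |Θ L 0 (fun i => g i z)| := abs_nonneg _
      have h5 : (0:ℝ) ≤ M * nsum (fun i => g i z) :=
        mul_nonneg hMnn (nsum_nonneg _)
      constructor
      · rw [hnsumg]; linarith
      · rw [hnsumg]; linarith
    · intro z
      exact pmin_tendsto_iInf (hbdd L _)
  -- final limit
  apply hV.2
  refine pdom_of_prepend (M := V) (D := (M + 1) • nsumg)
    (F := fun L z => Φ L (fun i => g i z))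
    (riesz_smul hR _ hnsumgmem) hΦmem ?_ ?_
  · intro L z
    simp only [Pi.abs_apply, Pi.smul_apply, smul_eq_mul, hnsumg]
    exact hΦbound L _
  · intro z
    exact hΦtend _

end Fub

namespace Fub
variable {Z : Type*} {X Y : Type*}

/-! ### tensor set basics -/

theorem tensor_mem_tensorSet {V : Set (X → ℝ)} {W : Set (Y → ℝ)} {g : X → ℝ} {h : Y → ℝ}
    (hgV : g ∈ V) (hhW : h ∈ W) : tensor g h ∈ TensorSet V W := by
  refine ⟨1, fun _ => g, fun _ => h, fun _ => hgV, fun _ => hhW, ?_⟩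
  simp

theorem tensorSet_zero (V : Set (X → ℝ)) (W : Set (Y → ℝ)) :
    (0 : X × Y → ℝ) ∈ TensorSet V W := by
  refine ⟨0, Fin.elim0, Fin.elim0, fun i => i.elim0, fun i => i.elim0, ?_⟩
  simp

theorem tensorSet_add {V : Set (X → ℝ)} {W : Set (Y → ℝ)} {f₁ f₂ : X × Y → ℝ}
    (h₁ : f₁ ∈ TensorSet V W) (h₂ : f₂ ∈ TensorSet V W) : f₁ + f₂ ∈ TensorSet V W := by
  obtain ⟨k₁, g₁, hh₁, hg₁, hW₁, he₁⟩ := h₁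
  obtain ⟨k₂, g₂, hh₂, hg₂, hW₂, he₂⟩ := h₂
  refine ⟨k₁ + k₂, Fin.append g₁ g₂, Fin.append hh₁ hh₂, ?_, ?_, ?_⟩
  · intro i
    refine Fin.addCases (fun j => ?_) (fun j => ?_) i
    · rw [Fin.append_left]; exact hg₁ j
    · rw [Fin.append_right]; exact hg₂ j
  · intro i
    refine Fin.addCases (fun j => ?_) (fun j => ?_) i
    · rw [Fin.append_left]; exact hW₁ j
    · rw [Fin.append_right]; exact hW₂ j
  · rw [he₁, he₂, Fin.sum_univ_add]
    congr 1
    · exact Finset.sum_congr rfl fun i _ => by rw [Fin.append_left, Fin.append_left]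
    · exact Finset.sum_congr rfl fun i _ => by rw [Fin.append_right, Fin.append_right]

theorem tensorSet_smul {V : Set (X → ℝ)} {W : Set (Y → ℝ)} (hV : IsLebesgue V)
    {f : X × Y → ℝ} (c : ℝ) (h : f ∈ TensorSet V W) : c • f ∈ TensorSet V W := by
  obtain ⟨k, g, hh, hg, hhW, he⟩ := h
  refine ⟨k, fun i => c • g i, hh, fun i => riesz_smul hV.1 c (hg i), hhW, ?_⟩
  rw [he, Finset.smul_sum]
  refine Finset.sum_congr rfl fun i _ => ?_
  funext p
  simp [tensor, mul_assoc]

/-! ### the compactified gauge sphere and homogenizations -/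

def nSph (k : ℕ) : Set (Fin k → ℝ) := {v | nsum v = 1 ∨ v = 0}

theorem nSph_isCompact (k : ℕ) : IsCompact (nSph k) := by
  apply Metric.isCompact_of_isClosed_isBounded
  · exact (isClosed_eq continuous_nsum continuous_const).union isClosed_singleton
  · refine (Metric.isBounded_closedBall (x := (0 : Fin k → ℝ)) (r := 1)).subset ?_
    rintro v (hv | hv)
    · rw [Metric.mem_closedBall, dist_zero_right]
      exact (norm_le_nsum v).trans (le_of_eq hv)
    · simp [hv]

instance nSph_compactSpace (k : ℕ) : CompactSpace (nSph k) :=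
  isCompact_iff_compactSpace.mp (nSph_isCompact k)

noncomputable def npick {k : ℕ} (c : Fin k → ℝ) : nSph k :=
  ⟨(nsum c)⁻¹ • c, by
    by_cases hc : nsum c = 0
    · right
      rw [nsum_eq_zero_iff.mp hc]
      simp
    · left
      rw [nsum_smul, abs_of_nonneg (inv_nonneg.mpr (nsum_nonneg c)), inv_mul_cancel₀ hc]⟩

theorem npick_smul {k : ℕ} {t : ℝ} (ht : 0 < t) (c : Fin k → ℝ) :
    npick (t • c) = npick c := by
  apply Subtype.ext
  show (nsum (t • c))⁻¹ • (t • c) = (nsum c)⁻¹ • c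
  rw [nsum_smul, abs_of_nonneg ht.le, smul_smul]
  congr 1
  by_cases h : nsum c = 0
  · simp [h]
  · rw [mul_inv]
    field_simp

/-- the positively homogeneous extension of a continuous function on the gauge sphere. -/
noncomputable def hat {k : ℕ} (φ : C(nSph k, ℝ)) : (Fin k → ℝ) → ℝ :=
  fun c => nsum c * φ (npick c)

theorem hat_homog {k : ℕ} (φ : C(nSph k, ℝ)) :
    ∀ t : ℝ, 0 ≤ t → ∀ c, hat φ (t • c) = t * hat φ c := by
  intro t ht c
  rcases eq_or_lt_of_le ht with rfl | htpos
  · rw [zero_smul, zero_mul, hat, nsum_eq_zero_iff.mpr rfl, zero_mul]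
  · rw [hat, hat, nsum_smul, abs_of_nonneg ht, npick_smul htpos]
    ring

theorem hat_continuous {k : ℕ} (φ : C(nSph k, ℝ)) : Continuous (hat φ) := by
  rw [continuous_iff_continuousAt]
  intro c₀
  by_cases hc₀ : c₀ = 0
  · -- continuity at 0 by squeeze
    subst hc₀
    have h0 : hat φ 0 = 0 := by
      rw [hat, nsum_eq_zero_iff.mpr rfl, zero_mul]
    rw [ContinuousAt, h0]
    apply squeeze_zero_norm (a := fun c => ‖φ‖ * nsum c)
    · intro c
      rw [hat, Real.norm_eq_abs, abs_mul, abs_of_nonneg (nsum_nonneg c), mul_comm]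
      refine mul_le_mul_of_nonneg_right ?_ (nsum_nonneg c)
      simpa [Real.norm_eq_abs] using φ.norm_coe_le_norm (npick c)
    · have : Tendsto (fun c : Fin k → ℝ => ‖φ‖ * nsum c) (𝓝 0) (𝓝 (‖φ‖ * nsum 0)) :=
        (continuous_const.mul continuous_nsum).tendsto 0
      rwa [nsum_eq_zero_iff.mpr rfl, mul_zero] at this
  · have hnpos : 0 < nsum c₀ := nsum_pos hc₀
    have hpick : ContinuousAt (npick (k := k)) c₀ := by
      rw [IsInducing.subtypeVal.continuousAt_iff]
      show ContinuousAt (fun c : Fin k → ℝ => (nsum c)⁻¹ • c) c₀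
      exact ((continuous_nsum.continuousAt).inv₀ hnpos.ne').smul continuousAt_id
    exact (continuous_nsum.continuousAt).mul ((φ.continuous.continuousAt).comp hpick)

theorem hat_comp_mem {V : Set (Z → ℝ)} (hV : IsLebesgue V) {k : ℕ}
    {g : Fin k → Z → ℝ} (hg : ∀ i, g i ∈ V) (φ : C(nSph k, ℝ)) :
    (fun z => hat φ (fun i => g i z)) ∈ V :=
  homog_comp_mem hV hg (hat_continuous φ) (hat_homog φ)

end Fub

namespace Fub
variable {X Y : Type*}

theorem pdom_mono {Z : Type*} {M M' : Set (Z → ℝ)} (h : M ⊆ M') : Pdom M ⊆ Pdom M' := by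
  rintro f ⟨F, hF, hd, hc⟩
  exact ⟨F, fun n => h (hF n), hd, hc⟩

theorem nsum_castAdd_le {k₁ k₂ : ℕ} (c : Fin (k₁ + k₂) → ℝ) :
    nsum (fun i => c (Fin.castAdd k₂ i)) ≤ nsum c := by
  rw [nsum, nsum, Fin.sum_univ_add]
  have : (0:ℝ) ≤ ∑ i : Fin k₂, |c (Fin.natAdd k₁ i)| :=
    Finset.sum_nonneg fun i _ => abs_nonneg _
  linarith

theorem nsum_natAdd_le {k₁ k₂ : ℕ} (c : Fin (k₁ + k₂) → ℝ) :
    nsum (fun i => c (Fin.natAdd k₁ i)) ≤ nsum c := by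
  rw [nsum, nsum, Fin.sum_univ_add]
  have : (0:ℝ) ≤ ∑ i : Fin k₁, |c (Fin.castAdd k₂ i)| :=
    Finset.sum_nonneg fun i _ => abs_nonneg _
  linarith

/-- functions of the form `E(g(x), h(y))` with `E` continuous, separately positively
homogeneous, and suitably bounded. -/
def Tcl (V : Set (X → ℝ)) (W : Set (Y → ℝ)) : Set (X × Y → ℝ) :=
  { f | ∃ (k k' : ℕ) (g : Fin k → X → ℝ) (h : Fin k' → Y → ℝ)
      (E : (Fin k → ℝ) → (Fin k' → ℝ) → ℝ) (C : ℝ),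
      (∀ i, g i ∈ V) ∧ (∀ j, h j ∈ W) ∧
      Continuous (fun p : (Fin k → ℝ) × (Fin k' → ℝ) => E p.1 p.2) ∧
      (∀ t : ℝ, 0 ≤ t → ∀ c d, E (t • c) d = t * E c d) ∧
      (∀ t : ℝ, 0 ≤ t → ∀ c d, E c (t • d) = t * E c d) ∧
      (∀ c d, |E c d| ≤ C * nsum c * nsum d) ∧
      (∀ p : X × Y, f p = E (fun i => g i p.1) (fun j => h j p.2)) }

theorem tensorSet_subset_Tcl (V : Set (X → ℝ)) (W : Set (Y → ℝ)) :
    TensorSet V W ⊆ Tcl V W := by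
  rintro f ⟨k, g, h, hg, hh, rfl⟩
  refine ⟨k, k, g, h, fun c d => ∑ i, c i * d i, 1, hg, hh, ?_, ?_, ?_, ?_, ?_⟩
  · exact continuous_finset_sum _ fun i _ =>
      ((continuous_apply i).comp continuous_fst).mul ((continuous_apply i).comp continuous_snd)
  · intro t ht c d
    rw [Finset.mul_sum]
    exact Finset.sum_congr rfl fun i _ => by simp [mul_assoc]
  · intro t ht c d
    rw [Finset.mul_sum]
    refine Finset.sum_congr rfl fun i _ => by simp; ring
  · intro c d
    rw [one_mul]
    calc |∑ i, c i * d i| ≤ ∑ i, |c i * d i| := Finset.abs_sum_le_sum_abs _ _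
      _ ≤ ∑ i, |c i| * nsum d := by
          refine Finset.sum_le_sum fun i _ => ?_
          rw [abs_mul]
          refine mul_le_mul_of_nonneg_left ?_ (abs_nonneg _)
          exact Finset.single_le_sum (fun j _ => abs_nonneg (d j)) (Finset.mem_univ i)
      _ = nsum c * nsum d := by rw [← Finset.sum_mul]; rfl
  · intro p
    rw [Finset.sum_apply]
    rfl

theorem Tcl_isRiesz (V : Set (X → ℝ)) (W : Set (Y → ℝ)) : IsRiesz (Tcl V W) := by
  constructor
  constructor
  · -- zero
    exact ⟨0, 0, Fin.elim0, Fin.elim0, fun _ _ => 0, 0, fun i => i.elim0, fun i => i.elim0,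
      continuous_const, fun t ht c d => by ring, fun t ht c d => by ring,
      fun c d => by simp, fun p => rfl⟩
  constructor
  · -- add
    rintro f₁ f₂ ⟨k₁, k₁', g₁, h₁, E₁, C₁, hg₁, hh₁, hc₁, hm₁, hm₁', hb₁, he₁⟩
      ⟨k₂, k₂', g₂, h₂, E₂, C₂, hg₂, hh₂, hc₂, hm₂, hm₂', hb₂, he₂⟩
    refine ⟨k₁ + k₂, k₁' + k₂', Fin.append g₁ g₂, Fin.append h₁ h₂,
      fun c d => E₁ (fun i => c (Fin.castAdd k₂ i)) (fun j => d (Fin.castAdd k₂' j))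
        + E₂ (fun i => c (Fin.natAdd k₁ i)) (fun j => d (Fin.natAdd k₁' j)),
      max C₁ 0 + max C₂ 0, ?_, ?_, ?_, ?_, ?_, ?_, ?_⟩
    · intro i
      refine Fin.addCases (fun j => ?_) (fun j => ?_) i
      · rw [Fin.append_left]; exact hg₁ j
      · rw [Fin.append_right]; exact hg₂ j
    · intro j
      refine Fin.addCases (fun j' => ?_) (fun j' => ?_) j
      · rw [Fin.append_left]; exact hh₁ j'
      · rw [Fin.append_right]; exact hh₂ j'
    · refine Continuous.add ?_ ?_
      · show Continuous ((fun q : (Fin k₁ → ℝ) × (Fin k₁' → ℝ) => E₁ q.1 q.2) ∘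
          (fun p : (Fin (k₁+k₂) → ℝ) × (Fin (k₁'+k₂') → ℝ) =>
            ((fun i => p.1 (Fin.castAdd k₂ i)), (fun j => p.2 (Fin.castAdd k₂' j)))))
        exact hc₁.comp ((continuous_pi fun i => (continuous_apply (Fin.castAdd k₂ i)).comp
          continuous_fst).prodMk (continuous_pi fun j =>
            (continuous_apply (Fin.castAdd k₂' j)).comp continuous_snd))
      · show Continuous ((fun q : (Fin k₂ → ℝ) × (Fin k₂' → ℝ) => E₂ q.1 q.2) ∘
          (fun p : (Fin (k₁+k₂) → ℝ) × (Fin (k₁'+k₂') → ℝ) =>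
            ((fun i => p.1 (Fin.natAdd k₁ i)), (fun j => p.2 (Fin.natAdd k₁' j)))))
        exact hc₂.comp ((continuous_pi fun i => (continuous_apply (Fin.natAdd k₁ i)).comp
          continuous_fst).prodMk (continuous_pi fun j =>
            (continuous_apply (Fin.natAdd k₁' j)).comp continuous_snd))
    · intro t ht c d
      show E₁ (fun i => (t • c) (Fin.castAdd k₂ i)) (fun j => d (Fin.castAdd k₂' j))
          + E₂ (fun i => (t • c) (Fin.natAdd k₁ i)) (fun j => d (Fin.natAdd k₁' j))
        = t * (E₁ (fun i => c (Fin.castAdd k₂ i)) (fun j => d (Fin.castAdd k₂' j))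
          + E₂ (fun i => c (Fin.natAdd k₁ i)) (fun j => d (Fin.natAdd k₁' j)))
      rw [show (fun i => (t • c) (Fin.castAdd k₂ i)) = t • fun i => c (Fin.castAdd k₂ i) from rfl,
        show (fun i => (t • c) (Fin.natAdd k₁ i)) = t • fun i => c (Fin.natAdd k₁ i) from rfl,
        hm₁ t ht, hm₂ t ht]
      ring
    · intro t ht c d
      show E₁ (fun i => c (Fin.castAdd k₂ i)) (fun j => (t • d) (Fin.castAdd k₂' j))
          + E₂ (fun i => c (Fin.natAdd k₁ i)) (fun j => (t • d) (Fin.natAdd k₁' j))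
        = t * (E₁ (fun i => c (Fin.castAdd k₂ i)) (fun j => d (Fin.castAdd k₂' j))
          + E₂ (fun i => c (Fin.natAdd k₁ i)) (fun j => d (Fin.natAdd k₁' j)))
      rw [show (fun j => (t • d) (Fin.castAdd k₂' j)) = t • fun j => d (Fin.castAdd k₂' j) from rfl,
        show (fun j => (t • d) (Fin.natAdd k₁' j)) = t • fun j => d (Fin.natAdd k₁' j) from rfl,
        hm₁' t ht, hm₂' t ht]
      ring
    · intro c d
      show |E₁ (fun i => c (Fin.castAdd k₂ i)) (fun j => d (Fin.castAdd k₂' j))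
          + E₂ (fun i => c (Fin.natAdd k₁ i)) (fun j => d (Fin.natAdd k₁' j))|
        ≤ (max C₁ 0 + max C₂ 0) * nsum c * nsum d
      refine le_trans (abs_add_le _ _) ?_
      have e₁ : |E₁ (fun i => c (Fin.castAdd k₂ i)) (fun j => d (Fin.castAdd k₂' j))|
          ≤ max C₁ 0 * nsum c * nsum d := by
        refine le_trans (hb₁ _ _) ?_
        have b1 := nsum_castAdd_le c
        have b2 := nsum_castAdd_le d
        have n1 := nsum_nonneg (fun i => c (Fin.castAdd k₂ i))
        have n2 := nsum_nonneg (fun j => d (Fin.castAdd k₂' j))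
        have hC : C₁ ≤ max C₁ 0 := le_max_left _ _
        have hC0 : (0:ℝ) ≤ max C₁ 0 := le_max_right _ _
        calc C₁ * nsum (fun i => c (Fin.castAdd k₂ i)) * nsum (fun j => d (Fin.castAdd k₂' j))
            ≤ max C₁ 0 * nsum (fun i => c (Fin.castAdd k₂ i)) * nsum (fun j => d (Fin.castAdd k₂' j)) :=
              mul_le_mul_of_nonneg_right (mul_le_mul_of_nonneg_right hC n1) n2
          _ ≤ max C₁ 0 * nsum c * nsum d :=
              mul_le_mul (mul_le_mul_of_nonneg_left b1 hC0) b2 n2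
                (mul_nonneg hC0 (nsum_nonneg c))
      have e₂ : |E₂ (fun i => c (Fin.natAdd k₁ i)) (fun j => d (Fin.natAdd k₁' j))|
          ≤ max C₂ 0 * nsum c * nsum d := by
        refine le_trans (hb₂ _ _) ?_
        have b1 := nsum_natAdd_le c
        have b2 := nsum_natAdd_le d
        have n1 := nsum_nonneg (fun i => c (Fin.natAdd k₁ i))
        have n2 := nsum_nonneg (fun j => d (Fin.natAdd k₁' j))
        have hC : C₂ ≤ max C₂ 0 := le_max_left _ _
        have hC0 : (0:ℝ) ≤ max C₂ 0 := le_max_right _ _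
        calc C₂ * nsum (fun i => c (Fin.natAdd k₁ i)) * nsum (fun j => d (Fin.natAdd k₁' j))
            ≤ max C₂ 0 * nsum (fun i => c (Fin.natAdd k₁ i)) * nsum (fun j => d (Fin.natAdd k₁' j)) :=
              mul_le_mul_of_nonneg_right (mul_le_mul_of_nonneg_right hC n1) n2
          _ ≤ max C₂ 0 * nsum c * nsum d :=
              mul_le_mul (mul_le_mul_of_nonneg_left b1 hC0) b2 n2
                (mul_nonneg hC0 (nsum_nonneg c))
      linarith
    · intro p
      have r₁ : (fun i => Fin.append g₁ g₂ (Fin.castAdd k₂ i) p.1) = fun i => g₁ i p.1 :=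
        funext fun i => by rw [Fin.append_left]
      have r₂ : (fun i => Fin.append g₁ g₂ (Fin.natAdd k₁ i) p.1) = fun i => g₂ i p.1 :=
        funext fun i => by rw [Fin.append_right]
      have r₃ : (fun j => Fin.append h₁ h₂ (Fin.castAdd k₂' j) p.2) = fun j => h₁ j p.2 :=
        funext fun j => by rw [Fin.append_left]
      have r₄ : (fun j => Fin.append h₁ h₂ (Fin.natAdd k₁' j) p.2) = fun j => h₂ j p.2 :=
        funext fun j => by rw [Fin.append_right]
      show f₁ p + f₂ p
        = E₁ (fun i => Fin.append g₁ g₂ (Fin.castAdd k₂ i) p.1)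
            (fun j => Fin.append h₁ h₂ (Fin.castAdd k₂' j) p.2)
          + E₂ (fun i => Fin.append g₁ g₂ (Fin.natAdd k₁ i) p.1)
            (fun j => Fin.append h₁ h₂ (Fin.natAdd k₁' j) p.2)
      rw [he₁ p, he₂ p, r₁, r₂, r₃, r₄]
  · -- smul
    rintro r f ⟨k, k', g, h, E, C, hg, hh, hc, hm, hm', hb, he⟩
    refine ⟨k, k', g, h, fun c d => r * E c d, |r| * C, hg, hh,
      continuous_const.mul hc,
      fun t ht c d => by show r * E (t • c) d = t * (r * E c d); rw [hm t ht]; ring,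
      fun t ht c d => by show r * E c (t • d) = t * (r * E c d); rw [hm' t ht]; ring, ?_, ?_⟩
    · intro c d
      show |r * E c d| ≤ |r| * C * nsum c * nsum d
      rw [abs_mul, mul_assoc, mul_assoc]
      refine mul_le_mul_of_nonneg_left ?_ (abs_nonneg r)
      rw [← mul_assoc]
      exact hb c d
    · intro p
      show r * f p = r * E (fun i => g i p.1) (fun j => h j p.2)
      rw [he p]
  · -- abs
    rintro f ⟨k, k', g, h, E, C, hg, hh, hc, hm, hm', hb, he⟩
    refine ⟨k, k', g, h, fun c d => |E c d|, C, hg, hh, hc.abs,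
      fun t ht c d => by
        show |E (t • c) d| = t * |E c d|
        rw [hm t ht, abs_mul, abs_of_nonneg ht],
      fun t ht c d => by
        show |E c (t • d)| = t * |E c d|
        rw [hm' t ht, abs_mul, abs_of_nonneg ht], ?_, ?_⟩
    · intro c d
      show |(|E c d|)| ≤ C * nsum c * nsum d
      rw [abs_abs]
      exact hb c d
    · intro p
      show |f p| = |E (fun i => g i p.1) (fun j => h j p.2)|
      rw [he p]

end Fub

namespace Fub
variable {X Y : Type*}

set_option maxHeartbeats 1000000 in
theorem Tcl_subset_pdom {V : Set (X → ℝ)} {W : Set (Y → ℝ)}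
    (hV : IsLebesgue V) (hW : IsLebesgue W) :
    Tcl V W ⊆ Pdom (TensorSet V W) := by
  classical
  rintro f ⟨k, k', g, h, E, C, hgV, hhW, hEcont, hE1, hE2, hEb, hfeq⟩
  set C' : ℝ := max C 0 with hC'
  have hC'0 : (0:ℝ) ≤ C' := le_max_right _ _
  have hEb' : ∀ c d, |E c d| ≤ C' * (nsum c * nsum d) := by
    intro c d
    refine le_trans (hEb c d) ?_
    rw [mul_assoc]
    exact mul_le_mul_of_nonneg_right (le_max_left _ _)
      (mul_nonneg (nsum_nonneg c) (nsum_nonneg d))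
  have hE0 : ∀ d, E 0 d = 0 := by
    intro d
    have := hE1 0 le_rfl 0 d
    rw [zero_smul, zero_mul] at this
    exact this
  have hE0' : ∀ c, E c 0 = 0 := by
    intro c
    have := hE2 0 le_rfl c 0
    rw [zero_smul, zero_mul] at this
    exact this
  -- the compact product of gauge spheres
  set P := nSph k × nSph k' with hP
  set Etil : P → ℝ := fun p => E p.1.1 p.2.1 with hEtil
  have hEtilc : Continuous Etil := by
    show Continuous ((fun q : (Fin k → ℝ) × (Fin k' → ℝ) => E q.1 q.2) ∘
      (fun p : P => ((p.1 : Fin k → ℝ), (p.2 : Fin k' → ℝ))))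
    exact hEcont.comp ((continuous_subtype_val.comp continuous_fst).prodMk
      (continuous_subtype_val.comp continuous_snd))
  -- the subalgebra of split functions
  set Pure : Set C(P, ℝ) := {F | ∃ (φ : C(nSph k, ℝ)) (ψ : C(nSph k', ℝ)),
    F = (φ.comp ContinuousMap.fst) * (ψ.comp ContinuousMap.snd)} with hPure
  set sp : Submodule ℝ C(P, ℝ) := Submodule.span ℝ Pure with hsp
  have hone : (1 : C(P, ℝ)) ∈ sp := by
    refine Submodule.subset_span ⟨1, 1, ?_⟩
    ext p
    simp only [ContinuousMap.one_apply, ContinuousMap.mul_apply, ContinuousMap.comp_apply,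
      mul_one]
  have hpure_mul : ∀ F ∈ Pure, ∀ G ∈ Pure, F * G ∈ Pure := by
    rintro F ⟨φ, ψ, rfl⟩ G ⟨φ', ψ', rfl⟩
    refine ⟨φ * φ', ψ * ψ', ?_⟩
    ext p
    simp only [ContinuousMap.mul_apply, ContinuousMap.comp_apply]
    ring
  have hmul : ∀ x y : C(P, ℝ), x ∈ sp → y ∈ sp → x * y ∈ sp := by
    have key : ∀ F ∈ Pure, ∀ y ∈ sp, F * y ∈ sp := by
      intro F hF y hy
      induction hy using Submodule.span_induction with
      | mem G hG => exact Submodule.subset_span (hpure_mul F hF G hG)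
      | zero => rw [mul_zero]; exact Submodule.zero_mem sp
      | add a b ha hb iha ihb => rw [mul_add]; exact Submodule.add_mem _ iha ihb
      | smul r a ha iha => rw [mul_smul_comm]; exact Submodule.smul_mem _ r iha
    intro x y hx hy
    induction hx using Submodule.span_induction with
    | mem F hF => exact key F hF y hy
    | zero => rw [zero_mul]; exact Submodule.zero_mem sp
    | add a b ha hb iha ihb => rw [add_mul]; exact Submodule.add_mem _ iha ihb
    | smul r a ha iha => rw [smul_mul_assoc]; exact Submodule.smul_mem _ r iha
  set Alg : Subalgebra ℝ C(P, ℝ) := sp.toSubalgebra hone hmul with hAlg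
  have hsep : Alg.SeparatesPoints := by
    rintro p q hpq
    have hcase : p.1 ≠ q.1 ∨ p.2 ≠ q.2 := by
      by_contra hcon
      push_neg at hcon
      exact hpq (Prod.ext hcon.1 hcon.2)
    rcases hcase with hc | hc
    · have hvals : (p.1 : Fin k → ℝ) ≠ (q.1 : Fin k → ℝ) := fun hh => hc (Subtype.ext hh)
      obtain ⟨i, hi⟩ := Function.ne_iff.mp hvals
      refine ⟨_, ⟨(⟨fun v => (v : Fin k → ℝ) i,
        (continuous_apply i).comp continuous_subtype_val⟩ : C(nSph k, ℝ)).comp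
          ContinuousMap.fst * ((1 : C(nSph k', ℝ)).comp ContinuousMap.snd), ?_, rfl⟩, ?_⟩
      · exact Submodule.subset_span ⟨_, 1, rfl⟩
      · simp; exact hi
    · have hvals : (p.2 : Fin k' → ℝ) ≠ (q.2 : Fin k' → ℝ) := fun hh => hc (Subtype.ext hh)
      obtain ⟨j, hj⟩ := Function.ne_iff.mp hvals
      refine ⟨_, ⟨((1 : C(nSph k, ℝ)).comp ContinuousMap.fst) *
        ((⟨fun v => (v : Fin k' → ℝ) j,
          (continuous_apply j).comp continuous_subtype_val⟩ : C(nSph k', ℝ)).comp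
            ContinuousMap.snd), ?_, rfl⟩, ?_⟩
      · exact Submodule.subset_span ⟨1, _, rfl⟩
      · simp; exact hj
  -- the tensorization of an approximation
  set Gv : X → Fin k → ℝ := fun x i => g i x with hGv
  set Hv : Y → Fin k' → ℝ := fun y j => h j y with hHv
  set tz : C(P, ℝ) → X × Y → ℝ := fun F q =>
    (nsum (Gv q.1) * nsum (Hv q.2)) * F (npick (Gv q.1), npick (Hv q.2)) with htz
  have claimA : ∀ F ∈ sp, tz F ∈ TensorSet V W := by
    intro F hF
    induction hF using Submodule.span_induction with
    | mem G hG =>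
      obtain ⟨φ, ψ, rfl⟩ := hG
      have : tz ((φ.comp ContinuousMap.fst) * (ψ.comp ContinuousMap.snd))
          = tensor (fun x => hat φ (Gv x)) (fun y => hat ψ (Hv y)) := by
        funext q
        rw [htz]
        simp only [tensor, hat, ContinuousMap.mul_apply, ContinuousMap.comp_apply]
        rw [show (ContinuousMap.fst (npick (Gv q.1), npick (Hv q.2)) : nSph k)
            = npick (Gv q.1) from rfl,
          show (ContinuousMap.snd (npick (Gv q.1), npick (Hv q.2)) : nSph k')
            = npick (Hv q.2) from rfl]
        ring
      rw [this]
      exact tensor_mem_tensorSet (hat_comp_mem hV (fun i => hgV i) φ)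
        (hat_comp_mem hW (fun j => hhW j) ψ)
    | zero =>
      have : tz 0 = 0 := by
        funext q
        rw [htz]
        simp
      rw [this]
      exact tensorSet_zero V W
    | add a b ha hb iha ihb =>
      have : tz (a + b) = tz a + tz b := by
        funext q
        rw [htz]
        simp only [ContinuousMap.add_apply, Pi.add_apply]
        ring
      rw [this]
      exact tensorSet_add iha ihb
    | smul r a ha iha =>
      have : tz (r • a) = r • tz a := by
        funext q
        rw [htz]
        simp only [ContinuousMap.smul_apply, Pi.smul_apply, smul_eq_mul]
        ring
      rw [this]
      exact tensorSet_smul hV r iha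
  -- pointwise approximation bound
  have claimB : ∀ (F : C(P, ℝ)) (ε : ℝ), (∀ pt, |F pt - Etil pt| ≤ ε) →
      ∀ q : X × Y, |tz F q - f q| ≤ ε * (nsum (Gv q.1) * nsum (Hv q.2)) := by
    intro F ε hFa q
    by_cases hc : nsum (Gv q.1) = 0
    · have h0 : Gv q.1 = 0 := nsum_eq_zero_iff.mp hc
      have hf0 : f q = 0 := by
        rw [hfeq q]
        have : (fun i => g i q.1) = (0 : Fin k → ℝ) := h0
        rw [this, hE0]
      have ht0 : tz F q = 0 := by
        rw [htz]
        simp [hc]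
      rw [ht0, hf0, sub_zero, abs_zero, hc]
      simp
    · by_cases hd : nsum (Hv q.2) = 0
      · have h0 : Hv q.2 = 0 := nsum_eq_zero_iff.mp hd
        have hf0 : f q = 0 := by
          rw [hfeq q]
          have : (fun j => h j q.2) = (0 : Fin k' → ℝ) := h0
          rw [this, hE0']
        have ht0 : tz F q = 0 := by
          rw [htz]
          simp [hd]
        rw [ht0, hf0, sub_zero, abs_zero, hd]
        simp
      · have hcpos : 0 < nsum (Gv q.1) := lt_of_le_of_ne (nsum_nonneg _) (Ne.symm hc)
        have hdpos : 0 < nsum (Hv q.2) := lt_of_le_of_ne (nsum_nonneg _) (Ne.symm hd)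
        have hcoe : ((npick (Gv q.1)) : Fin k → ℝ) = (nsum (Gv q.1))⁻¹ • Gv q.1 := rfl
        have hdcoe : ((npick (Hv q.2)) : Fin k' → ℝ) = (nsum (Hv q.2))⁻¹ • Hv q.2 := rfl
        have hfq : f q = (nsum (Gv q.1) * nsum (Hv q.2)) * Etil (npick (Gv q.1), npick (Hv q.2)) := by
          rw [hfeq q]
          have e1 : (fun i => g i q.1) = nsum (Gv q.1) • ((npick (Gv q.1)) : Fin k → ℝ) := by
            rw [hcoe, smul_inv_smul₀ hcpos.ne']
          have e2 : (fun j => h j q.2) = nsum (Hv q.2) • ((npick (Hv q.2)) : Fin k' → ℝ) := by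
            rw [hdcoe, smul_inv_smul₀ hdpos.ne']
          rw [e1, e2, hE1 _ (nsum_nonneg _), hE2 _ (nsum_nonneg _)]
          rw [hEtil]
          ring
        rw [htz, hfq]
        simp only
        rw [← mul_sub, abs_mul, abs_of_nonneg (mul_nonneg hcpos.le hdpos.le)]
        rw [mul_comm]
        exact mul_le_mul_of_nonneg_right (hFa _) (mul_nonneg hcpos.le hdpos.le)
  -- choose approximations
  have hex : ∀ n : ℕ, ∃ T, T ∈ TensorSet V W ∧
      ∀ q : X × Y, |T q - f q| ≤ (1 / (n + 1)) * (nsum (Gv q.1) * nsum (Hv q.2)) := by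
    intro n
    have hpos : (0:ℝ) < 1 / (n + 1) := by positivity
    obtain ⟨G, hG⟩ := ContinuousMap.exists_mem_subalgebra_near_continuous_of_separatesPoints
      Alg hsep Etil hEtilc (1 / (n + 1)) hpos
    refine ⟨tz (G : C(P, ℝ)), claimA _ G.2, fun q => claimB _ _ (fun pt => ?_) q⟩
    have := hG pt
    rw [Real.norm_eq_abs] at this
    exact this.le
  choose T hT1 hT2 using hex
  -- dominator
  set D : X × Y → ℝ := tensor ((C' + 1) • (∑ i : Fin k, |g i|)) (∑ j : Fin k', |h j|) with hD
  have hDmem : D ∈ TensorSet V W :=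
    tensor_mem_tensorSet
      (riesz_smul hV.1 _ (riesz_finsum hV.1 _ _ fun i _ => riesz_abs hV.1 (hgV i)))
      (riesz_finsum hW.1 _ _ fun j _ => riesz_abs hW.1 (hhW j))
  have hDval : ∀ q : X × Y, D q = (C' + 1) * (nsum (Gv q.1) * nsum (Hv q.2)) := by
    intro q
    rw [hD]
    simp only [tensor, Pi.smul_apply, Finset.sum_apply, Pi.abs_apply, smul_eq_mul]
    rw [nsum, nsum]
    ring
  have hfb : ∀ q : X × Y, |f q| ≤ C' * (nsum (Gv q.1) * nsum (Hv q.2)) := by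
    intro q
    rw [hfeq q]
    exact hEb' _ _
  refine pdom_of_prepend hDmem (fun n => hT1 n) ?_ ?_
  · intro n q
    simp only [Pi.abs_apply]
    rw [hDval q]
    have h1 := hT2 n q
    have h2 := hfb q
    have h3 : (1:ℝ) / (n + 1) ≤ 1 := by
      rw [div_le_one (by positivity)]
      linarith [Nat.cast_nonneg (α := ℝ) n]
    have h4 : (0:ℝ) ≤ nsum (Gv q.1) * nsum (Hv q.2) :=
      mul_nonneg (nsum_nonneg _) (nsum_nonneg _)
    calc |T n q| = |f q + (T n q - f q)| := by ring_nf
      _ ≤ |f q| + |T n q - f q| := abs_add_le _ _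
      _ ≤ C' * (nsum (Gv q.1) * nsum (Hv q.2)) + (1/(n+1)) * (nsum (Gv q.1) * nsum (Hv q.2)) := by
          linarith
      _ ≤ (C' + 1) * (nsum (Gv q.1) * nsum (Hv q.2)) := by nlinarith
  · intro q
    rw [tendsto_iff_dist_tendsto_zero]
    have hB : Tendsto (fun n : ℕ => (nsum (Gv q.1) * nsum (Hv q.2)) * (1 / (n + 1)))
        atTop (𝓝 0) := by
      have := tendsto_one_div_add_atTop_nhds_zero_nat.const_mul (nsum (Gv q.1) * nsum (Hv q.2))
      simpa using this
    refine squeeze_zero (fun n => dist_nonneg) (fun n => ?_) hB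
    rw [Real.dist_eq]
    calc |T n q - f q| ≤ (1/(n+1)) * (nsum (Gv q.1) * nsum (Hv q.2)) := hT2 n q
      _ = (nsum (Gv q.1) * nsum (Hv q.2)) * (1/(n+1)) := by ring

/-- **Theorem C**: any Pdom-closed superset of the tensor set contains `LGen (TensorSet V W)`. -/
theorem lgen_tensorSet_subset {V : Set (X → ℝ)} {W : Set (Y → ℝ)}
    (hV : IsLebesgue V) (hW : IsLebesgue W) {A : Set (X × Y → ℝ)}
    (hTA : TensorSet V W ⊆ A) (hPA : Pdom A ⊆ A) :
    LGen (TensorSet V W) ⊆ A := by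
  have hTclA : Tcl V W ⊆ A := fun f hf => hPA (pdom_mono hTA (Tcl_subset_pdom hV hW hf))
  exact (lgen_mono (tensorSet_subset_Tcl V W)).trans
    (lgen_riesz_subset_of_pdom_closed (Tcl_isRiesz V W) hTclA hPA)

end Fub

namespace Fub
variable {X Y : Type*}

section Main
variable {V : Set (X → ℝ)} {W : Set (Y → ℝ)} {J : (X → ℝ) → ℝ} {K : (Y → ℝ) → ℝ}

/-- sections of a sum of tensors -/
theorem tensor_section {k : ℕ} (g : Fin k → X → ℝ) (h : Fin k → Y → ℝ) (x : X) :
    (fun y => (∑ i, tensor (g i) (h i)) (x, y)) = ∑ i, (g i x) • h i := by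
  funext y
  rw [Finset.sum_apply, Finset.sum_apply]
  exact Finset.sum_congr rfl fun i _ => rfl

theorem sum_smul_mem {Z : Type*} {R : Set (Z → ℝ)} (hR : IsRiesz R) {k : ℕ}
    (c : Fin k → ℝ) {u : Fin k → Z → ℝ} (hu : ∀ i, u i ∈ R) :
    (∑ i, c i • u i) ∈ R :=
  riesz_finsum hR _ _ fun i _ => riesz_smul hR _ (hu i)

theorem K_sum_smul (hW : IsLebesgue W) (hK : IsDaniell W K) {k : ℕ}
    (c : Fin k → ℝ) {u : Fin k → Y → ℝ} (hu : ∀ i, u i ∈ W) :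
    K (∑ i, c i • u i) = ∑ i, c i * K (u i) := by
  rw [daniell_finsum hK _ _ (fun i _ => riesz_smul hW.1 _ (hu i))]
  exact Finset.sum_congr rfl fun i _ => daniell_smul hK _ (hu i)

/-- `|K u - K u'| ≤ K |u - u'|`. -/
theorem K_abs_diff (hK : IsDaniell W K) {u u' : Y → ℝ} (hu : u ∈ W) (hu' : u' ∈ W) :
    |K u - K u'| ≤ K |u - u'| := by
  rw [← daniell_sub hK hu hu']
  exact daniell_abs_le hK (riesz_sub hK.1 hu hu')

/-- core section-integral membership for `|tensor sum|`. -/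
theorem K_abs_tensor_mem (hV : IsLebesgue V) (hW : IsLebesgue W) (hK : IsDaniell W K)
    {k : ℕ} {g : Fin k → X → ℝ} {h : Fin k → Y → ℝ}
    (hg : ∀ i, g i ∈ V) (hh : ∀ i, h i ∈ W) :
    (fun x => K |∑ i, (g i x) • h i|) ∈ V := by
  classical
  set φ : (Fin k → ℝ) → ℝ := fun c => K |∑ i, c i • h i| with hφ
  have hmem : ∀ c : Fin k → ℝ, (∑ i, c i • h i) ∈ W := fun c => sum_smul_mem hW.1 c hh
  have habsmem : ∀ c : Fin k → ℝ, |∑ i, c i • h i| ∈ W := fun c => riesz_abs hW.1 (hmem c)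
  have hhom : ∀ t : ℝ, 0 ≤ t → ∀ c, φ (t • c) = t * φ c := by
    intro t ht c
    have h1 : (∑ i, ((t • c) i) • h i) = t • ∑ i, c i • h i := by
      rw [Finset.smul_sum]
      exact Finset.sum_congr rfl fun i _ => by
        rw [Pi.smul_apply, smul_eq_mul, mul_smul]
    have h2 : |∑ i, ((t • c) i) • h i| = t • |∑ i, c i • h i| := by
      rw [h1]
      funext y
      simp only [Pi.abs_apply, Pi.smul_apply, smul_eq_mul, abs_mul, abs_of_nonneg ht]
    rw [hφ]
    simp only
    rw [h2, daniell_smul hK t (habsmem c)]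
  have hlip : ∀ c c' : Fin k → ℝ, |φ c - φ c'| ≤ ∑ i, |c i - c' i| * K |h i| := by
    intro c c'
    refine le_trans (K_abs_diff hK (habsmem c) (habsmem c')) ?_
    have hptw : abs ((|∑ i, c i • h i|) - |∑ i, c' i • h i|) ≤ ∑ i, |c i - c' i| • |h i| := by
      intro y
      simp only [Pi.abs_apply, Pi.sub_apply, Finset.sum_apply, Pi.smul_apply, smul_eq_mul]
      refine le_trans (abs_abs_sub_abs_le_abs_sub _ _) ?_
      rw [← Finset.sum_sub_distrib]
      refine le_trans (Finset.abs_sum_le_sum_abs _ _) ?_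
      refine Finset.sum_le_sum fun i _ => ?_
      rw [← sub_mul, abs_mul]
    have hKmono := daniell_mono hK
      (riesz_abs hK.1 (riesz_sub hK.1 (habsmem c) (habsmem c')))
      (sum_smul_mem hK.1 (fun i => |c i - c' i|) (fun i => riesz_abs hW.1 (hh i))) hptw
    exact le_trans hKmono (le_of_eq (K_sum_smul hW hK _ (fun i => riesz_abs hW.1 (hh i))))
  have hcont : Continuous φ := by
    rw [continuous_iff_continuousAt]
    intro c₀
    rw [ContinuousAt, tendsto_iff_dist_tendsto_zero]
    have hA : Tendsto (fun c : Fin k → ℝ => ∑ i, |c i - c₀ i| * K |h i|) (𝓝 c₀)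
        (𝓝 (∑ i : Fin k, |c₀ i - c₀ i| * K |h i|)) := by
      refine Continuous.tendsto ?_ c₀
      exact continuous_finset_sum _ fun i _ =>
        (((continuous_apply i).sub continuous_const).abs).mul continuous_const
    have h0 : (∑ i : Fin k, |c₀ i - c₀ i| * K |h i|) = 0 := by simp
    rw [h0] at hA
    refine squeeze_zero (fun c => dist_nonneg) (fun c => ?_) hA
    rw [Real.dist_eq]
    exact hlip c c₀
  exact homog_comp_mem hV hg hcont hhom

end Main
end Fub

open Fub in
theorem stmt14 {X Y : Type*} (V : Set (X → ℝ)) (W : Set (Y → ℝ))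
    (J : (X → ℝ) → ℝ) (K : (Y → ℝ) → ℝ)
    (hV : IsLebesgue V) (hW : IsLebesgue W)
    (hJ : IsDaniell V J) (hK : IsDaniell W K) :
    IsDaniell (LGen (TensorSet V W))
      (fun f => J (fun x => K (fun y => f (x, y)))) ∧
    (∀ g ∈ V, ∀ h ∈ W,
      J (fun x => K (fun y => tensor g h (x, y))) = J g * K h) ∧
    ∀ I' : (X × Y → ℝ) → ℝ, IsDaniell (LGen (TensorSet V W)) I' →
      (∀ g ∈ V, ∀ h ∈ W, I' (tensor g h) = J g * K h) →
      ∀ f ∈ LGen (TensorSet V W),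
        I' f = J (fun x => K (fun y => f (x, y))) := by

  classical
  set L : Set (X × Y → ℝ) := LGen (TensorSet V W) with hLdef
  have hLleb : IsLebesgue L := lgen_isLebesgue _
  set Kf : (X × Y → ℝ) → X → ℝ := fun f x => K (fun y => f (x, y)) with hKfdef
  set I : (X × Y → ℝ) → ℝ := fun f => J (Kf f) with hIdef
  set S : Set (X × Y → ℝ) := {f | (∀ x, (fun y => f (x, y)) ∈ W) ∧ Kf f ∈ V} with hSdef
  -- tensor sums are in S with a computable K-value
  have hKval : ∀ {k : ℕ} (g : Fin k → X → ℝ) (h : Fin k → Y → ℝ), (∀ i, h i ∈ W) →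
      Kf (∑ i, tensor (g i) (h i)) = ∑ i, (K (h i)) • g i := by
    intro k g h hh
    funext x
    rw [hKfdef]
    simp only
    rw [tensor_section, K_sum_smul hW hK _ hh, Finset.sum_apply]
    exact Finset.sum_congr rfl fun i _ => by rw [Pi.smul_apply, smul_eq_mul, mul_comm]
  have hTS : TensorSet V W ⊆ S := by
    rintro f ⟨k, g, h, hg, hh, rfl⟩
    constructor
    · intro x
      rw [tensor_section]
      exact sum_smul_mem hW.1 _ hh
    · rw [hKval g h hh]
      exact sum_smul_mem hV.1 _ hg
  have hTSabs : ∀ f ∈ TensorSet V W, |f| ∈ S := by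
    rintro f ⟨k, g, h, hg, hh, rfl⟩
    constructor
    · intro x
      rw [show (fun y => (|∑ i, tensor (g i) (h i)|) (x, y))
          = |(fun y => (∑ i, tensor (g i) (h i)) (x, y))| from rfl, tensor_section g h x]
      exact riesz_abs hW.1 (sum_smul_mem hW.1 _ hh)
    · have e : Kf (|∑ i, tensor (g i) (h i)|) = fun x => K |∑ i, (g i x) • h i| := by
        funext x
        rw [hKfdef]
        simp only
        congr 1
        rw [show (fun y => (|∑ i, tensor (g i) (h i)|) (x, y))
            = |(fun y => (∑ i, tensor (g i) (h i)) (x, y))| from rfl, tensor_section g h x]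
      rw [e]
      exact K_abs_tensor_mem hV hW hK hg hh
  set SA : Set (X × Y → ℝ) := {f | f ∈ S ∧ |f| ∈ S} with hSAdef
  have hTSA : TensorSet V W ⊆ SA := fun f hf => ⟨hTS hf, hTSabs f hf⟩
  -- the key Pdom-stability, via dominated convergence for K
  have main : ∀ (G : ℕ → X × Y → ℝ) (φ : X × Y → ℝ), (∀ n, G n ∈ SA) →
      (∀ n, |G n| ≤ |G 0|) →
      (∀ q, Tendsto (fun n => G n q) atTop (𝓝 (φ q))) → φ ∈ S := by
    intro G φ hG hdom hconv
    have hsec : ∀ x, (fun y => φ (x, y)) ∈ W := by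
      intro x
      apply hW.2
      refine pdom_of_prepend (M := W) (D := fun y => |G 0| (x, y))
        (F := fun n => fun y => G n (x, y)) ((hG 0).2.1 x) (fun n => (hG n).1.1 x) ?_ ?_
      · intro n y
        exact hdom n (x, y)
      · intro y
        exact hconv (x, y)
    refine ⟨hsec, ?_⟩
    apply hV.2
    refine pdom_of_prepend (M := V) (D := Kf |G 0|) (F := fun n => Kf (G n))
      ((hG 0).2.2) (fun n => (hG n).1.2) ?_ ?_
    · intro n x
      refine le_trans (daniell_abs_le hK ((hG n).1.1 x)) ?_
      refine daniell_mono hK (riesz_abs hW.1 ((hG n).1.1 x)) ((hG 0).2.1 x) ?_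
      intro y
      exact hdom n (x, y)
    · intro x
      exact daniell_dct hW hK (F := fun n => fun y => G n (x, y)) (f := fun y => φ (x, y))
        (D := fun y => |G 0| (x, y)) (fun n => (hG n).1.1 x) (hsec x) ((hG 0).2.1 x)
        (fun n y => hdom n (x, y)) (fun y => hconv (x, y))
  have hPSA : Pdom SA ⊆ SA := by
    rintro f ⟨F, hFmem, hd, hc⟩
    have hdom' : ∀ n, |F n| ≤ |F 0| := by
      intro n q
      cases n with
      | zero => exact le_refl _
      | succ n => exact le_trans (hd n q) (le_abs_self _)
    refine ⟨main F f hFmem hdom' hc, ?_⟩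
    refine main (fun n => |F n|) |f| (fun n => ⟨(hFmem n).2, ?_⟩) ?_ ?_
    · rw [show (|(|F n|)| : X × Y → ℝ) = |F n| from funext fun q => abs_abs _]
      exact (hFmem n).2
    · intro n q
      simp only [Pi.abs_apply, abs_abs]
      exact hdom' n q
    · intro q
      simp only [Pi.abs_apply]
      exact ((continuous_abs.tendsto _).comp (hc q))
  have hLsub : L ⊆ SA := lgen_tensorSet_subset hV hW hTSA hPSA
  have hLS : ∀ {f}, f ∈ L → f ∈ S := fun hf => (hLsub hf).1
  -- Part 1 : I is a Daniell integral on L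
  have hDan : IsDaniell L I := by
    refine ⟨hLleb.1, ?_, ?_, ?_, ?_⟩
    · intro f g hf hg
      have hfS := hLS hf
      have hgS := hLS hg
      have e : Kf (f + g) = Kf f + Kf g := by
        funext x
        rw [hKfdef]
        simp only [Pi.add_apply]
        exact daniell_add hK (hfS.1 x) (hgS.1 x)
      show J (Kf (f + g)) = J (Kf f) + J (Kf g)
      rw [e]
      exact daniell_add hJ hfS.2 hgS.2
    · intro c f hf
      have hfS := hLS hf
      have e : Kf (c • f) = c • Kf f := by
        funext x
        rw [hKfdef]
        simp only [Pi.smul_apply, smul_eq_mul]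
        exact daniell_smul hK c (hfS.1 x)
      show J (Kf (c • f)) = c * J (Kf f)
      rw [e]
      exact daniell_smul hJ c hfS.2
    · intro f hf
      have hfS := hLS hf
      have hfaS := hLS (riesz_abs hLleb.1 hf)
      show J (Kf f) ≤ J (Kf |f|)
      refine daniell_mono hJ hfS.2 hfaS.2 ?_
      intro x
      exact hK.2.2.2.1 _ (hfS.1 x)
    · intro F hF hpos hdec hto
      have hFS : ∀ n, F n ∈ S := fun n => hLS (hF n)
      show Tendsto (fun n => J (Kf (F n))) atTop (𝓝 0)
      refine hJ.2.2.2.2 (fun n => Kf (F n)) (fun n => (hFS n).2) ?_ ?_ ?_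
      · intro n x
        exact daniell_nonneg hK ((hFS (n + 1)).1 x) (fun y => hpos n (x, y))
      · intro n x
        exact daniell_mono hK ((hFS (n + 1)).1 x) ((hFS n).1 x) (fun y => hdec n (x, y))
      · intro x
        exact hK.2.2.2.2 (fun n => fun y => F n (x, y)) (fun n => (hFS n).1 x)
          (fun n y => hpos n (x, y)) (fun n y => hdec n (x, y)) (fun y => hto (x, y))
  -- Part 2 : values on elementary tensors
  have hTensorVal : ∀ g ∈ V, ∀ h ∈ W, I (tensor g h) = J g * K h := by
    intro g hg h hh
    have e : Kf (tensor g h) = (K h) • g := by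
      funext x
      rw [hKfdef]
      simp only [Pi.smul_apply, smul_eq_mul]
      rw [show (fun y => tensor g h (x, y)) = g x • h from rfl]
      rw [daniell_smul hK _ hh]
      ring
    show J (Kf (tensor g h)) = J g * K h
    rw [e, daniell_smul hJ _ hg]
    ring
  refine ⟨hDan, hTensorVal, ?_⟩
  -- Part 3 : uniqueness
  intro I' hI' hval f hfL
  set A : Set (X × Y → ℝ) := {f | f ∈ L ∧ I' f = I f} with hAdef
  have hTA : TensorSet V W ⊆ A := by
    rintro t ⟨k, g, h, hg, hh, rfl⟩
    have htL : ∀ i : Fin k, tensor (g i) (h i) ∈ L :=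
      fun i => subset_lgen _ (tensor_mem_tensorSet (hg i) (hh i))
    have hsumL : (∑ i, tensor (g i) (h i)) ∈ L :=
      riesz_finsum hLleb.1 _ _ fun i _ => htL i
    refine ⟨hsumL, ?_⟩
    rw [daniell_finsum hI' _ _ (fun i _ => htL i), daniell_finsum hDan _ _ (fun i _ => htL i)]
    exact Finset.sum_congr rfl fun i _ => by
      rw [hval _ (hg i) _ (hh i), hTensorVal _ (hg i) _ (hh i)]
  have hPA : Pdom A ⊆ A := by
    rintro f' ⟨F, hF, hd, hc⟩
    have hfL' : f' ∈ L := hLleb.2 ⟨F, fun n => (hF n).1, hd, hc⟩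
    have hdom' : ∀ n, |F n| ≤ |F 0| := by
      intro n q
      cases n with
      | zero => exact le_refl _
      | succ n => exact le_trans (hd n q) (le_abs_self _)
    have h1 : Tendsto (fun n => I' (F n)) atTop (𝓝 (I' f')) :=
      daniell_dct hLleb hI' (fun n => (hF n).1) hfL'
        (riesz_abs hLleb.1 (hF 0).1) hdom' hc
    have h2 : Tendsto (fun n => I' (F n)) atTop (𝓝 (I f')) := by
      have h3 : Tendsto (fun n => I (F n)) atTop (𝓝 (I f')) :=
        daniell_dct hLleb hDan (fun n => (hF n).1) hfL'
          (riesz_abs hLleb.1 (hF 0).1) hdom' hc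
      refine h3.congr fun n => ?_
      exact ((hF n).2).symm
    exact ⟨hfL', tendsto_nhds_unique h1 h2⟩
  exact ((lgen_tensorSet_subset hV hW hTA hPA) hfL).2
end

section
/- Let J : S → ℝ and K : T → ℝ be Daniell integrals on Riesz spaces S ⊆ F(X), T ⊆ F(Y). Then there exists a Daniell integral I on R(S ⊗ T), the smallest Riesz space containing S ⊗ T, such that I(f ⊗ g) = J(f)·K(g) for all f ∈ S, g ∈ T, and I is uniquely determined by this property. -/
open Filter Topology

section Basic

namespace Stmt15

variable {Z : Type*}

theorem riesz_zero {R : Set (Z → ℝ)} (h : IsRiesz R) : (0 : Z → ℝ) ∈ R := h.1.1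

theorem riesz_add {R : Set (Z → ℝ)} (h : IsRiesz R) {f g : Z → ℝ}
    (hf : f ∈ R) (hg : g ∈ R) : f + g ∈ R := h.1.2.1 f g hf hg

theorem riesz_smul {R : Set (Z → ℝ)} (h : IsRiesz R) (c : ℝ) {f : Z → ℝ}
    (hf : f ∈ R) : c • f ∈ R := h.1.2.2 c f hf

theorem riesz_abs {R : Set (Z → ℝ)} (h : IsRiesz R) {f : Z → ℝ}
    (hf : f ∈ R) : |f| ∈ R := h.2 f hf

theorem riesz_neg {R : Set (Z → ℝ)} (h : IsRiesz R) {f : Z → ℝ}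
    (hf : f ∈ R) : -f ∈ R := by
  simpa [neg_one_smul] using riesz_smul h (-1) hf

theorem riesz_sub {R : Set (Z → ℝ)} (h : IsRiesz R) {f g : Z → ℝ}
    (hf : f ∈ R) (hg : g ∈ R) : f - g ∈ R := by
  rw [sub_eq_add_neg]; exact riesz_add h hf (riesz_neg h hg)

theorem max_eq_half (a b : ℝ) : max a b = (2:ℝ)⁻¹ * (a + b + |a - b|) := by
  rcases le_total a b with hab | hab
  · rw [max_eq_right hab, abs_of_nonpos (by linarith)]; ring
  · rw [max_eq_left hab, abs_of_nonneg (by linarith)]; ring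

theorem min_eq_half (a b : ℝ) : min a b = (2:ℝ)⁻¹ * (a + b - |a - b|) := by
  rcases le_total a b with hab | hab
  · rw [min_eq_left hab, abs_of_nonpos (by linarith)]; ring
  · rw [min_eq_right hab, abs_of_nonneg (by linarith)]; ring

theorem riesz_max {R : Set (Z → ℝ)} (h : IsRiesz R) {f g : Z → ℝ}
    (hf : f ∈ R) (hg : g ∈ R) : (fun z => max (f z) (g z)) ∈ R := by
  have : (fun z => max (f z) (g z)) = (2:ℝ)⁻¹ • (f + g + |f - g|) := by
    funext z
    simp only [Pi.smul_apply, Pi.add_apply, Pi.abs_apply, Pi.sub_apply, smul_eq_mul]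
    exact max_eq_half _ _
  rw [this]
  exact riesz_smul h _ (riesz_add h (riesz_add h hf hg) (riesz_abs h (riesz_sub h hf hg)))

theorem riesz_min {R : Set (Z → ℝ)} (h : IsRiesz R) {f g : Z → ℝ}
    (hf : f ∈ R) (hg : g ∈ R) : (fun z => min (f z) (g z)) ∈ R := by
  have : (fun z => min (f z) (g z)) = (2:ℝ)⁻¹ • (f + g - |f - g|) := by
    funext z
    simp only [Pi.smul_apply, Pi.add_apply, Pi.abs_apply, Pi.sub_apply, smul_eq_mul]
    exact min_eq_half _ _
  rw [this]
  exact riesz_smul h _ (riesz_sub h (riesz_add h hf hg) (riesz_abs h (riesz_sub h hf hg)))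

theorem riesz_sum {R : Set (Z → ℝ)} (h : IsRiesz R) {ι : Type*} (s : Finset ι)
    (f : ι → Z → ℝ) (hf : ∀ i ∈ s, f i ∈ R) : (∑ i ∈ s, f i) ∈ R := by
  classical
  induction s using Finset.induction with
  | empty => simpa using riesz_zero h
  | insert _ _ hx ih =>
    rw [Finset.sum_insert hx]
    exact riesz_add h (hf _ (Finset.mem_insert_self _ _))
      (ih fun i hi => hf i (Finset.mem_insert_of_mem hi))

/-- RGen is a Riesz space. -/
theorem rgen_isRiesz (M : Set (Z → ℝ)) : IsRiesz (RGen M) := by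
  constructor
  · refine ⟨?_, ?_, ?_⟩
    · exact fun R hR => hR.1.1.1
    · exact fun f g hf hg R hR => hR.1.1.2.1 f g (hf R hR) (hg R hR)
    · exact fun c f hf R hR => hR.1.1.2.2 c f (hf R hR)
  · exact fun f hf R hR => hR.1.2 f (hf R hR)

theorem subset_rgen (M : Set (Z → ℝ)) : M ⊆ RGen M :=
  fun f hf R hR => hR.2 hf

theorem rgen_subset {M R : Set (Z → ℝ)} (hR : IsRiesz R) (hMR : M ⊆ R) :
    RGen M ⊆ R := fun _ hf => hf R ⟨hR, hMR⟩

section Daniell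

variable {R : Set (Z → ℝ)} {I : (Z → ℝ) → ℝ} (hI : IsDaniell R I)
include hI

theorem dan_add {f g : Z → ℝ} (hf : f ∈ R) (hg : g ∈ R) :
    I (f + g) = I f + I g := hI.2.1 f g hf hg

theorem dan_smul (c : ℝ) {f : Z → ℝ} (hf : f ∈ R) : I (c • f) = c * I f :=
  hI.2.2.1 c f hf

theorem dan_zero : I 0 = 0 := by
  have h0 : (0 : Z → ℝ) ∈ R := riesz_zero hI.1
  have := dan_add hI h0 h0
  simp at this
  linarith

theorem dan_neg {f : Z → ℝ} (hf : f ∈ R) : I (-f) = -I f := by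
  have := dan_smul hI (-1) hf
  simpa [neg_one_smul] using this

theorem dan_sub {f g : Z → ℝ} (hf : f ∈ R) (hg : g ∈ R) :
    I (f - g) = I f - I g := by
  rw [sub_eq_add_neg, dan_add hI hf (riesz_neg hI.1 hg), dan_neg hI hg]
  ring

theorem dan_nonneg {f : Z → ℝ} (hf : f ∈ R) (h0 : ∀ z, 0 ≤ f z) : 0 ≤ I f := by
  have habs : |(-f)| = f := by
    funext z; simp [abs_of_nonneg (h0 z)]
  have := hI.2.2.2.1 (-f) (riesz_neg hI.1 hf)
  rw [habs, dan_neg hI hf] at this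
  linarith

theorem dan_mono {f g : Z → ℝ} (hf : f ∈ R) (hg : g ∈ R) (h : ∀ z, f z ≤ g z) :
    I f ≤ I g := by
  have : 0 ≤ I (g - f) := dan_nonneg hI (riesz_sub hI.1 hg hf)
    (fun z => by simp [sub_nonneg]; exact h z)
  have heq := dan_sub hI hg hf
  linarith

theorem dan_sum {ι : Type*} (s : Finset ι) (f : ι → Z → ℝ)
    (hf : ∀ i ∈ s, f i ∈ R) : I (∑ i ∈ s, f i) = ∑ i ∈ s, I (f i) := by
  classical
  induction s using Finset.induction with
  | empty => simpa using dan_zero hI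
  | insert _ _ hx ih =>
    rw [Finset.sum_insert hx, Finset.sum_insert hx,
      dan_add hI (hf _ (Finset.mem_insert_self _ _))
        (riesz_sum hI.1 _ _ fun i hi => hf i (Finset.mem_insert_of_mem hi)),
      ih fun i hi => hf i (Finset.mem_insert_of_mem hi)]

end Daniell

end Stmt15
end Basic

section Tensor

namespace Stmt15

variable {X Y : Type*} {S : Set (X → ℝ)} {T : Set (Y → ℝ)}

theorem tensorSet_zero : (0 : X × Y → ℝ) ∈ TensorSet S T := by
  exact ⟨0, Fin.elim0, Fin.elim0, fun i => i.elim0, fun i => i.elim0, by simp⟩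

theorem tensorSet_mem {f : X → ℝ} {g : Y → ℝ} (hf : f ∈ S) (hg : g ∈ T) :
    tensor f g ∈ TensorSet S T :=
  ⟨1, fun _ => f, fun _ => g, fun _ => hf, fun _ => hg, by simp⟩

theorem tensorSet_add {u v : X × Y → ℝ} (hu : u ∈ TensorSet S T)
    (hv : v ∈ TensorSet S T) : u + v ∈ TensorSet S T := by
  obtain ⟨k₁, g₁, h₁, hg₁, hh₁, rfl⟩ := hu
  obtain ⟨k₂, g₂, h₂, hg₂, hh₂, rfl⟩ := hv
  refine ⟨k₁ + k₂, Fin.append g₁ g₂, Fin.append h₁ h₂, ?_, ?_, ?_⟩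
  · intro i
    rcases Nat.lt_or_ge (i : ℕ) k₁ with hi | hi
    · have : i = Fin.castAdd k₂ ⟨i, hi⟩ := by rfl
      rw [this, Fin.append_left]; exact hg₁ _
    · have : i = Fin.natAdd k₁ ⟨i - k₁, by omega⟩ := by
        apply Fin.ext; simp; omega
      rw [this, Fin.append_right]; exact hg₂ _
  · intro i
    rcases Nat.lt_or_ge (i : ℕ) k₁ with hi | hi
    · have : i = Fin.castAdd k₂ ⟨i, hi⟩ := by rfl
      rw [this, Fin.append_left]; exact hh₁ _
    · have : i = Fin.natAdd k₁ ⟨i - k₁, by omega⟩ := by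
        apply Fin.ext; simp; omega
      rw [this, Fin.append_right]; exact hh₂ _
  · rw [Fin.sum_univ_add]
    congr 1 <;> [skip; skip] <;>
    · apply Finset.sum_congr rfl
      intro i _
      simp [Fin.append_left, Fin.append_right]

theorem tensorSet_smul (hS : IsRiesz S) (c : ℝ) {u : X × Y → ℝ}
    (hu : u ∈ TensorSet S T) : c • u ∈ TensorSet S T := by
  obtain ⟨k, g, h, hg, hh, rfl⟩ := hu
  refine ⟨k, fun i => c • g i, h, fun i => riesz_smul hS c (hg i), hh, ?_⟩
  funext p
  simp only [Pi.smul_apply, Finset.sum_apply, smul_eq_mul, Finset.mul_sum]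
  apply Finset.sum_congr rfl
  intro i _
  simp [tensor]
  ring

theorem tensorSet_neg (hS : IsRiesz S) {u : X × Y → ℝ}
    (hu : u ∈ TensorSet S T) : -u ∈ TensorSet S T := by
  have := tensorSet_smul hS (-1) hu
  simpa [neg_one_smul] using this

theorem tensorSet_subset_rgen : TensorSet S T ⊆ RGen (TensorSet S T) :=
  subset_rgen _

end Stmt15
end Tensor

section Lam

namespace Stmt15

/-- lattice-linear functions on `Fin M → ℝ`: Riesz space generated by linear maps. -/
def Lam (M : ℕ) : Set ((Fin M → ℝ) → ℝ) := RGen {φ | IsLinearMap ℝ φ}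

theorem lam_isRiesz (M : ℕ) : IsRiesz (Lam M) := rgen_isRiesz _

theorem lam_linear {M : ℕ} {φ : (Fin M → ℝ) → ℝ} (h : IsLinearMap ℝ φ) :
    φ ∈ Lam M := subset_rgen _ h

theorem lam_induction {M : ℕ} {P : Set ((Fin M → ℝ) → ℝ)} (hP : IsRiesz P)
    (hlin : ∀ φ, IsLinearMap ℝ φ → φ ∈ P) : Lam M ⊆ P :=
  rgen_subset hP hlin

/-- coordinate functions are in Lam -/
theorem lam_coord {M : ℕ} (i : Fin M) : (fun c : Fin M → ℝ => c i) ∈ Lam M :=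
  lam_linear ⟨fun _ _ => rfl, fun _ _ => rfl⟩


theorem lin_rep {M : ℕ} {φ : (Fin M → ℝ) → ℝ} (hφ : IsLinearMap ℝ φ)
    (e : Fin M → ℝ) : φ e = ∑ i, e i * φ (fun j => if i = j then 1 else 0) := by
  classical
  have : φ e = (IsLinearMap.mk' φ hφ) e := rfl
  rw [this]
  conv_lhs => rw [pi_eq_sum_univ e]
  rw [map_sum]
  apply Finset.sum_congr rfl
  intro i _
  rw [map_smul]
  rfl

/-- key composition lemma: substituting members of a Riesz space into a
lattice-linear function lands in the Riesz space. -/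
theorem lam_comp {M : ℕ} {Z : Type*} {R : Set (Z → ℝ)} (hR : IsRiesz R)
    {f : Fin M → Z → ℝ} (hf : ∀ i, f i ∈ R) {Ψ : (Fin M → ℝ) → ℝ}
    (hΨ : Ψ ∈ Lam M) : (fun z => Ψ (fun i => f i z)) ∈ R := by
  classical
  refine lam_induction (P := {Ψ | (fun z => Ψ (fun i => f i z)) ∈ R}) ?_ ?_ hΨ
  · refine ⟨⟨?_, ?_, ?_⟩, ?_⟩
    · exact (riesz_zero hR : (0 : Z → ℝ) ∈ R)
    · intro F G hF hG
      have : (fun z => (F + G) (fun i => f i z)) =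
          (fun z => F (fun i => f i z)) + (fun z => G (fun i => f i z)) := rfl
      rw [Set.mem_setOf_eq, this]; exact riesz_add hR hF hG
    · intro c F hF
      have : (fun z => (c • F) (fun i => f i z)) =
          c • (fun z => F (fun i => f i z)) := rfl
      rw [Set.mem_setOf_eq, this]; exact riesz_smul hR c hF
    · intro F hF
      have : (fun z => |F| (fun i => f i z)) =
          |(fun z => F (fun i => f i z))| := rfl
      rw [Set.mem_setOf_eq, this]; exact riesz_abs hR hF
  · intro φ hφ
    have hrep : ∀ c : Fin M → ℝ, φ c = ∑ i, c i * φ (fun j => if i = j then 1 else 0) :=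
      lin_rep hφ
    have : (fun z => φ (fun i => f i z)) =
        ∑ i : Fin M, (φ (fun j => if i = j then 1 else 0)) • f i := by
      funext z
      rw [hrep]
      simp only [Finset.sum_apply, Pi.smul_apply, smul_eq_mul]
      apply Finset.sum_congr rfl
      intro i _
      ring
    rw [Set.mem_setOf_eq, this]
    exact riesz_sum hR _ _ fun i _ => riesz_smul hR _ (hf i)

/-- positive homogeneity of lattice-linear functions -/
theorem lam_poshom {M : ℕ} {Ψ : (Fin M → ℝ) → ℝ} (hΨ : Ψ ∈ Lam M) :
    ∀ t : ℝ, 0 ≤ t → ∀ c, Ψ (t • c) = t * Ψ c := by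
  refine lam_induction (P := {Ψ | ∀ t : ℝ, 0 ≤ t → ∀ c, Ψ (t • c) = t * Ψ c}) ?_ ?_ hΨ
  · refine ⟨⟨?_, ?_, ?_⟩, ?_⟩
    · intro t _ c; simp
    · intro F G hF hG t ht c
      simp only [Pi.add_apply, hF t ht, hG t ht]; ring
    · intro a F hF t ht c
      simp only [Pi.smul_apply, smul_eq_mul, hF t ht]; ring
    · intro F hF t ht c
      simp only [Pi.abs_apply, hF t ht, abs_mul, abs_of_nonneg ht]
  · intro φ hφ t ht c
    rw [hφ.map_smul]; simp

theorem lam_zero_eq {M : ℕ} {Ψ : (Fin M → ℝ) → ℝ} (hΨ : Ψ ∈ Lam M) : Ψ 0 = 0 := by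
  have := lam_poshom hΨ 0 le_rfl 0
  simpa using this

/-- ℓ¹ norm on Fin M → ℝ -/
def nrm1 {M : ℕ} (c : Fin M → ℝ) : ℝ := ∑ i, |c i|

theorem nrm1_nonneg {M : ℕ} (c : Fin M → ℝ) : 0 ≤ nrm1 c :=
  Finset.sum_nonneg fun i _ => abs_nonneg _

theorem abs_le_nrm1 {M : ℕ} (c : Fin M → ℝ) (i : Fin M) : |c i| ≤ nrm1 c :=
  Finset.single_le_sum (fun j _ => abs_nonneg (c j)) (Finset.mem_univ i)

theorem nrm1_mem_lam {M : ℕ} : (nrm1 : (Fin M → ℝ) → ℝ) ∈ Lam M := by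
  have : (nrm1 : (Fin M → ℝ) → ℝ) = ∑ i : Fin M, |fun c : Fin M → ℝ => c i| := by
    funext c; simp [nrm1]
  rw [this]
  exact riesz_sum (lam_isRiesz M) _ _ fun i _ => riesz_abs (lam_isRiesz M) (lam_coord i)

/-- Lipschitz estimate for lattice-linear functions, w.r.t. nrm1 -/
theorem lam_lipschitz {M : ℕ} {Ψ : (Fin M → ℝ) → ℝ} (hΨ : Ψ ∈ Lam M) :
    ∃ C : ℝ, 0 ≤ C ∧ ∀ c d, |Ψ c - Ψ d| ≤ C * nrm1 (c - d) := by
  refine lam_induction (P := {Ψ | ∃ C : ℝ, 0 ≤ C ∧ ∀ c d, |Ψ c - Ψ d| ≤ C * nrm1 (c - d)}) ?_ ?_ hΨ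
  · refine ⟨⟨?_, ?_, ?_⟩, ?_⟩
    · exact ⟨0, le_rfl, fun c d => by simp⟩
    · rintro F G ⟨C₁, hC₁, h₁⟩ ⟨C₂, hC₂, h₂⟩
      refine ⟨C₁ + C₂, by linarith, fun c d => ?_⟩
      have := abs_add_le (F c - F d) (G c - G d)
      simp only [Pi.add_apply]
      calc |F c + G c - (F d + G d)| = |(F c - F d) + (G c - G d)| := by ring_nf
        _ ≤ |F c - F d| + |G c - G d| := abs_add_le _ _
        _ ≤ C₁ * nrm1 (c - d) + C₂ * nrm1 (c - d) := add_le_add (h₁ c d) (h₂ c d)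
        _ = (C₁ + C₂) * nrm1 (c - d) := by ring
    · rintro a F ⟨C, hC, h⟩
      refine ⟨|a| * C, by positivity, fun c d => ?_⟩
      simp only [Pi.smul_apply, smul_eq_mul]
      calc |a * F c - a * F d| = |a| * |F c - F d| := by rw [← abs_mul]; ring_nf
        _ ≤ |a| * (C * nrm1 (c - d)) := by
            apply mul_le_mul_of_nonneg_left (h c d) (abs_nonneg a)
        _ = |a| * C * nrm1 (c - d) := by ring
    · rintro F ⟨C, hC, h⟩
      refine ⟨C, hC, fun c d => ?_⟩
      simp only [Pi.abs_apply]
      exact le_trans (abs_abs_sub_abs_le_abs_sub _ _) (h c d)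
  · intro φ hφ
    refine ⟨∑ i, |φ (fun j => if i = j then 1 else 0)|,
      Finset.sum_nonneg fun i _ => abs_nonneg _, fun c d => ?_⟩
    set C := ∑ i : Fin M, |φ (fun j => if i = j then (1:ℝ) else 0)| with hCdef
    have hrep : ∀ e : Fin M → ℝ, φ e = ∑ i, e i * φ (fun j => if i = j then 1 else 0) :=
      lin_rep hφ
    have : φ c - φ d = φ (c - d) := ((IsLinearMap.mk' φ hφ).map_sub c d).symm
    rw [this, hrep]
    calc |∑ i, (c - d) i * φ (fun j => if i = j then 1 else 0)|
        ≤ ∑ i, |(c - d) i * φ (fun j => if i = j then 1 else 0)| := Finset.abs_sum_le_sum_abs _ _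
      _ ≤ ∑ i, |φ (fun j => if i = j then (1:ℝ) else 0)| * nrm1 (c - d) := by
          apply Finset.sum_le_sum
          intro i _
          rw [abs_mul, mul_comm]
          exact mul_le_mul_of_nonneg_left (abs_le_nrm1 _ i) (abs_nonneg _)
      _ = C * nrm1 (c - d) := by rw [← Finset.sum_mul]

end Stmt15
end Lam

section Partition

namespace Stmt15

theorem clamp_diff (a b c d : ℝ) (hcd : c ≤ d) :
    max b (min a d) - max b (min a c) = max (min a d - max b c) 0 := by
  rcases le_total (max b c) (min a d) with h | h
  · have hba : b ≤ min a d := le_trans (le_max_left b c) h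
    have hc : c ≤ a := le_trans (le_trans (le_max_right b c) h) (min_le_left a d)
    rw [max_eq_right hba, min_eq_right hc, max_eq_left (sub_nonneg.mpr h)]
  · have hz : max (min a d - max b c) 0 = 0 := max_eq_right (by linarith)
    rw [hz]
    rcases le_total c b with hcb | hbc
    · have h1 : min a d ≤ b := by rwa [max_eq_left hcb] at h
      have h2 : min a c ≤ b := le_trans (min_le_min le_rfl hcd) h1
      rw [max_eq_left h1, max_eq_left h2, sub_self]
    · have hc : min a d ≤ c := by rwa [max_eq_right hbc] at h
      rcases le_total a c with hac | hca
      · have h3 : min a d = a := min_eq_left (le_trans hac hcd)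
        rw [h3, min_eq_left hac, sub_self]
      · have h3 : min a d = c := le_antisymm hc (le_min hca hcd)
        rw [h3, min_eq_right hca, sub_self]

theorem max_sub_right (a b : ℝ) : max b a - b = max (a - b) 0 := by
  rcases le_total a b with h | h
  · rw [max_eq_left h, max_eq_right (by linarith), sub_self]
  · rw [max_eq_right h, max_eq_left (by linarith)]

theorem inf'_fin_succ {m : ℕ} (f : Fin (m + 2) → ℝ) :
    Finset.univ.inf' ⟨0, Finset.mem_univ 0⟩ f =
      min (f 0) (Finset.univ.inf' ⟨0, Finset.mem_univ 0⟩ (fun i : Fin (m+1) => f i.succ)) := by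
  apply le_antisymm
  · apply le_min
    · exact Finset.inf'_le _ (Finset.mem_univ _)
    · apply Finset.le_inf'
      intro i _
      exact Finset.inf'_le _ (Finset.mem_univ _)
  · apply Finset.le_inf'
    intro i _
    induction i using Fin.cases with
    | zero => exact min_le_left _ _
    | succ i' =>
      exact le_trans (min_le_right _ _) (Finset.inf'_le _ (Finset.mem_univ i'))

theorem sup'_fin_succ {m : ℕ} (f : Fin (m + 2) → ℝ) :
    Finset.univ.sup' ⟨0, Finset.mem_univ 0⟩ f =
      max (f 0) (Finset.univ.sup' ⟨0, Finset.mem_univ 0⟩ (fun i : Fin (m+1) => f i.succ)) := by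
  apply le_antisymm
  · apply Finset.sup'_le
    intro i _
    induction i using Fin.cases with
    | zero => exact le_max_left _ _
    | succ i' =>
      exact le_trans (Finset.le_sup' (fun i : Fin (m+1) => f i.succ) (Finset.mem_univ i'))
        (le_max_right _ _)
  · apply max_le
    · exact Finset.le_sup' _ (Finset.mem_univ _)
    · apply Finset.sup'_le
      intro i _
      exact Finset.le_sup' _ (Finset.mem_univ _)

theorem inf'_fin_one (f : Fin 1 → ℝ) :
    Finset.univ.inf' ⟨0, Finset.mem_univ 0⟩ f = f 0 := by
  apply le_antisymm
  · exact Finset.inf'_le _ (Finset.mem_univ _)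
  · apply Finset.le_inf'
    intro i _
    rw [Fin.eq_zero i]

theorem sup'_fin_one (f : Fin 1 → ℝ) :
    Finset.univ.sup' ⟨0, Finset.mem_univ 0⟩ f = f 0 := by
  apply le_antisymm
  · apply Finset.sup'_le
    intro i _
    rw [Fin.eq_zero i]
  · exact Finset.le_sup' _ (Finset.mem_univ _)

/-- The key partition identity: common refinement cells of `m+1` prefix systems
with equal totals sum to the total. -/
theorem partition_sum (N : ℕ) (r : ℝ) : ∀ (m : ℕ) (P : Fin (m+1) → ℕ → ℝ),
    (∀ i k, P i k ≤ P i (k+1)) → (∀ i, P i 0 = 0) → (∀ i, P i (N+1) = r) →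
    ∑ w : Fin (m+1) → Fin (N+1),
      max ((Finset.univ.inf' ⟨0, Finset.mem_univ 0⟩ fun i => P i (w i + 1)) -
        (Finset.univ.sup' ⟨0, Finset.mem_univ 0⟩ fun i => P i (w i))) 0 = r := by
  intro m
  induction m with
  | zero =>
    intro P hmono hbot htop
    have hsum := Fintype.sum_equiv (Equiv.funUnique (Fin 1) (Fin (N+1)))
      (fun w : Fin 1 → Fin (N+1) =>
        max ((Finset.univ.inf' ⟨0, Finset.mem_univ 0⟩ fun i => P i (w i + 1)) -
          (Finset.univ.sup' ⟨0, Finset.mem_univ 0⟩ fun i => P i (w i))) 0)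
      (fun j : Fin (N+1) => max (P 0 ((j:ℕ) + 1) - P 0 (j:ℕ)) 0)
      (fun w => by rw [inf'_fin_one, sup'_fin_one]; rfl)
    rw [hsum]
    have : ∀ j : Fin (N+1), max (P 0 ((j:ℕ) + 1) - P 0 (j:ℕ)) 0
        = P 0 ((j:ℕ)+1) - P 0 (j:ℕ) := by
      intro j
      exact max_eq_left (sub_nonneg.mpr (hmono 0 j))
    rw [Finset.sum_congr rfl fun j _ => this j]
    rw [Fin.sum_univ_eq_sum_range (fun k => P 0 (k+1) - P 0 k) (N+1)]
    rw [Finset.sum_range_sub (P 0) (N+1), hbot 0, htop 0, sub_zero]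
  | succ m ih =>
    intro P hmono hbot htop
    -- reindex by cons
    have hsum := Fintype.sum_equiv (Fin.consEquiv (fun _ : Fin (m+2) => Fin (N+1)))
      (fun p : Fin (N+1) × (Fin (m+1) → Fin (N+1)) =>
        max ((Finset.univ.inf' ⟨0, Finset.mem_univ 0⟩ fun i => P i ((Fin.cons p.1 p.2 : Fin (m+2) → Fin (N+1)) i + 1)) -
          (Finset.univ.sup' ⟨0, Finset.mem_univ 0⟩ fun i => P i ((Fin.cons p.1 p.2 : Fin (m+2) → Fin (N+1)) i))) 0)
      (fun w : Fin (m+2) → Fin (N+1) =>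
        max ((Finset.univ.inf' ⟨0, Finset.mem_univ 0⟩ fun i => P i (w i + 1)) -
          (Finset.univ.sup' ⟨0, Finset.mem_univ 0⟩ fun i => P i (w i))) 0)
      (fun p => rfl)
    rw [← hsum]
    rw [Fintype.sum_prod_type_right]
    -- now : ∑ w' , ∑ j , term (cons j w')
    have key : ∀ w' : Fin (m+1) → Fin (N+1),
        (∑ j : Fin (N+1),
          max ((Finset.univ.inf' ⟨0, Finset.mem_univ 0⟩ fun i => P i ((Fin.cons j w' : Fin (m+2) → Fin (N+1)) i + 1)) -
            (Finset.univ.sup' ⟨0, Finset.mem_univ 0⟩ fun i => P i ((Fin.cons j w' : Fin (m+2) → Fin (N+1)) i))) 0)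
        = max ((Finset.univ.inf' ⟨0, Finset.mem_univ 0⟩ fun i : Fin (m+1) => P i.succ (w' i + 1)) -
            (Finset.univ.sup' ⟨0, Finset.mem_univ 0⟩ fun i : Fin (m+1) => P i.succ (w' i))) 0 := by
      intro w'
      set a := Finset.univ.inf' ⟨0, Finset.mem_univ 0⟩ (fun i : Fin (m+1) => P i.succ ((w' i : ℕ) + 1)) with ha
      set b := Finset.univ.sup' ⟨0, Finset.mem_univ 0⟩ (fun i : Fin (m+1) => P i.succ ((w' i : ℕ))) with hb
      have hra : 0 ≤ a := by
        rw [ha]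
        apply Finset.le_inf'
        intro i _
        calc (0:ℝ) = P i.succ 0 := (hbot i.succ).symm
          _ ≤ P i.succ ((w' i : ℕ) + 1) := monotone_nat_of_le_succ (hmono i.succ) (Nat.zero_le _)
      have har : a ≤ r := by
        rw [ha]
        refine le_trans (Finset.inf'_le (fun i : Fin (m+1) => P i.succ ((w' i : ℕ) + 1))
          (Finset.mem_univ 0)) ?_
        calc P (0:Fin (m+1)).succ ((w' 0 : ℕ) + 1)
            ≤ P (0:Fin (m+1)).succ (N+1) := monotone_nat_of_le_succ (hmono _) (by omega)
          _ = r := htop _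
      have hrb : 0 ≤ b := by
        rw [hb]
        refine le_trans ?_ (Finset.le_sup' (fun i : Fin (m+1) => P i.succ ((w' i : ℕ)))
          (Finset.mem_univ 0))
        calc (0:ℝ) = P (0:Fin (m+1)).succ 0 := (hbot _).symm
          _ ≤ P (0:Fin (m+1)).succ ((w' 0 : ℕ)) := monotone_nat_of_le_succ (hmono _) (Nat.zero_le _)
      have hterm : ∀ j : Fin (N+1),
          max ((Finset.univ.inf' ⟨0, Finset.mem_univ 0⟩ fun i => P i ((Fin.cons j w' : Fin (m+2) → Fin (N+1)) i + 1)) -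
            (Finset.univ.sup' ⟨0, Finset.mem_univ 0⟩ fun i => P i ((Fin.cons j w' : Fin (m+2) → Fin (N+1)) i))) 0
          = max b (min a (P 0 ((j:ℕ)+1))) - max b (min a (P 0 (j:ℕ))) := by
        intro j
        rw [inf'_fin_succ, sup'_fin_succ]
        have e1 : (fun i : Fin (m+1) => P i.succ (((Fin.cons j w' : Fin (m+2) → Fin (N+1)) i.succ : ℕ) + 1))
            = fun i : Fin (m+1) => P i.succ ((w' i : ℕ) + 1) := by
          funext i; rw [Fin.cons_succ]
        have e2 : (fun i : Fin (m+1) => P i.succ (((Fin.cons j w' : Fin (m+2) → Fin (N+1)) i.succ : ℕ)))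
            = fun i : Fin (m+1) => P i.succ ((w' i : ℕ)) := by
          funext i; rw [Fin.cons_succ]
        rw [e1, e2, ← ha, ← hb]
        simp only [Fin.cons_zero]
        rw [min_comm (P 0 ((j:ℕ)+1)) a, max_comm (P 0 (j:ℕ)) b]
        rw [← clamp_diff a b _ _ (monotone_nat_of_le_succ (hmono 0) (by omega))]
      rw [Finset.sum_congr rfl fun j _ => hterm j]
      rw [Fin.sum_univ_eq_sum_range (fun k => max b (min a (P 0 (k+1))) - max b (min a (P 0 k))) (N+1)]
      rw [Finset.sum_range_sub (fun k => max b (min a (P 0 k))) (N+1)]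
      rw [hbot 0, htop 0, min_eq_left har, min_eq_right hra, max_eq_left hrb]
      exact max_sub_right a b
    rw [Finset.sum_congr rfl fun w' _ => key w']
    exact ih (fun i => P i.succ) (fun i k => hmono i.succ k) (fun i => hbot i.succ)
      (fun i => htop i.succ)

end Stmt15
end Partition

section Hats

namespace Stmt15

theorem riesz_inf' {Z : Type*} {R : Set (Z → ℝ)} (h : IsRiesz R) {ι : Type*}
    (s : Finset ι) (hs : s.Nonempty) (f : ι → Z → ℝ) (hf : ∀ i ∈ s, f i ∈ R) :
    (fun z => s.inf' hs fun i => f i z) ∈ R := by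
  classical
  induction hs using Finset.Nonempty.cons_induction with
  | singleton a => simpa using hf a (Finset.mem_singleton_self a)
  | cons a s ha hs ih =>
    have heq : (fun z => (Finset.cons a s ha).inf' (Finset.cons_nonempty ha) fun i => f i z)
        = fun z => min (f a z) (s.inf' hs fun i => f i z) := by
      funext z
      rw [Finset.inf'_cons]
    rw [heq]
    exact riesz_min h (hf a (Finset.mem_cons_self a s))
      (ih fun i hi => hf i (Finset.mem_cons_of_mem hi))

theorem riesz_sup' {Z : Type*} {R : Set (Z → ℝ)} (h : IsRiesz R) {ι : Type*}
    (s : Finset ι) (hs : s.Nonempty) (f : ι → Z → ℝ) (hf : ∀ i ∈ s, f i ∈ R) :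
    (fun z => s.sup' hs fun i => f i z) ∈ R := by
  classical
  induction hs using Finset.Nonempty.cons_induction with
  | singleton a => simpa using hf a (Finset.mem_singleton_self a)
  | cons a s ha hs ih =>
    have heq : (fun z => (Finset.cons a s ha).sup' (Finset.cons_nonempty ha) fun i => f i z)
        = fun z => max (f a z) (s.sup' hs fun i => f i z) := by
      funext z
      rw [Finset.sup'_cons]
    rw [heq]
    exact riesz_max h (hf a (Finset.mem_cons_self a s))
      (ih fun i hi => hf i (Finset.mem_cons_of_mem hi))

/-- grid points -/
noncomputable def sgrid (N k : ℕ) : ℝ := -1 + k * (2 / N)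

/-- conified clamp ramps -/
noncomputable def Aramp (N : ℕ) {M : ℕ} (i : Fin M) (k : ℕ) (c : Fin M → ℝ) : ℝ :=
  max (min ((sgrid N k * nrm1 c - c i) / (2 / N)) (nrm1 c)) 0

theorem hdiv_pos {N : ℕ} (hN : 0 < N) : (0:ℝ) < 2 / N := by positivity

theorem sgrid_succ (N k : ℕ) : sgrid N (k+1) = sgrid N k + 2 / N := by
  simp only [sgrid]; push_cast; ring

theorem aramp_mono {N : ℕ} {M : ℕ} (i : Fin M) (k : ℕ) (c : Fin M → ℝ) :
    Aramp N i k c ≤ Aramp N i (k+1) c := by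
  rcases Nat.eq_zero_or_pos N with h0 | hNpos
  · simp [Aramp, h0, sgrid]
  apply max_le_max _ le_rfl
  apply min_le_min _ le_rfl
  rw [div_le_div_iff_of_pos_right (hdiv_pos hNpos)]
  rw [sgrid_succ]
  nlinarith [nrm1_nonneg c, hdiv_pos hNpos]

theorem aramp_zero {N M : ℕ} (i : Fin M) (c : Fin M → ℝ) : Aramp N i 0 c = 0 := by
  have h1 : sgrid N 0 = -1 := by simp [sgrid]
  apply max_eq_right
  refine le_trans (min_le_left _ _) ?_
  apply div_nonpos_of_nonpos_of_nonneg
  · rw [h1]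
    have h2 := (abs_le.mp (abs_le_nrm1 c i)).1
    linarith
  · positivity

theorem aramp_top {N M : ℕ} (hN : 0 < N) (i : Fin M) (c : Fin M → ℝ) :
    Aramp N i (N+1) c = nrm1 c := by
  have hNne : (N:ℝ) ≠ 0 := Nat.cast_ne_zero.mpr (Nat.pos_iff_ne_zero.mp hN)
  have h1 : sgrid N (N+1) = 1 + 2 / N := by
    simp only [sgrid]; push_cast; field_simp; ring
  have h2 : nrm1 c ≤ (sgrid N (N+1) * nrm1 c - c i) / (2 / N) := by
    rw [le_div_iff₀ (hdiv_pos hN), h1]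
    have h3 := (abs_le.mp (abs_le_nrm1 c i)).2
    nlinarith [nrm1_nonneg c]
  rw [Aramp, min_eq_right h2, max_eq_left (nrm1_nonneg c)]

theorem aramp_gap {N M : ℕ} (hN : 0 < N) (i : Fin M) (k : ℕ) (c : Fin M → ℝ)
    (hlt : Aramp N i k c < Aramp N i (k+1) c) :
    |c i - sgrid N k * nrm1 c| < (2 / N) * nrm1 c := by
  have hh := hdiv_pos hN
  have hxy : (sgrid N (k+1) * nrm1 c - c i) / (2/(N:ℝ)) =
      (sgrid N k * nrm1 c - c i) / (2/(N:ℝ)) + nrm1 c := by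
    rw [sgrid_succ]
    field_simp
    ring
  rw [Aramp, Aramp, hxy] at hlt
  set x := (sgrid N k * nrm1 c - c i) / (2 / (N:ℝ)) with hx
  have h1 : 0 < min (x + nrm1 c) (nrm1 c) := by
    by_contra hcon
    push_neg at hcon
    rw [max_eq_right hcon] at hlt
    exact absurd hlt (not_lt.mpr (le_max_right _ _))
  have hρ : 0 < nrm1 c := lt_of_lt_of_le h1 (min_le_right _ _)
  have h2 : x < nrm1 c := by
    by_contra hcon
    push_neg at hcon
    rw [min_eq_right hcon, max_eq_left (le_of_lt hρ)] at hlt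
    have : max (min (x + nrm1 c) (nrm1 c)) 0 ≤ nrm1 c :=
      max_le (min_le_right _ _) (le_of_lt hρ)
    linarith
  have h3 : 0 < x + nrm1 c := lt_of_lt_of_le h1 (min_le_left _ _)
  rw [hx, div_lt_iff₀ hh] at h2
  have h4 : -(nrm1 c) < x := by linarith
  rw [hx, lt_div_iff₀ hh] at h4
  apply abs_lt.mpr
  constructor
  · nlinarith
  · nlinarith

/-- the hat partition of unity -/
noncomputable def hat (N : ℕ) {m : ℕ} (w : Fin (m+1) → Fin (N+1)) (c : Fin (m+1) → ℝ) : ℝ :=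
  max ((Finset.univ.inf' ⟨0, Finset.mem_univ 0⟩ fun i => Aramp N i (w i + 1) c) -
      (Finset.univ.sup' ⟨0, Finset.mem_univ 0⟩ fun i => Aramp N i ((w i : ℕ)) c)) 0

theorem hat_nonneg {N m : ℕ} (w : Fin (m+1) → Fin (N+1)) (c : Fin (m+1) → ℝ) :
    0 ≤ hat N w c := le_max_right _ _

theorem hat_sum {N m : ℕ} (hN : 0 < N) (c : Fin (m+1) → ℝ) :
    ∑ w : Fin (m+1) → Fin (N+1), hat N w c = nrm1 c := by
  exact partition_sum N (nrm1 c) m (fun i k => Aramp N i k c)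
    (fun i k => aramp_mono i k c) (fun i => aramp_zero i c)
    (fun i => aramp_top hN i c)

theorem hat_support {N m : ℕ} (hN : 0 < N) (w : Fin (m+1) → Fin (N+1))
    (c : Fin (m+1) → ℝ) (hpos : 0 < hat N w c) (i : Fin (m+1)) :
    |c i - sgrid N (w i) * nrm1 c| < (2 / N) * nrm1 c := by
  apply aramp_gap hN
  have h1 : 0 < (Finset.univ.inf' ⟨0, Finset.mem_univ 0⟩ fun i => Aramp N i (w i + 1) c) -
      (Finset.univ.sup' ⟨0, Finset.mem_univ 0⟩ fun i => Aramp N i ((w i : ℕ)) c) := by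
    by_contra hcon
    push_neg at hcon
    rw [hat, max_eq_right hcon] at hpos
    exact lt_irrefl 0 hpos
  calc Aramp N i ((w i : ℕ)) c
      ≤ Finset.univ.sup' ⟨0, Finset.mem_univ 0⟩ (fun i => Aramp N i ((w i : ℕ)) c) :=
        Finset.le_sup' (fun i : Fin (m+1) => Aramp N i ((w i : ℕ)) c) (Finset.mem_univ i)
    _ < Finset.univ.inf' ⟨0, Finset.mem_univ 0⟩ (fun i => Aramp N i (w i + 1) c) := by linarith
    _ ≤ Aramp N i (w i + 1) c :=
        Finset.inf'_le (fun i : Fin (m+1) => Aramp N i (w i + 1) c) (Finset.mem_univ i)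

theorem aramp_mem_lam {N M : ℕ} (i : Fin M) (k : ℕ) :
    (Aramp N i k : (Fin M → ℝ) → ℝ) ∈ Lam M := by
  have hR := lam_isRiesz M
  have hlin : (fun c : Fin M → ℝ => (sgrid N k * nrm1 c - c i) / (2 / N)) ∈ Lam M := by
    have : (fun c : Fin M → ℝ => (sgrid N k * nrm1 c - c i) / (2 / N))
        = ((2 / (N:ℝ))⁻¹ • (sgrid N k • (nrm1 : (Fin M → ℝ) → ℝ)
            - (fun c : Fin M → ℝ => c i))) := by
      funext c
      simp only [Pi.smul_apply, Pi.sub_apply, smul_eq_mul]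
      rw [div_eq_inv_mul]
    rw [this]
    exact riesz_smul hR _ (riesz_sub hR (riesz_smul hR _ nrm1_mem_lam) (lam_coord i))
  have hmin : (fun c : Fin M → ℝ =>
      min ((sgrid N k * nrm1 c - c i) / (2 / N)) (nrm1 c)) ∈ Lam M :=
    riesz_min hR hlin nrm1_mem_lam
  have : (Aramp N i k : (Fin M → ℝ) → ℝ) = fun c =>
      max (min ((sgrid N k * nrm1 c - c i) / (2 / N)) (nrm1 c)) ((0 : (Fin M → ℝ) → ℝ) c) := rfl
  rw [this]
  exact riesz_max hR hmin (riesz_zero hR)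

theorem hat_mem_lam {N m : ℕ} (w : Fin (m+1) → Fin (N+1)) :
    (hat N w : (Fin (m+1) → ℝ) → ℝ) ∈ Lam (m+1) := by
  have hR := lam_isRiesz (m+1)
  have h1 : (fun c : Fin (m+1) → ℝ =>
      Finset.univ.inf' ⟨0, Finset.mem_univ 0⟩ fun i => Aramp N i (w i + 1) c) ∈ Lam (m+1) :=
    riesz_inf' hR _ _ _ (fun i _ => aramp_mem_lam i _)
  have h2 : (fun c : Fin (m+1) → ℝ =>
      Finset.univ.sup' ⟨0, Finset.mem_univ 0⟩ fun i => Aramp N i ((w i : ℕ)) c) ∈ Lam (m+1) :=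
    riesz_sup' hR _ _ _ (fun i _ => aramp_mem_lam i _)
  have : (hat N w : (Fin (m+1) → ℝ) → ℝ) = fun c =>
      max (((fun c : Fin (m+1) → ℝ =>
        Finset.univ.inf' ⟨0, Finset.mem_univ 0⟩ fun i => Aramp N i (w i + 1) c)
        - (fun c : Fin (m+1) → ℝ =>
        Finset.univ.sup' ⟨0, Finset.mem_univ 0⟩ fun i => Aramp N i ((w i : ℕ)) c)) c)
      ((0 : (Fin (m+1) → ℝ) → ℝ) c) := rfl
  rw [this]
  exact riesz_max hR (riesz_sub hR h1 h2) (riesz_zero hR)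

end Stmt15
end Hats

section Approx

namespace Stmt15

theorem nrm1_eq_zero {M : ℕ} {c : Fin M → ℝ} (h : nrm1 c = 0) (i : Fin M) : c i = 0 := by
  have := (Finset.sum_eq_zero_iff_of_nonneg (fun j _ => abs_nonneg (c j))).mp h i
    (Finset.mem_univ i)
  exact abs_eq_zero.mp this

/-- Core separable approximation of `Ψ(a ∘ b)` with bilinear error control. -/
theorem lam_tensor_approx {m : ℕ} {Ψ : (Fin (m+1) → ℝ) → ℝ} (hΨ : Ψ ∈ Lam (m+1))
    {ε : ℝ} (hε : 0 < ε) :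
    ∃ (L : ℕ) (φ ψ : Fin L → (Fin (m+1) → ℝ) → ℝ),
      (∀ l, φ l ∈ Lam (m+1)) ∧ (∀ l, ψ l ∈ Lam (m+1)) ∧
      ∀ a b : Fin (m+1) → ℝ,
        |(∑ l, φ l a * ψ l b) - Ψ (fun i => a i * b i)| ≤ ε * (nrm1 a * nrm1 b) := by
  classical
  obtain ⟨C, hC0, hC⟩ := lam_lipschitz hΨ
  obtain ⟨n₀, hn₀⟩ := exists_nat_gt (2 * C / ε)
  set N := n₀ + 1 with hNdef
  have hN : 0 < N := Nat.succ_pos _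
  have hCN : C * (2 / N) ≤ ε := by
    have hNR : (2 * C / ε) < (N : ℝ) := by
      rw [hNdef]
      push_cast
      linarith
    have hNpos : (0:ℝ) < N := by positivity
    rw [div_lt_iff₀ hε] at hNR
    rw [mul_div_assoc']
    rw [div_le_iff₀ hNpos]
    linarith
  set ι := (Fin (m+1) → Fin (N+1)) with hι
  set e := (Fintype.equivFin ι) with he
  refine ⟨Fintype.card ι, fun l => hat N (e.symm l),
    fun l => fun b => Ψ (fun i => sgrid N ((e.symm l) i) * b i), ?_, ?_, ?_⟩
  · intro l
    exact hat_mem_lam _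
  · intro l
    exact lam_comp (lam_isRiesz (m+1))
      (f := fun i => fun b : Fin (m+1) → ℝ => sgrid N ((e.symm l) i) * b i)
      (fun i => by
        show (fun b : Fin (m+1) → ℝ => sgrid N ((e.symm l) i) * b i) ∈ Lam (m+1)
        have : (fun b : Fin (m+1) → ℝ => sgrid N ((e.symm l) i) * b i)
            = sgrid N ((e.symm l) i) • (fun b : Fin (m+1) → ℝ => b i) := by
          funext b; simp
        rw [this]
        exact riesz_smul (lam_isRiesz (m+1)) _ (lam_coord i)) hΨ
  · intro a b
    have hre : (∑ l : Fin (Fintype.card ι), hat N (e.symm l) a *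
          Ψ (fun i => sgrid N ((e.symm l) i) * b i))
        = ∑ w : ι, hat N w a * Ψ (fun i => sgrid N (w i) * b i) := by
      apply Fintype.sum_equiv e.symm
      intro l
      rfl
    rw [hre]
    by_cases ha0 : nrm1 a = 0
    · have hz : ∀ w : ι, hat N w a = 0 := by
        intro w
        have hsum := hat_sum (m := m) hN a
        rw [ha0] at hsum
        exact (Finset.sum_eq_zero_iff_of_nonneg (fun w _ => hat_nonneg w a)).mp hsum w
          (Finset.mem_univ w)
      have hab : (fun i => a i * b i) = (0 : Fin (m+1) → ℝ) := by
        funext i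
        rw [nrm1_eq_zero ha0 i, zero_mul]
        rfl
      rw [hab, lam_zero_eq hΨ]
      have : (∑ w : ι, hat N w a * Ψ (fun i => sgrid N (w i) * b i)) = 0 := by
        apply Finset.sum_eq_zero
        intro w _
        rw [hz w, zero_mul]
      rw [this, ha0]
      simp
    · have hρ : 0 < nrm1 a := lt_of_le_of_ne (nrm1_nonneg a) (Ne.symm ha0)
      set u := fun i => a i / nrm1 a with hu
      have key1 : Ψ (fun i => a i * b i) = nrm1 a * Ψ (fun i => u i * b i) := by
        have h1 : (fun i => a i * b i) = nrm1 a • (fun i => u i * b i) := by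
          funext i
          simp only [Pi.smul_apply, smul_eq_mul, hu]
          field_simp
        rw [h1, lam_poshom hΨ _ (le_of_lt hρ)]
      have key2 : nrm1 a * Ψ (fun i => u i * b i)
          = ∑ w : ι, hat N w a * Ψ (fun i => u i * b i) := by
        rw [← Finset.sum_mul, hat_sum hN a]
      rw [key1, key2, ← Finset.sum_sub_distrib]
      have hterm : ∀ w : ι,
          |hat N w a * Ψ (fun i => sgrid N (w i) * b i) - hat N w a * Ψ (fun i => u i * b i)|
          ≤ hat N w a * (C * ((2 / N) * nrm1 b)) := by
        intro w
        rw [← mul_sub, abs_mul, abs_of_nonneg (hat_nonneg w a)]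
        rcases eq_or_lt_of_le (hat_nonneg w a) with hw0 | hwpos
        · rw [← hw0, zero_mul, zero_mul]
        · apply mul_le_mul_of_nonneg_left _ (hat_nonneg w a)
          calc |Ψ (fun i => sgrid N (w i) * b i) - Ψ (fun i => u i * b i)|
              ≤ C * nrm1 ((fun i => sgrid N (w i) * b i) - fun i => u i * b i) := hC _ _
            _ ≤ C * ((2 / N) * nrm1 b) := by
                apply mul_le_mul_of_nonneg_left _ hC0
                simp only [nrm1]
                rw [Finset.mul_sum]
                apply Finset.sum_le_sum
                intro i _
                have hsupp := hat_support hN w a hwpos i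
                have hui : |sgrid N (w i) - u i| ≤ 2 / N := by
                  have : sgrid N (w i) - u i = -((a i - sgrid N (w i) * nrm1 a) / nrm1 a) := by
                    rw [hu]
                    field_simp
                    ring
                  rw [this, abs_neg, abs_div, abs_of_pos hρ, div_le_iff₀ hρ]
                  exact le_of_lt hsupp
                calc |((fun i => sgrid N (w i) * b i) - fun i => u i * b i) i|
                    = |sgrid N (w i) - u i| * |b i| := by
                      simp only [Pi.sub_apply]
                      rw [← abs_mul]
                      ring_nf
                  _ ≤ (2 / N) * |b i| := by
                      apply mul_le_mul_of_nonneg_right hui (abs_nonneg _)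
      calc |∑ w : ι, (hat N w a * Ψ (fun i => sgrid N (w i) * b i)
              - hat N w a * Ψ (fun i => u i * b i))|
          ≤ ∑ w : ι, |hat N w a * Ψ (fun i => sgrid N (w i) * b i)
              - hat N w a * Ψ (fun i => u i * b i)| := Finset.abs_sum_le_sum_abs _ _
        _ ≤ ∑ w : ι, hat N w a * (C * ((2 / N) * nrm1 b)) :=
            Finset.sum_le_sum fun w _ => hterm w
        _ = nrm1 a * (C * ((2 / N) * nrm1 b)) := by rw [← Finset.sum_mul, hat_sum hN a]
        _ ≤ ε * (nrm1 a * nrm1 b) := by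
            have hb := nrm1_nonneg b
            have ha := nrm1_nonneg a
            nlinarith [mul_le_mul_of_nonneg_right hCN hb]

/-- decreasing separable approximations from above -/
theorem lam_dec_approx {m : ℕ} {Ψ : (Fin (m+1) → ℝ) → ℝ} (hΨ : Ψ ∈ Lam (m+1)) :
    ∃ (L : ℕ → ℕ) (φ ψ : (n : ℕ) → Fin (L n) → (Fin (m+1) → ℝ) → ℝ),
      (∀ n l, φ n l ∈ Lam (m+1)) ∧ (∀ n l, ψ n l ∈ Lam (m+1)) ∧
      (∀ n (a b : Fin (m+1) → ℝ),
        (∑ l, φ (n+1) l a * ψ (n+1) l b) ≤ ∑ l, φ n l a * ψ n l b) ∧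
      (∀ a b : Fin (m+1) → ℝ,
        Tendsto (fun n => ∑ l, φ n l a * ψ n l b) atTop (𝓝 (Ψ (fun i => a i * b i)))) := by
  classical
  have H : ∀ n : ℕ, ∃ (L : ℕ) (φ ψ : Fin L → (Fin (m+1) → ℝ) → ℝ),
      (∀ l, φ l ∈ Lam (m+1)) ∧ (∀ l, ψ l ∈ Lam (m+1)) ∧
      ∀ a b : Fin (m+1) → ℝ,
        |(∑ l, φ l a * ψ l b) - Ψ (fun i => a i * b i)| ≤ ((1:ℝ)/2)^n * (nrm1 a * nrm1 b) :=
    fun n => lam_tensor_approx hΨ (by positivity)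
  choose L₀ φ₀ ψ₀ hφ₀ hψ₀ hest using H
  have hG : ∀ n (a b : Fin (m+1) → ℝ),
      (∑ l : Fin (L₀ n + 1),
        (Fin.snoc (φ₀ n) ((3 * ((1:ℝ)/2)^n) • (nrm1 : (Fin (m+1) → ℝ) → ℝ)) :
          Fin (L₀ n + 1) → (Fin (m+1) → ℝ) → ℝ) l a *
        (Fin.snoc (ψ₀ n) (nrm1 : (Fin (m+1) → ℝ) → ℝ) :
          Fin (L₀ n + 1) → (Fin (m+1) → ℝ) → ℝ) l b)
      = (∑ l, φ₀ n l a * ψ₀ n l b) + (3 * ((1:ℝ)/2)^n) * (nrm1 a * nrm1 b) := by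
    intro n a b
    rw [Fin.sum_univ_castSucc]
    congr 1
    · apply Finset.sum_congr rfl
      intro l _
      rw [Fin.snoc_castSucc, Fin.snoc_castSucc]
    · rw [Fin.snoc_last, Fin.snoc_last]
      simp only [Pi.smul_apply, smul_eq_mul]
      ring
  refine ⟨fun n => L₀ n + 1,
    fun n => Fin.snoc (φ₀ n) ((3 * ((1:ℝ)/2)^n) • (nrm1 : (Fin (m+1) → ℝ) → ℝ)),
    fun n => Fin.snoc (ψ₀ n) (nrm1 : (Fin (m+1) → ℝ) → ℝ), ?_, ?_, ?_, ?_⟩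
  · intro n l
    induction l using Fin.lastCases with
    | last => simpa using riesz_smul (lam_isRiesz _) (3 * ((1:ℝ)/2)^n) nrm1_mem_lam
    | cast l => simpa using hφ₀ n l
  · intro n l
    induction l using Fin.lastCases with
    | last => simpa using nrm1_mem_lam
    | cast l => simpa using hψ₀ n l
  · intro n a b
    dsimp only
    rw [hG n, hG (n+1)]
    have h1 := abs_le.mp (hest n a b)
    have h2 := abs_le.mp (hest (n+1) a b)
    have hE : 0 ≤ nrm1 a * nrm1 b := mul_nonneg (nrm1_nonneg a) (nrm1_nonneg b)
    have hp : ((1:ℝ)/2)^(n+1) = ((1:ℝ)/2)^n * (1/2) := pow_succ _ _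
    nlinarith [h1.1, h1.2, h2.1, h2.2]
  · intro a b
    have hb : ∀ n, |(∑ l, φ₀ n l a * ψ₀ n l b) + (3 * ((1:ℝ)/2)^n) * (nrm1 a * nrm1 b)
        - Ψ (fun i => a i * b i)| ≤ 4 * ((1:ℝ)/2)^n * (nrm1 a * nrm1 b) := by
      intro n
      have h1 := abs_le.mp (hest n a b)
      have hE : 0 ≤ nrm1 a * nrm1 b := mul_nonneg (nrm1_nonneg a) (nrm1_nonneg b)
      rw [abs_le]
      constructor
      · nlinarith [h1.1, pow_nonneg (by norm_num : (0:ℝ) ≤ 1/2) n]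
      · nlinarith [h1.2]
    have hpow : Tendsto (fun n => 4 * ((1:ℝ)/2)^n * (nrm1 a * nrm1 b)) atTop (𝓝 0) := by
      have h0 : Tendsto (fun n => ((1:ℝ)/2)^n) atTop (𝓝 0) :=
        tendsto_pow_atTop_nhds_zero_of_lt_one (by norm_num) (by norm_num)
      have h1 := h0.const_mul (4 : ℝ)
      have h2 := h1.mul_const (nrm1 a * nrm1 b)
      simpa using h2
    have hc : Tendsto (fun _ : ℕ => Ψ (fun i => a i * b i)) atTop
        (𝓝 (Ψ (fun i => a i * b i))) := tendsto_const_nhds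
    have hup := hc.add hpow
    have hlo := hc.sub hpow
    rw [add_zero] at hup
    rw [sub_zero] at hlo
    apply tendsto_of_tendsto_of_tendsto_of_le_of_le hlo hup
    · intro n
      dsimp only
      rw [hG n]
      have := (abs_le.mp (hb n)).1
      linarith
    · intro n
      dsimp only
      rw [hG n]
      have := (abs_le.mp (hb n)).2
      linarith

end Stmt15
end Approx

section Rep

namespace Stmt15

variable {X Y : Type*} {S : Set (X → ℝ)} {T : Set (Y → ℝ)}

/-- representation set: lattice-linear images of tensor coordinates -/
def RepSet (S : Set (X → ℝ)) (T : Set (Y → ℝ)) : Set (X × Y → ℝ) :=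
  {u | ∃ (M : ℕ) (f : Fin M → X → ℝ) (g : Fin M → Y → ℝ) (Ψ : (Fin M → ℝ) → ℝ),
    Ψ ∈ Lam M ∧ (∀ i, f i ∈ S) ∧ (∀ i, g i ∈ T) ∧
    ∀ p : X × Y, u p = Ψ (fun i => f i p.1 * g i p.2)}

theorem repSet_isRiesz (hS : IsRiesz S) (hT : IsRiesz T) : IsRiesz (RepSet S T) := by
  constructor
  · refine ⟨?_, ?_, ?_⟩
    · exact ⟨0, (fun _ => 0), (fun _ => 0), 0, riesz_zero (lam_isRiesz 0),
        fun i => riesz_zero hS, fun i => riesz_zero hT, fun p => rfl⟩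
    · rintro u v ⟨M₁, f₁, g₁, Ψ₁, hΨ₁, hf₁, hg₁, hu⟩ ⟨M₂, f₂, g₂, Ψ₂, hΨ₂, hf₂, hg₂, hv⟩
      refine ⟨M₁ + M₂, Fin.append f₁ f₂, Fin.append g₁ g₂,
        (fun c => Ψ₁ (fun i => c (Fin.castAdd M₂ i)) + Ψ₂ (fun i => c (Fin.natAdd M₁ i))),
        ?_, ?_, ?_, ?_⟩
      · apply riesz_add (lam_isRiesz _)
        · exact lam_comp (lam_isRiesz _) (fun i => lam_coord (Fin.castAdd M₂ i)) hΨ₁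
        · exact lam_comp (lam_isRiesz _) (fun i => lam_coord (Fin.natAdd M₁ i)) hΨ₂
      · intro i
        rcases Nat.lt_or_ge (i : ℕ) M₁ with hi | hi
        · have : i = Fin.castAdd M₂ ⟨i, hi⟩ := rfl
          rw [this, Fin.append_left]; exact hf₁ _
        · have : i = Fin.natAdd M₁ ⟨i - M₁, by omega⟩ := by apply Fin.ext; simp; omega
          rw [this, Fin.append_right]; exact hf₂ _
      · intro i
        rcases Nat.lt_or_ge (i : ℕ) M₁ with hi | hi
        · have : i = Fin.castAdd M₂ ⟨i, hi⟩ := rfl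
          rw [this, Fin.append_left]; exact hg₁ _
        · have : i = Fin.natAdd M₁ ⟨i - M₁, by omega⟩ := by apply Fin.ext; simp; omega
          rw [this, Fin.append_right]; exact hg₂ _
      · intro p
        rw [Pi.add_apply, hu p, hv p]
        congr 1
        · congr 1; funext i; dsimp only; rw [Fin.append_left, Fin.append_left]
        · congr 1; funext i; dsimp only; rw [Fin.append_right, Fin.append_right]
    · rintro c u ⟨M, f, g, Ψ, hΨ, hf, hg, hu⟩
      exact ⟨M, f, g, c • Ψ, riesz_smul (lam_isRiesz _) c hΨ, hf, hg,
        fun p => by rw [Pi.smul_apply, hu p]; rfl⟩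
  · rintro u ⟨M, f, g, Ψ, hΨ, hf, hg, hu⟩
    exact ⟨M, f, g, |Ψ|, riesz_abs (lam_isRiesz _) hΨ, hf, hg,
      fun p => by rw [Pi.abs_apply, hu p]; rfl⟩

theorem tensorSet_subset_repSet : TensorSet S T ⊆ RepSet S T := by
  rintro u ⟨k, g, h, hg, hh, rfl⟩
  refine ⟨k, g, h, (fun c => ∑ i, c i), ?_, hg, hh, ?_⟩
  · apply lam_linear
    constructor
    · intro c d; rw [← Finset.sum_add_distrib]; rfl
    · intro c d; rw [Finset.smul_sum]; rfl
  · intro p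
    rw [Finset.sum_apply]
    rfl

theorem rgen_subset_repSet (hS : IsRiesz S) (hT : IsRiesz T) :
    RGen (TensorSet S T) ⊆ RepSet S T :=
  rgen_subset (repSet_isRiesz hS hT) tensorSet_subset_repSet

/-- Lemma M: every element of the generated Riesz space is a pointwise decreasing
limit of a sequence from the tensor set. -/
theorem dec_approx (hS : IsRiesz S) (hT : IsRiesz T) {u : X × Y → ℝ}
    (hu : u ∈ RGen (TensorSet S T)) :
    ∃ v : ℕ → X × Y → ℝ, (∀ n, v n ∈ TensorSet S T) ∧
      (∀ n p, v (n+1) p ≤ v n p) ∧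
      (∀ p, Tendsto (fun n => v n p) atTop (𝓝 (u p))) := by
  obtain ⟨M, f, g, Ψ, hΨ, hf, hg, hurep⟩ := rgen_subset_repSet hS hT hu
  match M, f, g, Ψ, hΨ, hf, hg, hurep with
  | 0, f, g, Ψ, hΨ, hf, hg, hurep =>
    have hu0 : ∀ p, u p = 0 := by
      intro p
      rw [hurep p]
      have : (fun i : Fin 0 => f i p.1 * g i p.2) = (0 : Fin 0 → ℝ) := by
        funext i; exact i.elim0
      rw [this, lam_zero_eq hΨ]
    refine ⟨fun _ => 0, fun _ => tensorSet_zero, fun n p => le_rfl, fun p => ?_⟩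
    rw [hu0 p]
    simpa using tendsto_const_nhds
  | (m+1), f, g, Ψ, hΨ, hf, hg, hurep =>
    obtain ⟨L, φ, ψ, hφ, hψ, hdec, hconv⟩ := lam_dec_approx hΨ
    refine ⟨fun n => fun p => ∑ l, φ n l (fun i => f i p.1) * ψ n l (fun i => g i p.2),
      ?_, ?_, ?_⟩
    · intro n
      refine ⟨L n, fun l => fun x => φ n l (fun i => f i x),
        fun l => fun y => ψ n l (fun i => g i y), ?_, ?_, ?_⟩
      · exact fun l => lam_comp hS hf (hφ n l)
      · exact fun l => lam_comp hT hg (hψ n l)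
      · funext p
        rw [Finset.sum_apply]
        rfl
    · intro n p
      exact hdec n _ _
    · intro p
      rw [hurep p]
      exact hconv _ _

theorem inc_approx (hS : IsRiesz S) (hT : IsRiesz T) {u : X × Y → ℝ}
    (hu : u ∈ RGen (TensorSet S T)) :
    ∃ v : ℕ → X × Y → ℝ, (∀ n, v n ∈ TensorSet S T) ∧
      (∀ n p, v n p ≤ v (n+1) p) ∧
      (∀ p, Tendsto (fun n => v n p) atTop (𝓝 (u p))) := by
  have hnu : -u ∈ RGen (TensorSet S T) := riesz_neg (rgen_isRiesz _) hu
  obtain ⟨w, hwmem, hwdec, hwconv⟩ := dec_approx hS hT hnu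
  refine ⟨fun n => -(w n), fun n => tensorSet_neg hS (hwmem n), ?_, ?_⟩
  · intro n p
    have := hwdec n p
    simp only [Pi.neg_apply]
    linarith
  · intro p
    have := (hwconv p).neg
    simp only [Pi.neg_apply, neg_neg] at this ⊢
    exact this

end Stmt15
end Rep

section Integral

namespace Stmt15

variable {X Y : Type*} {S : Set (X → ℝ)} {T : Set (Y → ℝ)}
  {J : (X → ℝ) → ℝ} {K : (Y → ℝ) → ℝ}

/-- partial integral in the second variable -/
noncomputable def kap (K : (Y → ℝ) → ℝ) (u : X × Y → ℝ) : X → ℝ :=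
  fun x => K (fun y => u (x, y))

theorem sect_mem (hT : IsRiesz T) {u : X × Y → ℝ}
    (hu : u ∈ RGen (TensorSet S T)) (x : X) : (fun y => u (x, y)) ∈ T := by
  refine rgen_subset (R := {u : X × Y → ℝ | ∀ x, (fun y => u (x, y)) ∈ T}) ?_ ?_ hu x
  · refine ⟨⟨?_, ?_, ?_⟩, ?_⟩
    · intro x
      exact riesz_zero hT
    · intro u v hu hv x
      have : (fun y => (u + v) (x, y)) = (fun y => u (x, y)) + (fun y => v (x, y)) := rfl
      rw [this]
      exact riesz_add hT (hu x) (hv x)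
    · intro c u hu x
      have : (fun y => (c • u) (x, y)) = c • (fun y => u (x, y)) := rfl
      rw [this]
      exact riesz_smul hT c (hu x)
    · intro u hu x
      have : (fun y => |u| (x, y)) = |(fun y => u (x, y))| := rfl
      rw [this]
      exact riesz_abs hT (hu x)
  · rintro u ⟨k, f, g, hf, hg, rfl⟩ x
    have : (fun y => (∑ i, tensor (f i) (g i)) (x, y)) = ∑ i : Fin k, (f i x) • g i := by
      funext y
      rw [Finset.sum_apply, Finset.sum_apply]
      apply Finset.sum_congr rfl
      intro i _
      rfl
    rw [this]
    exact riesz_sum hT _ _ fun i _ => riesz_smul hT _ (hg i)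

theorem sect_mem_tensor (hT : IsRiesz T) {v : X × Y → ℝ}
    (hv : v ∈ TensorSet S T) (x : X) : (fun y => v (x, y)) ∈ T :=
  sect_mem hT (subset_rgen _ hv) x

theorem kap_tensor (hK : IsDaniell T K) {k : ℕ} (f : Fin k → X → ℝ) (g : Fin k → Y → ℝ)
    (hg : ∀ i, g i ∈ T) :
    kap K (∑ i, tensor (f i) (g i)) = ∑ i : Fin k, (K (g i)) • f i := by
  funext x
  have h1 : (fun y => (∑ i, tensor (f i) (g i)) (x, y)) = ∑ i : Fin k, (f i x) • g i := by
    funext y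
    rw [Finset.sum_apply, Finset.sum_apply]
    apply Finset.sum_congr rfl
    intro i _
    rfl
  rw [kap, h1, dan_sum hK _ _ (fun i _ => riesz_smul hK.1 _ (hg i)), Finset.sum_apply]
  apply Finset.sum_congr rfl
  intro i _
  rw [dan_smul hK _ (hg i)]
  simp only [Pi.smul_apply, smul_eq_mul]
  ring

theorem kap_mem (hS : IsRiesz S) (hK : IsDaniell T K) {v : X × Y → ℝ}
    (hv : v ∈ TensorSet S T) : kap K v ∈ S := by
  obtain ⟨k, f, g, hf, hg, rfl⟩ := hv
  rw [kap_tensor hK f g hg]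
  exact riesz_sum hS _ _ fun i _ => riesz_smul hS _ (hf i)

theorem kap_mono (hT : IsRiesz T) (hK : IsDaniell T K) {u v : X × Y → ℝ}
    (hu : ∀ x, (fun y => u (x, y)) ∈ T) (hv : ∀ x, (fun y => v (x, y)) ∈ T)
    (h : ∀ p, u p ≤ v p) (x : X) : kap K u x ≤ kap K v x :=
  dan_mono hK (hu x) (hv x) (fun y => h (x, y))

theorem kap_add (hT : IsRiesz T) (hK : IsDaniell T K) {u v : X × Y → ℝ}
    (hu : ∀ x, (fun y => u (x, y)) ∈ T) (hv : ∀ x, (fun y => v (x, y)) ∈ T) :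
    kap K (u + v) = kap K u + kap K v := by
  funext x
  have : (fun y => (u + v) (x, y)) = (fun y => u (x, y)) + (fun y => v (x, y)) := rfl
  rw [Pi.add_apply, kap, kap, kap, this, dan_add hK (hu x) (hv x)]

/-- limit of K on sections along a decreasing tensor approximation -/
theorem kap_tendsto (hT : IsRiesz T) (hK : IsDaniell T K) {u : X × Y → ℝ}
    (hu : u ∈ RGen (TensorSet S T)) {v : ℕ → X × Y → ℝ}
    (hvmem : ∀ n, v n ∈ TensorSet S T) (hdec : ∀ n p, v (n+1) p ≤ v n p)
    (hconv : ∀ p, Tendsto (fun n => v n p) atTop (𝓝 (u p))) (x : X) :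
    Tendsto (fun n => kap K (v n) x) atTop (𝓝 (kap K u x)) := by
  have hanti : ∀ p, Antitone (fun n => v n p) :=
    fun p => antitone_nat_of_succ_le (fun n => hdec n p)
  have hge : ∀ n p, u p ≤ v n p := by
    intro n p
    apply le_of_tendsto (hconv p)
    filter_upwards [eventually_ge_atTop n] with m hm
    exact hanti p hm
  set F : ℕ → Y → ℝ := fun n => fun y => v n (x, y) - u (x, y) with hF
  have hFmem : ∀ n, F n ∈ T := fun n =>
    riesz_sub hT (sect_mem_tensor hT (hvmem n) x) (sect_mem hT hu x)
  have hFnonneg : ∀ n, (0:Y → ℝ) ≤ F (n+1) := by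
    intro n
    intro y
    simp only [hF, Pi.zero_apply, sub_nonneg]
    exact hge (n+1) (x, y)
  have hFdec : ∀ n, F (n+1) ≤ F n := by
    intro n y
    simp only [hF]
    have := hdec n (x, y)
    linarith
  have hFconv : ∀ y, Tendsto (fun n => F n y) atTop (𝓝 0) := by
    intro y
    have := (hconv (x, y)).sub_const (u (x, y))
    simpa [hF] using this
  have hKlim := hK.2.2.2.2 F hFmem hFnonneg hFdec hFconv
  have heq : ∀ n, kap K (v n) x = kap K u x + K (F n) := by
    intro n
    have hsect : (fun y => v n (x, y)) = (fun y => u (x, y)) + F n := by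
      funext y
      simp [hF]
    rw [kap, hsect, dan_add hK (sect_mem hT hu x) (hFmem n)]
    rfl
  have : Tendsto (fun n => kap K u x + K (F n)) atTop (𝓝 (kap K u x + 0)) :=
    tendsto_const_nhds.add hKlim
  rw [add_zero] at this
  exact this.congr (fun n => (heq n).symm)

/-- increasing version -/
theorem kap_tendsto_inc (hT : IsRiesz T) (hK : IsDaniell T K) {u : X × Y → ℝ}
    (hu : u ∈ RGen (TensorSet S T)) {v : ℕ → X × Y → ℝ}
    (hvmem : ∀ n, v n ∈ TensorSet S T) (hinc : ∀ n p, v n p ≤ v (n+1) p)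
    (hconv : ∀ p, Tendsto (fun n => v n p) atTop (𝓝 (u p))) (x : X) :
    Tendsto (fun n => kap K (v n) x) atTop (𝓝 (kap K u x)) := by
  have hmono : ∀ p, Monotone (fun n => v n p) :=
    fun p => monotone_nat_of_le_succ (fun n => hinc n p)
  have hle : ∀ n p, v n p ≤ u p := by
    intro n p
    apply ge_of_tendsto (hconv p)
    filter_upwards [eventually_ge_atTop n] with m hm
    exact hmono p hm
  set F : ℕ → Y → ℝ := fun n => fun y => u (x, y) - v n (x, y) with hF
  have hFmem : ∀ n, F n ∈ T := fun n =>
    riesz_sub hT (sect_mem hT hu x) (sect_mem_tensor hT (hvmem n) x)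
  have hFnonneg : ∀ n, (0:Y → ℝ) ≤ F (n+1) := by
    intro n y
    simp only [hF, Pi.zero_apply, sub_nonneg]
    exact hle (n+1) (x, y)
  have hFdec : ∀ n, F (n+1) ≤ F n := by
    intro n y
    simp only [hF]
    have := hinc n (x, y)
    linarith
  have hFconv : ∀ y, Tendsto (fun n => F n y) atTop (𝓝 0) := by
    intro y
    have := (hconv (x, y)).const_sub (u (x, y))
    simpa [hF] using this
  have hKlim := hK.2.2.2.2 F hFmem hFnonneg hFdec hFconv
  have heq : ∀ n, kap K (v n) x = kap K u x - K (F n) := by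
    intro n
    have hsect : (fun y => v n (x, y)) = (fun y => u (x, y)) - F n := by
      funext y
      simp [hF]
    rw [kap, hsect, dan_sub hK (sect_mem hT hu x) (hFmem n)]
    rfl
  have : Tendsto (fun n => kap K u x - K (F n)) atTop (𝓝 (kap K u x - 0)) :=
    tendsto_const_nhds.sub hKlim
  rw [sub_zero] at this
  exact this.congr (fun n => (heq n).symm)

/-- existence of decreasing limits of J -/
theorem jlim_exists (hJ : IsDaniell S J) {f : ℕ → X → ℝ} (hf : ∀ n, f n ∈ S)
    (hdec : ∀ n x, f (n+1) x ≤ f n x) {ℓ : X → ℝ} (hℓ : ℓ ∈ S)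
    (hlb : ∀ n x, ℓ x ≤ f n x) :
    Tendsto (fun n => J (f n)) atTop (𝓝 (⨅ n, J (f n))) := by
  apply tendsto_atTop_ciInf
  · exact antitone_nat_of_succ_le fun n => dan_mono hJ (hf (n+1)) (hf n) (hdec n)
  · refine ⟨J ℓ, ?_⟩
    rintro r ⟨n, rfl⟩
    exact dan_mono hJ hℓ (hf n) (hlb n)

/-- comparison of decreasing limits of J -/
theorem jlim_le (hJ : IsDaniell S J) {f g : ℕ → X → ℝ}
    (hf : ∀ n, f n ∈ S) (hg : ∀ n, g n ∈ S)
    (hfdec : ∀ n x, f (n+1) x ≤ f n x) (hgdec : ∀ n x, g (n+1) x ≤ g n x)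
    {F G : X → ℝ}
    (hFconv : ∀ x, Tendsto (fun n => f n x) atTop (𝓝 (F x)))
    (hGconv : ∀ x, Tendsto (fun n => g n x) atTop (𝓝 (G x)))
    (hFG : ∀ x, F x ≤ G x)
    {ℓf : X → ℝ} (hℓf : ℓf ∈ S) (hlbf : ∀ n x, ℓf x ≤ f n x) :
    (⨅ n, J (f n)) ≤ ⨅ n, J (g n) := by
  have hganti : ∀ x, Antitone (fun n => g n x) :=
    fun x => antitone_nat_of_succ_le (fun n => hgdec n x)
  have hgge : ∀ m x, G x ≤ g m x := by
    intro m x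
    apply le_of_tendsto (hGconv x)
    filter_upwards [eventually_ge_atTop m] with k hk
    exact hganti x hk
  have hbdd : BddBelow (Set.range fun n => J (f n)) := by
    refine ⟨J ℓf, ?_⟩
    rintro r ⟨n, rfl⟩
    exact dan_mono hJ hℓf (hf n) (hlbf n)
  apply le_ciInf
  intro m
  set D : ℕ → X → ℝ := fun n => (fun x => max (f n x) (g m x)) - g m with hD
  have hDmem : ∀ n, D n ∈ S := fun n =>
    riesz_sub hJ.1 (riesz_max hJ.1 (hf n) (hg m)) (hg m)
  have hDnonneg : ∀ n, (0:X→ℝ) ≤ D (n+1) := by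
    intro n x
    simp only [hD, Pi.zero_apply, Pi.sub_apply, sub_nonneg]
    exact le_max_right _ _
  have hDdec : ∀ n, D (n+1) ≤ D n := by
    intro n x
    simp only [hD, Pi.sub_apply]
    have := hfdec n x
    have h2 : max (f (n+1) x) (g m x) ≤ max (f n x) (g m x) :=
      max_le_max this le_rfl
    linarith
  have hDconv : ∀ x, Tendsto (fun n => D n x) atTop (𝓝 0) := by
    intro x
    have h1 : Tendsto (fun n => max (f n x) (g m x)) atTop (𝓝 (max (F x) (g m x))) :=
      (hFconv x).max tendsto_const_nhds
    have h2 : max (F x) (g m x) = g m x :=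
      max_eq_right (le_trans (hFG x) (hgge m x))
    rw [h2] at h1
    have := h1.sub_const (g m x)
    simpa [hD] using this
  have hJD := hJ.2.2.2.2 D hDmem hDnonneg hDdec hDconv
  have hfD : ∀ n, J (f n) ≤ J (D n) + J (g m) := by
    intro n
    have h1 : J (D n) + J (g m) = J (D n + g m) :=
      (dan_add hJ (hDmem n) (hg m)).symm
    rw [h1]
    apply dan_mono hJ (hf n) (riesz_add hJ.1 (hDmem n) (hg m))
    intro x
    simp only [hD, Pi.add_apply, Pi.sub_apply]
    have := le_max_left (f n x) (g m x)
    linarith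
  have hlim : Tendsto (fun n => J (D n) + J (g m)) atTop (𝓝 (J (g m))) := by
    have := hJD.add_const (J (g m))
    simpa using this
  apply ge_of_tendsto hlim
  filter_upwards with n
  exact le_trans (ciInf_le hbdd n) (hfD n)

/-- decreasing and increasing sequences with a common limit give the same J-limit -/
theorem jlim_inc (hJ : IsDaniell S J) {f g : ℕ → X → ℝ}
    (hf : ∀ n, f n ∈ S) (hg : ∀ n, g n ∈ S)
    (hfdec : ∀ n x, f (n+1) x ≤ f n x) (hginc : ∀ n x, g n x ≤ g (n+1) x)
    {F : X → ℝ}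
    (hFconv : ∀ x, Tendsto (fun n => f n x) atTop (𝓝 (F x)))
    (hGconv : ∀ x, Tendsto (fun n => g n x) atTop (𝓝 (F x))) :
    Tendsto (fun n => J (g n)) atTop (𝓝 (⨅ n, J (f n))) := by
  have hfanti : ∀ x, Antitone (fun n => f n x) :=
    fun x => antitone_nat_of_succ_le (fun n => hfdec n x)
  have hgmono : ∀ x, Monotone (fun n => g n x) :=
    fun x => monotone_nat_of_le_succ (fun n => hginc n x)
  have hgF : ∀ m x, g m x ≤ F x := by
    intro m x
    apply ge_of_tendsto (hGconv x)
    filter_upwards [eventually_ge_atTop m] with k hk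
    exact hgmono x hk
  have hFf : ∀ n x, F x ≤ f n x := by
    intro n x
    apply le_of_tendsto (hFconv x)
    filter_upwards [eventually_ge_atTop n] with k hk
    exact hfanti x hk
  have hgf : ∀ n x, g n x ≤ f n x := fun n x => le_trans (hgF n x) (hFf n x)
  have hJf : Tendsto (fun n => J (f n)) atTop (𝓝 (⨅ n, J (f n))) :=
    jlim_exists hJ hf hfdec (hg 0) (fun n x => le_trans (hgmono x (Nat.zero_le n)) (hgf n x))
  set D : ℕ → X → ℝ := fun n => f n - g n with hD
  have hDmem : ∀ n, D n ∈ S := fun n => riesz_sub hJ.1 (hf n) (hg n)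
  have hDnonneg : ∀ n, (0:X→ℝ) ≤ D (n+1) := by
    intro n x
    simp only [hD, Pi.zero_apply, Pi.sub_apply, sub_nonneg]
    exact hgf (n+1) x
  have hDdec : ∀ n, D (n+1) ≤ D n := by
    intro n x
    simp only [hD, Pi.sub_apply]
    have h1 := hfdec n x
    have h2 := hginc n x
    linarith
  have hDconv : ∀ x, Tendsto (fun n => D n x) atTop (𝓝 0) := by
    intro x
    have := (hFconv x).sub (hGconv x)
    simpa [hD] using this
  have hJD := hJ.2.2.2.2 D hDmem hDnonneg hDdec hDconv
  have heq : ∀ n, J (g n) = J (f n) - J (D n) := by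
    intro n
    rw [hD]
    rw [dan_sub hJ (hf n) (hg n)]
    ring
  have : Tendsto (fun n => J (f n) - J (D n)) atTop (𝓝 ((⨅ n, J (f n)) - 0)) :=
    hJf.sub hJD
  rw [sub_zero] at this
  exact this.congr (fun n => (heq n).symm)

end Stmt15
end Integral

section Main

namespace Stmt15

variable {X Y : Type*} {S : Set (X → ℝ)} {T : Set (Y → ℝ)}
  {J : (X → ℝ) → ℝ} {K : (Y → ℝ) → ℝ}

theorem dec_ge {α : Type*} {v : ℕ → α → ℝ} {u : α → ℝ}
    (hdec : ∀ n p, v (n+1) p ≤ v n p)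
    (hconv : ∀ p, Tendsto (fun n => v n p) atTop (𝓝 (u p))) (n : ℕ) (p : α) :
    u p ≤ v n p := by
  have hanti : Antitone (fun m => v m p) := antitone_nat_of_succ_le (fun m => hdec m p)
  apply le_of_tendsto (hconv p)
  filter_upwards [eventually_ge_atTop n] with m hm
  exact hanti hm

theorem inc_le {α : Type*} {v : ℕ → α → ℝ} {u : α → ℝ}
    (hinc : ∀ n p, v n p ≤ v (n+1) p)
    (hconv : ∀ p, Tendsto (fun n => v n p) atTop (𝓝 (u p))) (n : ℕ) (p : α) :
    v n p ≤ u p := by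
  have hmono : Monotone (fun m => v m p) := monotone_nat_of_le_succ (fun m => hinc m p)
  apply ge_of_tendsto (hconv p)
  filter_upwards [eventually_ge_atTop n] with m hm
  exact hmono hm

theorem main_spec (hS : IsRiesz S) (hT : IsRiesz T) (hJ : IsDaniell S J)
    (hK : IsDaniell T K) {u : X × Y → ℝ} (hu : u ∈ RGen (TensorSet S T)) :
    ∃ Lval : ℝ, ∀ v : ℕ → X × Y → ℝ, (∀ n, v n ∈ TensorSet S T) →
      (∀ n p, v (n+1) p ≤ v n p) →
      (∀ p, Tendsto (fun n => v n p) atTop (𝓝 (u p))) →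
      Tendsto (fun n => J (kap K (v n))) atTop (𝓝 Lval) := by
  obtain ⟨v₀, hv₀mem, hv₀dec, hv₀conv⟩ := dec_approx hS hT hu
  obtain ⟨w₀, hw₀mem, hw₀inc, hw₀conv⟩ := inc_approx hS hT hu
  have hwle : ∀ p, w₀ 0 p ≤ u p := inc_le hw₀inc hw₀conv 0
  refine ⟨⨅ n, J (kap K (v₀ n)), ?_⟩
  intro v hvmem hvdec hvconv
  set ℓ := kap K (w₀ 0) with hℓdef
  have hℓmem : ℓ ∈ S := kap_mem hS hK (hw₀mem 0)
  -- general facts for any decreasing approximation of u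
  have hfacts : ∀ (a : ℕ → X × Y → ℝ), (∀ n, a n ∈ TensorSet S T) →
      (∀ n p, a (n+1) p ≤ a n p) →
      (∀ p, Tendsto (fun n => a n p) atTop (𝓝 (u p))) →
      (∀ n, kap K (a n) ∈ S) ∧
      (∀ n x, kap K (a (n+1)) x ≤ kap K (a n) x) ∧
      (∀ x, Tendsto (fun n => kap K (a n) x) atTop (𝓝 (kap K u x))) ∧
      (∀ n x, ℓ x ≤ kap K (a n) x) := by
    intro a hamem hadec haconv
    refine ⟨fun n => kap_mem hS hK (hamem n), ?_, kap_tendsto hT hK hu hamem hadec haconv, ?_⟩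
    · intro n x
      exact kap_mono hT hK (sect_mem_tensor hT (hamem (n+1))) (sect_mem_tensor hT (hamem n))
        (hadec n) x
    · intro n x
      apply kap_mono hT hK (sect_mem_tensor hT (hw₀mem 0)) (sect_mem_tensor hT (hamem n)) ?_ x
      intro p
      exact le_trans (hwle p) (dec_ge hadec haconv n p)
  obtain ⟨h1a, h2a, h3a, h4a⟩ := hfacts v₀ hv₀mem hv₀dec hv₀conv
  obtain ⟨h1b, h2b, h3b, h4b⟩ := hfacts v hvmem hvdec hvconv
  have hiff : (⨅ n, J (kap K (v n))) = ⨅ n, J (kap K (v₀ n)) := by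
    apply le_antisymm
    · exact jlim_le hJ h1b h1a h2b h2a h3b h3a (fun x => le_rfl) hℓmem h4b
    · exact jlim_le hJ h1a h1b h2a h2b h3a h3b (fun x => le_rfl) hℓmem h4a
  rw [← hiff]
  exact jlim_exists hJ h1b h2b hℓmem h4b

end Stmt15
end Main

section Final

namespace Stmt15

variable {X Y : Type*} {S : Set (X → ℝ)} {T : Set (Y → ℝ)}
  {J : (X → ℝ) → ℝ} {K : (Y → ℝ) → ℝ}

theorem kap_tensor_single (hK : IsDaniell T K) (f : X → ℝ) {g : Y → ℝ} (hg : g ∈ T) :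
    kap K (tensor f g) = (K g) • f := by
  funext x
  have h1 : (fun y => tensor f g (x, y)) = (f x) • g := rfl
  rw [kap, h1, dan_smul hK _ hg, Pi.smul_apply, smul_eq_mul, mul_comm]

theorem kap_smul (hT : IsRiesz T) (hK : IsDaniell T K) (c : ℝ) {v : X × Y → ℝ}
    (hsect : ∀ x, (fun y => v (x, y)) ∈ T) : kap K (c • v) = c • kap K v := by
  funext x
  have h1 : (fun y => (c • v) (x, y)) = c • (fun y => v (x, y)) := rfl
  rw [Pi.smul_apply, kap, kap, h1, dan_smul hK _ (hsect x)]
  rfl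

theorem i'_val (hS : IsRiesz S) (hJ : IsDaniell S J) (hK : IsDaniell T K)
    {I' : (X × Y → ℝ) → ℝ} (hI' : IsDaniell (RGen (TensorSet S T)) I')
    (htens : ∀ f ∈ S, ∀ g ∈ T, I' (tensor f g) = J f * K g)
    {v : X × Y → ℝ} (hv : v ∈ TensorSet S T) : I' v = J (kap K v) := by
  obtain ⟨k, f, g, hf, hg, rfl⟩ := hv
  rw [kap_tensor hK f g hg]
  rw [dan_sum hI' _ _ (fun i _ => subset_rgen _ (tensorSet_mem (hf i) (hg i)))]
  rw [dan_sum hJ _ _ (fun i _ => riesz_smul hS _ (hf i))]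
  apply Finset.sum_congr rfl
  intro i _
  rw [htens (f i) (hf i) (g i) (hg i), dan_smul hJ _ (hf i), mul_comm]

end Stmt15
end Final



open Stmt15 in
theorem stmt15 {X Y : Type*} (S : Set (X → ℝ)) (T : Set (Y → ℝ))
    (J : (X → ℝ) → ℝ) (K : (Y → ℝ) → ℝ)
    (hS : IsRiesz S) (hT : IsRiesz T)
    (hJ : IsDaniell S J) (hK : IsDaniell T K) :
    ∃ I : (X × Y → ℝ) → ℝ, IsDaniell (RGen (TensorSet S T)) I ∧
      (∀ f ∈ S, ∀ g ∈ T, I (tensor f g) = J f * K g) ∧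
      ∀ I' : (X × Y → ℝ) → ℝ, IsDaniell (RGen (TensorSet S T)) I' →
        (∀ f ∈ S, ∀ g ∈ T, I' (tensor f g) = J f * K g) →
        ∀ h ∈ RGen (TensorSet S T), I' h = I h := by
  classical
  have hR : IsRiesz (RGen (TensorSet S T)) := rgen_isRiesz _
  set Ifun : (X × Y → ℝ) → ℝ := fun u =>
    if h : u ∈ RGen (TensorSet S T) then (Stmt15.main_spec hS hT hJ hK h).choose else 0
    with hIdef
  have hspec : ∀ {u : X × Y → ℝ}, u ∈ RGen (TensorSet S T) →
      ∀ v : ℕ → X × Y → ℝ, (∀ n, v n ∈ TensorSet S T) →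
      (∀ n p, v (n+1) p ≤ v n p) →
      (∀ p, Filter.Tendsto (fun n => v n p) Filter.atTop (nhds (u p))) →
      Filter.Tendsto (fun n => J (Stmt15.kap K (v n))) Filter.atTop (nhds (Ifun u)) := by
    intro u hu v h1 h2 h3
    have he : Ifun u = (Stmt15.main_spec hS hT hJ hK hu).choose := by
      simp only [hIdef]
      rw [dif_pos hu]
    rw [he]
    exact (Stmt15.main_spec hS hT hJ hK hu).choose_spec v h1 h2 h3
  -- increasing version of the spec
  have hspec_inc : ∀ {u : X × Y → ℝ}, u ∈ RGen (TensorSet S T) →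
      ∀ w : ℕ → X × Y → ℝ, (∀ n, w n ∈ TensorSet S T) →
      (∀ n p, w n p ≤ w (n+1) p) →
      (∀ p, Filter.Tendsto (fun n => w n p) Filter.atTop (nhds (u p))) →
      Filter.Tendsto (fun n => J (Stmt15.kap K (w n))) Filter.atTop (nhds (Ifun u)) := by
    intro u hu w hwmem hwinc hwconv
    obtain ⟨a, hamem, hadec, haconv⟩ := Stmt15.dec_approx hS hT hu
    have hfmem : ∀ n, Stmt15.kap K (a n) ∈ S := fun n => Stmt15.kap_mem hS hK (hamem n)
    have hgmem : ∀ n, Stmt15.kap K (w n) ∈ S := fun n => Stmt15.kap_mem hS hK (hwmem n)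
    have hfdec : ∀ n x, Stmt15.kap K (a (n+1)) x ≤ Stmt15.kap K (a n) x := fun n x =>
      Stmt15.kap_mono hT hK (Stmt15.sect_mem_tensor hT (hamem (n+1)))
        (Stmt15.sect_mem_tensor hT (hamem n)) (hadec n) x
    have hginc : ∀ n x, Stmt15.kap K (w n) x ≤ Stmt15.kap K (w (n+1)) x := fun n x =>
      Stmt15.kap_mono hT hK (Stmt15.sect_mem_tensor hT (hwmem n))
        (Stmt15.sect_mem_tensor hT (hwmem (n+1))) (hwinc n) x
    have hfconv := Stmt15.kap_tendsto hT hK hu hamem hadec haconv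
    have hgconv := Stmt15.kap_tendsto_inc hT hK hu hwmem hwinc hwconv
    have hJg := Stmt15.jlim_inc hJ hfmem hgmem hfdec hginc hfconv hgconv
    have hlb : ∀ n x, Stmt15.kap K (w 0) x ≤ Stmt15.kap K (a n) x := by
      intro n x
      apply Stmt15.kap_mono hT hK (Stmt15.sect_mem_tensor hT (hwmem 0))
        (Stmt15.sect_mem_tensor hT (hamem n)) ?_ x
      intro p
      exact le_trans (Stmt15.inc_le hwinc hwconv 0 p) (Stmt15.dec_ge hadec haconv n p)
    have hJf₁ := Stmt15.jlim_exists hJ hfmem hfdec (hgmem 0) hlb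
    have hJf₂ := hspec hu a hamem hadec haconv
    have heq : (⨅ n, J (Stmt15.kap K (a n))) = Ifun u := tendsto_nhds_unique hJf₁ hJf₂
    rw [← heq]
    exact hJg
  refine ⟨Ifun, ⟨hR, ?_, ?_, ?_, ?_⟩, ?_, ?_⟩
  · -- additivity
    intro u v hu hv
    obtain ⟨a, ha1, ha2, ha3⟩ := Stmt15.dec_approx hS hT hu
    obtain ⟨b, hb1, hb2, hb3⟩ := Stmt15.dec_approx hS hT hv
    have hsum := hspec (riesz_add hR hu hv) (fun n => a n + b n)
      (fun n => Stmt15.tensorSet_add (ha1 n) (hb1 n))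
      (fun n p => by
        simp only [Pi.add_apply]
        exact add_le_add (ha2 n p) (hb2 n p))
      (fun p => by
        have := (ha3 p).add (hb3 p)
        simpa using this)
    have heq : ∀ n, J (Stmt15.kap K (a n + b n))
        = J (Stmt15.kap K (a n)) + J (Stmt15.kap K (b n)) := by
      intro n
      rw [Stmt15.kap_add hT hK (Stmt15.sect_mem_tensor hT (ha1 n))
        (Stmt15.sect_mem_tensor hT (hb1 n)),
        dan_add hJ (Stmt15.kap_mem hS hK (ha1 n)) (Stmt15.kap_mem hS hK (hb1 n))]
    have h2 := (hspec hu a ha1 ha2 ha3).add (hspec hv b hb1 hb2 hb3)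
    exact tendsto_nhds_unique (hsum.congr heq) h2
  · -- homogeneity
    intro c u hu
    rcases le_or_gt 0 c with hc | hc
    · obtain ⟨a, ha1, ha2, ha3⟩ := Stmt15.dec_approx hS hT hu
      have hsm := hspec (riesz_smul hR c hu) (fun n => c • a n)
        (fun n => Stmt15.tensorSet_smul hS c (ha1 n))
        (fun n p => by
          simp only [Pi.smul_apply, smul_eq_mul]
          exact mul_le_mul_of_nonneg_left (ha2 n p) hc)
        (fun p => by
          have := (ha3 p).const_mul c
          simpa using this)
      have heq : ∀ n, J (Stmt15.kap K (c • a n)) = c * J (Stmt15.kap K (a n)) := by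
        intro n
        rw [Stmt15.kap_smul hT hK c (Stmt15.sect_mem_tensor hT (ha1 n)),
          dan_smul hJ c (Stmt15.kap_mem hS hK (ha1 n))]
      have h2 := (hspec hu a ha1 ha2 ha3).const_mul c
      exact tendsto_nhds_unique (hsm.congr heq) h2
    · obtain ⟨w, hw1, hw2, hw3⟩ := Stmt15.inc_approx hS hT hu
      have hsm := hspec (riesz_smul hR c hu) (fun n => c • w n)
        (fun n => Stmt15.tensorSet_smul hS c (hw1 n))
        (fun n p => by
          simp only [Pi.smul_apply, smul_eq_mul]
          exact mul_le_mul_of_nonpos_left (hw2 n p) (le_of_lt hc))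
        (fun p => by
          have := (hw3 p).const_mul c
          simpa using this)
      have heq : ∀ n, J (Stmt15.kap K (c • w n)) = c * J (Stmt15.kap K (w n)) := by
        intro n
        rw [Stmt15.kap_smul hT hK c (Stmt15.sect_mem_tensor hT (hw1 n)),
          dan_smul hJ c (Stmt15.kap_mem hS hK (hw1 n))]
      have h2 := (hspec_inc hu w hw1 hw2 hw3).const_mul c
      exact tendsto_nhds_unique (hsm.congr heq) h2
  · -- I f ≤ I |f|
    intro u hu
    have habs : |u| ∈ RGen (TensorSet S T) := riesz_abs hR hu
    obtain ⟨a, ha1, ha2, ha3⟩ := Stmt15.dec_approx hS hT hu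
    obtain ⟨b, hb1, hb2, hb3⟩ := Stmt15.dec_approx hS hT habs
    obtain ⟨w, hw1, hw2, hw3⟩ := Stmt15.inc_approx hS hT hu
    have hfmem : ∀ n, Stmt15.kap K (a n) ∈ S := fun n => Stmt15.kap_mem hS hK (ha1 n)
    have hgmem : ∀ n, Stmt15.kap K (b n) ∈ S := fun n => Stmt15.kap_mem hS hK (hb1 n)
    have hfdec : ∀ n x, Stmt15.kap K (a (n+1)) x ≤ Stmt15.kap K (a n) x := fun n x =>
      Stmt15.kap_mono hT hK (Stmt15.sect_mem_tensor hT (ha1 (n+1)))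
        (Stmt15.sect_mem_tensor hT (ha1 n)) (ha2 n) x
    have hgdec : ∀ n x, Stmt15.kap K (b (n+1)) x ≤ Stmt15.kap K (b n) x := fun n x =>
      Stmt15.kap_mono hT hK (Stmt15.sect_mem_tensor hT (hb1 (n+1)))
        (Stmt15.sect_mem_tensor hT (hb1 n)) (hb2 n) x
    have hfconv := Stmt15.kap_tendsto hT hK hu ha1 ha2 ha3
    have hgconv := Stmt15.kap_tendsto hT hK habs hb1 hb2 hb3
    have hFG : ∀ x, Stmt15.kap K u x ≤ Stmt15.kap K |u| x := by
      intro x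
      apply dan_mono hK (Stmt15.sect_mem hT hu x) (Stmt15.sect_mem hT habs x)
      intro y
      rw [Pi.abs_apply]
      exact le_abs_self _
    have hwleu : ∀ p, w 0 p ≤ u p := Stmt15.inc_le hw2 hw3 0
    have hℓmem : Stmt15.kap K (w 0) ∈ S := Stmt15.kap_mem hS hK (hw1 0)
    have hlbf : ∀ n x, Stmt15.kap K (w 0) x ≤ Stmt15.kap K (a n) x := by
      intro n x
      apply Stmt15.kap_mono hT hK (Stmt15.sect_mem_tensor hT (hw1 0))
        (Stmt15.sect_mem_tensor hT (ha1 n)) ?_ x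
      intro p
      exact le_trans (hwleu p) (Stmt15.dec_ge ha2 ha3 n p)
    have hlbg : ∀ n x, Stmt15.kap K (w 0) x ≤ Stmt15.kap K (b n) x := by
      intro n x
      apply Stmt15.kap_mono hT hK (Stmt15.sect_mem_tensor hT (hw1 0))
        (Stmt15.sect_mem_tensor hT (hb1 n)) ?_ x
      intro p
      refine le_trans (hwleu p) (le_trans (le_abs_self (u p))
        (le_trans (le_of_eq ?_) (Stmt15.dec_ge hb2 hb3 n p)))
      rw [Pi.abs_apply]
    have hIu : Ifun u = ⨅ n, J (Stmt15.kap K (a n)) :=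
      tendsto_nhds_unique (hspec hu a ha1 ha2 ha3)
        (Stmt15.jlim_exists hJ hfmem hfdec hℓmem hlbf)
    have hIau : Ifun |u| = ⨅ n, J (Stmt15.kap K (b n)) :=
      tendsto_nhds_unique (hspec habs b hb1 hb2 hb3)
        (Stmt15.jlim_exists hJ hgmem hgdec hℓmem hlbg)
    rw [hIu, hIau]
    exact Stmt15.jlim_le hJ hfmem hgmem hfdec hgdec hfconv hgconv hFG hℓmem hlbf
  · -- continuity
    intro F hFmem hFnn hFdec hFconv
    have hF'mem : ∀ n, F (n+1) ∈ RGen (TensorSet S T) := fun n => hFmem (n+1)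
    have hF'nn : ∀ n p, 0 ≤ F (n+1) p := fun n p => hFnn n p
    have hF'dec : ∀ n p, F (n+1+1) p ≤ F (n+1) p := fun n p => hFdec (n+1) p
    have hF'conv : ∀ p, Filter.Tendsto (fun n => F (n+1) p) Filter.atTop (nhds 0) := fun p =>
      (hFconv p).comp (Filter.tendsto_add_atTop_nat 1)
    choose V hV1 hV2 hV3 using fun n => Stmt15.dec_approx hS hT (hF'mem n)
    have hfmem : ∀ i k, Stmt15.kap K (V i k) ∈ S := fun i k => Stmt15.kap_mem hS hK (hV1 i k)
    have hΦnn : ∀ n x, 0 ≤ Stmt15.kap K (F (n+1)) x := fun n x =>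
      dan_nonneg hK (Stmt15.sect_mem hT (hF'mem n) x) (fun y => hF'nn n (x, y))
    have hΦdec : ∀ n x, Stmt15.kap K (F (n+1+1)) x ≤ Stmt15.kap K (F (n+1)) x := fun n x =>
      Stmt15.kap_mono hT hK (Stmt15.sect_mem hT (hF'mem (n+1)))
        (Stmt15.sect_mem hT (hF'mem n)) (hF'dec n) x
    have hΦconv : ∀ x, Filter.Tendsto (fun n => Stmt15.kap K (F (n+1)) x)
        Filter.atTop (nhds 0) := by
      intro x
      exact hK.2.2.2.2 (fun n => fun y => F (n+1) (x, y))
        (fun n => Stmt15.sect_mem hT (hF'mem n) x)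
        (fun n => fun y => hF'nn (n+1) (x, y))
        (fun n => fun y => hF'dec n (x, y))
        (fun y => hF'conv (x, y))
    have hVmono : ∀ i k x, Stmt15.kap K (V i (k+1)) x ≤ Stmt15.kap K (V i k) x := fun i k x =>
      Stmt15.kap_mono hT hK (Stmt15.sect_mem_tensor hT (hV1 i (k+1)))
        (Stmt15.sect_mem_tensor hT (hV1 i k)) (hV2 i k) x
    have hVconv : ∀ i x, Filter.Tendsto (fun k => Stmt15.kap K (V i k) x) Filter.atTop
        (nhds (Stmt15.kap K (F (i+1)) x)) := fun i x =>
      Stmt15.kap_tendsto hT hK (hF'mem i) (hV1 i) (hV2 i) (hV3 i) x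
    have hVge : ∀ i k x, Stmt15.kap K (F (i+1)) x ≤ Stmt15.kap K (V i k) x := by
      intro i k x
      exact Stmt15.dec_ge (v := fun k => Stmt15.kap K (V i k)) (hVmono i) (hVconv i) k x
    have hVnn : ∀ i k x, 0 ≤ Stmt15.kap K (V i k) x := fun i k x =>
      le_trans (hΦnn i x) (hVge i k x)
    have hIeq : ∀ n, Ifun (F (n+1)) = ⨅ k, J (Stmt15.kap K (V n k)) := fun n =>
      tendsto_nhds_unique (hspec (hF'mem n) (V n) (hV1 n) (hV2 n) (hV3 n))
        (Stmt15.jlim_exists hJ (hfmem n) (hVmono n) (riesz_zero hS) (fun k x => hVnn n k x))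
    have hInn : ∀ n, 0 ≤ Ifun (F (n+1)) := by
      intro n
      rw [hIeq n]
      exact le_ciInf fun k => dan_nonneg hJ (hfmem n k) (hVnn n k)
    -- diagonal sequence
    set g : ℕ → X → ℝ := fun n => fun x =>
      (Finset.range (n+1)).inf' ⟨0, Finset.mem_range.mpr (Nat.succ_pos n)⟩
        (fun i => Stmt15.kap K (V i n) x) with hgdef
    have hgmem : ∀ n, g n ∈ S := fun n =>
      Stmt15.riesz_inf' hS _ _ _ (fun i _ => hfmem i n)
    have hgnn : ∀ n x, 0 ≤ g n x := by
      intro n x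
      apply Finset.le_inf'
      intro i _
      exact hVnn i n x
    have hgdec : ∀ n x, g (n+1) x ≤ g n x := by
      intro n x
      apply Finset.le_inf'
      intro i hi
      have hi' : i ∈ Finset.range (n+2) := by
        rw [Finset.mem_range] at hi ⊢
        omega
      calc g (n+1) x ≤ Stmt15.kap K (V i (n+1)) x :=
          Finset.inf'_le (fun i => Stmt15.kap K (V i (n+1)) x) hi'
        _ ≤ Stmt15.kap K (V i n) x := hVmono i n x
    have hgΦ : ∀ n x, Stmt15.kap K (F (n+1)) x ≤ g n x := by
      intro n x
      apply Finset.le_inf'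
      intro i hi
      rw [Finset.mem_range] at hi
      have hΦanti : Antitone (fun m => Stmt15.kap K (F (m+1)) x) :=
        antitone_nat_of_succ_le (fun m => hΦdec m x)
      calc Stmt15.kap K (F (n+1)) x ≤ Stmt15.kap K (F (i+1)) x := hΦanti (by omega)
        _ ≤ Stmt15.kap K (V i n) x := hVge i n x
    have hgconv : ∀ x, Filter.Tendsto (fun n => g n x) Filter.atTop (nhds 0) := by
      intro x
      rw [Metric.tendsto_atTop]
      intro ε hε
      obtain ⟨i, hi⟩ : ∃ i, Stmt15.kap K (F (i+1)) x < ε/2 := by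
        have h := hΦconv x
        rw [Metric.tendsto_atTop] at h
        obtain ⟨i, hi⟩ := h (ε/2) (by linarith)
        refine ⟨i, ?_⟩
        have := hi i le_rfl
        rw [Real.dist_eq, sub_zero] at this
        exact lt_of_le_of_lt (le_abs_self _) this
      have h2 := hVconv i x
      rw [Metric.tendsto_atTop] at h2
      obtain ⟨N₁, hN₁⟩ := h2 (ε/2) (by linarith)
      refine ⟨max i N₁, ?_⟩
      intro n hn
      rw [Real.dist_eq, sub_zero, abs_of_nonneg (hgnn n x)]
      have hin : i ∈ Finset.range (n+1) := by
        rw [Finset.mem_range]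
        have := le_trans (le_max_left i N₁) hn
        omega
      have h3 : g n x ≤ Stmt15.kap K (V i n) x :=
        Finset.inf'_le (fun i => Stmt15.kap K (V i n) x) hin
      have h4 := hN₁ n (le_trans (le_max_right i N₁) hn)
      rw [Real.dist_eq] at h4
      have h5 : Stmt15.kap K (V i n) x - Stmt15.kap K (F (i+1)) x < ε/2 :=
        lt_of_le_of_lt (le_abs_self _) h4
      linarith
    have hJg := hJ.2.2.2.2 g hgmem (fun n => fun x => hgnn (n+1) x)
      (fun n => fun x => hgdec n x) hgconv
    have hIle : ∀ n, Ifun (F (n+1)) ≤ J (g n) := by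
      intro n
      rw [hIeq n]
      have h := Stmt15.jlim_le hJ (f := fun k => Stmt15.kap K (V n k)) (g := fun _ => g n)
        (hfmem n) (fun _ => hgmem n) (hVmono n) (fun _ x => le_rfl) (hVconv n)
        (fun x => tendsto_const_nhds) (fun x => hgΦ n x) (riesz_zero hS)
        (fun k x => hVnn n k x)
      calc (⨅ k, J (Stmt15.kap K (V n k))) ≤ ⨅ _ : ℕ, J (g n) := h
        _ = J (g n) := ciInf_const
    have hsq : Filter.Tendsto (fun n => Ifun (F (n+1))) Filter.atTop (nhds 0) :=
      tendsto_of_tendsto_of_tendsto_of_le_of_le tendsto_const_nhds hJg hInn hIle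
    exact (Filter.tendsto_add_atTop_iff_nat 1).mp hsq
  · -- tensor values
    intro f hf g hg
    have h1 := hspec (subset_rgen _ (Stmt15.tensorSet_mem hf hg)) (fun _ => tensor f g)
      (fun _ => Stmt15.tensorSet_mem hf hg) (fun n p => le_rfl)
      (fun p => tendsto_const_nhds)
    have hval : Ifun (tensor f g) = J (Stmt15.kap K (tensor f g)) :=
      (tendsto_nhds_unique h1 tendsto_const_nhds)
    rw [hval, Stmt15.kap_tensor_single hK f hg, dan_smul hJ _ hf, mul_comm]
  · -- uniqueness
    intro I' hI' htens u hu
    obtain ⟨v, hv1, hv2, hv3⟩ := Stmt15.dec_approx hS hT hu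
    have hvge : ∀ n p, u p ≤ v n p := Stmt15.dec_ge hv2 hv3
    have hGmem : ∀ n, v n - u ∈ RGen (TensorSet S T) := fun n =>
      riesz_sub hR (subset_rgen _ (hv1 n)) hu
    have hI'lim := hI'.2.2.2.2 (fun n => v n - u) hGmem
      (fun n => by
        intro p
        simp only [Pi.sub_apply, Pi.zero_apply, sub_nonneg]
        exact hvge (n+1) p)
      (fun n => by
        intro p
        simp only [Pi.sub_apply]
        have := hv2 n p
        linarith)
      (fun p => by
        have := (hv3 p).sub_const (u p)
        simpa using this)
    have hI'conv : Filter.Tendsto (fun n => I' (v n)) Filter.atTop (nhds (I' u)) := by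
      have h0 : Filter.Tendsto (fun n => I' u + I' (v n - u)) Filter.atTop
          (nhds (I' u + 0)) := tendsto_const_nhds.add hI'lim
      rw [add_zero] at h0
      apply h0.congr
      intro n
      have hd := dan_sub hI' (subset_rgen _ (hv1 n)) hu
      linarith
    have hI'val : ∀ n, I' (v n) = J (Stmt15.kap K (v n)) := fun n =>
      Stmt15.i'_val hS hJ hK hI' htens (hv1 n)
    have h1 := hspec hu v hv1 hv2 hv3
    have h2 := hI'conv.congr hI'val
    exact tendsto_nhds_unique h2 h1
end

section
/- Let V and W be Lebesgue lattices over X and Y with Daniell integrals J and K, and let M be the set of functions f on X × Y such that f(x,·) ∈ W for all x ∈ X, the function x ↦ K(f(x,·)) belongs to V, and |f| ≤ g ⊗ h for some nonnegative g ∈ V, h ∈ W. Then P(M) ⊆ M: M is closed under pointwise limits of sequences dominated in absolute value by their first member, and moreover for such a convergent sequence fₙ → f in M, J(Kfₙ) → J(Kf). -/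
open Filter Topology

/-- the set `M` of Lemma 7: functions with sections in `W`, partial integral
in `V`, dominated by a nonnegative elementary tensor. -/
def Mset {X Y : Type*} (V : Set (X → ℝ)) (W : Set (Y → ℝ))
    (K : (Y → ℝ) → ℝ) : Set (X × Y → ℝ) :=
  { f | (∀ x, (fun y => f (x, y)) ∈ W) ∧
        (fun x => K (fun y => f (x, y))) ∈ V ∧
        ∃ g ∈ V, ∃ h ∈ W, 0 ≤ g ∧ 0 ≤ h ∧ |f| ≤ tensor g h }

/-! Dominated convergence holds for a Daniell integral `I` on a Lebesgue lattice `L`: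
if `Fₙ → f` with `|Fₙ| ≤ F₀`, the tail suprema `Hₙ = ⨆_{m ≥ n} |F_m - f|` lie in `L`
(as dominated limits of finite maxima), decrease to `0`, and bound `|I Fₙ - I f|`.
Applied first to the sections in `W` and then to the partial integrals `x ↦ K (F n (x, ·))`
in `V`, which are dominated by `x ↦ K (F 0 (x, ·))`, it gives the closedness of `M` together
with the convergence of the iterated integrals; the tensor bound of `F 0` passes to the limit. -/

section Dominated

variable {Z : Type*} {F : ℕ → Z → ℝ} {f : Z → ℝ}

lemma abs_le_head_of_dominated (hdom : ∀ n, |F (n + 1)| ≤ F 0) (n : ℕ) : |F n| ≤ F 0 := by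
  cases n with
  | zero => exact (abs_of_nonneg ((abs_nonneg _).trans (hdom 0))).le
  | succ n => exact hdom n

lemma abs_limit_le_head_of_dominated (hdom : ∀ n, |F (n + 1)| ≤ F 0)
    (hlim : ∀ z, Tendsto (fun n => F n z) atTop (𝓝 (f z))) : |f| ≤ F 0 := fun z =>
  le_of_tendsto (hlim z).abs
    (Eventually.of_forall fun n => abs_le_head_of_dominated hdom n z)

end Dominated

lemma tendsto_iSup_abs_sub_tail {u : ℕ → ℝ} {a : ℝ} (hu : Tendsto u atTop (𝓝 a)) :
    Tendsto (fun n => ⨆ m, |u (n + m) - a|) atTop (𝓝 0) := by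
  rw [Metric.tendsto_atTop]
  intro ε hε
  obtain ⟨N, hN⟩ := Metric.tendsto_atTop.mp hu (ε / 2) (half_pos hε)
  refine ⟨N, fun n hn => ?_⟩
  have hle : ⨆ m, |u (n + m) - a| ≤ ε / 2 :=
    ciSup_le fun m => (hN (n + m) (by omega)).le
  rw [Real.dist_eq, sub_zero, abs_of_nonneg (Real.iSup_nonneg fun m => abs_nonneg _)]
  linarith

namespace IsRiesz

variable {Z : Type*} {R : Set (Z → ℝ)}

lemma add_mem (hR : IsRiesz R) {f g : Z → ℝ} (hf : f ∈ R) (hg : g ∈ R) : f + g ∈ R :=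
  hR.1.2.1 f g hf hg

lemma smul_mem (hR : IsRiesz R) (c : ℝ) {f : Z → ℝ} (hf : f ∈ R) : c • f ∈ R :=
  hR.1.2.2 c f hf

lemma abs_mem (hR : IsRiesz R) {f : Z → ℝ} (hf : f ∈ R) : |f| ∈ R :=
  hR.2 f hf

lemma neg_mem (hR : IsRiesz R) {f : Z → ℝ} (hf : f ∈ R) : -f ∈ R := by
  simpa using hR.smul_mem (-1) hf

lemma sub_mem (hR : IsRiesz R) {f g : Z → ℝ} (hf : f ∈ R) (hg : g ∈ R) : f - g ∈ R := by
  simpa [sub_eq_add_neg] using hR.add_mem hf (hR.neg_mem hg)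

lemma sup_mem (hR : IsRiesz R) {f g : Z → ℝ} (hf : f ∈ R) (hg : g ∈ R) : f ⊔ g ∈ R := by
  rw [sup_eq_half_smul_add_add_abs_sub' ℝ]
  exact hR.smul_mem _ (hR.add_mem (hR.add_mem hf hg) (hR.abs_mem (hR.sub_mem hg hf)))

lemma partialSups_mem (hR : IsRiesz R) {D : ℕ → Z → ℝ} (hD : ∀ n, D n ∈ R) (k : ℕ) :
    partialSups D k ∈ R := by
  induction k with
  | zero => simpa using hD 0
  | succ k ih => simpa [partialSups_add_one] using hR.sup_mem ih (hD (k + 1))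

end IsRiesz

lemma IsLebesgue.iSup_mem {Z : Type*} {L : Set (Z → ℝ)} (hL : IsLebesgue L)
    {D : ℕ → Z → ℝ} {G : Z → ℝ} (hD : ∀ n, D n ∈ L) (hG : G ∈ L)
    (hD_nonneg : ∀ n, 0 ≤ D n) (hD_le : ∀ n, D n ≤ G) :
    (fun z => ⨆ n, D n z) ∈ L := by
  have hbdd : ∀ z, BddAbove (Set.range fun k => partialSups D k z) := fun z =>
    ⟨G z, by
      rintro _ ⟨k, rfl⟩
      exact partialSups_le D k G (fun n _ => hD_le n) z⟩
  refine hL.2 ⟨fun | 0 => G | k + 1 => partialSups D k, ?_, fun k z => ?_, fun z => ?_⟩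
  · rintro (_ | k)
    exacts [hG, hL.1.partialSups_mem hD k]
  · have h0 : 0 ≤ partialSups D k := (hD_nonneg 0).trans (le_partialSups_of_le D (Nat.zero_le k))
    simpa [abs_of_nonneg (h0 z)] using partialSups_le D k G (fun n _ => hD_le n) z
  · refine (tendsto_add_atTop_iff_nat 1).mp ?_
    have hmono : Monotone fun k => partialSups D k z := fun _ _ h => (partialSups D).mono h z
    simpa [Pi.partialSups_apply] using tendsto_atTop_ciSup hmono (hbdd z)

namespace IsDaniell

variable {Z : Type*} {R : Set (Z → ℝ)} {I : (Z → ℝ) → ℝ}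

lemma map_neg (hI : IsDaniell R I) {f : Z → ℝ} (hf : f ∈ R) : I (-f) = -I f := by
  simpa using hI.2.2.1 (-1) f hf

lemma map_sub (hI : IsDaniell R I) {f g : Z → ℝ} (hf : f ∈ R) (hg : g ∈ R) :
    I (f - g) = I f - I g := by
  rw [sub_eq_add_neg, hI.2.1 f (-g) hf (hI.1.neg_mem hg), hI.map_neg hg, sub_eq_add_neg]

lemma abs_map_le (hI : IsDaniell R I) {f : Z → ℝ} (hf : f ∈ R) : |I f| ≤ I |f| := by
  refine abs_le.mpr ⟨?_, hI.2.2.2.1 f hf⟩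
  have h := hI.2.2.2.1 (-f) (hI.1.neg_mem hf)
  rw [abs_neg, hI.map_neg hf] at h
  linarith

lemma map_nonneg (hI : IsDaniell R I) {f : Z → ℝ} (hf : f ∈ R) (h0 : 0 ≤ f) : 0 ≤ I f :=
  (abs_nonneg _).trans (by simpa [abs_of_nonneg h0] using hI.abs_map_le hf)

lemma mono (hI : IsDaniell R I) {f g : Z → ℝ} (hf : f ∈ R) (hg : g ∈ R) (h : f ≤ g) :
    I f ≤ I g := by
  have h0 : 0 ≤ I (g - f) := hI.map_nonneg (hI.1.sub_mem hg hf) (sub_nonneg.mpr h)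
  linarith [hI.map_sub hg hf]

lemma abs_map_le_of_abs_le (hI : IsDaniell R I) {f g : Z → ℝ} (hf : f ∈ R) (hg : g ∈ R)
    (h : |f| ≤ g) : |I f| ≤ I g :=
  (hI.abs_map_le hf).trans (hI.mono (hI.1.abs_mem hf) hg h)

theorem tendsto_of_dominated (hL : IsLebesgue R) (hI : IsDaniell R I)
    {F : ℕ → Z → ℝ} {f : Z → ℝ} (hF : ∀ n, F n ∈ R) (hdom : ∀ n, |F (n + 1)| ≤ F 0)
    (hlim : ∀ z, Tendsto (fun n => F n z) atTop (𝓝 (f z))) :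
    Tendsto (fun n => I (F n)) atTop (𝓝 (I f)) := by
  have hf : f ∈ R := hL.2 ⟨F, hF, hdom, hlim⟩
  set D : ℕ → Z → ℝ := fun n => |F n - f|
  have hD : ∀ n, D n ∈ R := fun n => hI.1.abs_mem (hI.1.sub_mem (hF n) hf)
  have hD_le : ∀ n, D n ≤ (2 : ℝ) • F 0 := fun n z => by
    have hFn := abs_le_head_of_dominated hdom n z
    have hf0 := abs_limit_le_head_of_dominated hdom hlim z
    simp only [D, Pi.abs_apply, Pi.sub_apply, Pi.smul_apply, smul_eq_mul] at hFn hf0 ⊢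
    linarith [abs_sub (F n z) (f z)]
  set H : ℕ → Z → ℝ := fun n z => ⨆ m, D (n + m) z
  have hbdd : ∀ n z, BddAbove (Set.range fun m => D (n + m) z) := fun n z =>
    ⟨((2 : ℝ) • F 0) z, by rintro _ ⟨m, rfl⟩; exact hD_le (n + m) z⟩
  have hH : ∀ n, H n ∈ R := fun n =>
    hL.iSup_mem (fun m => hD (n + m)) (hI.1.smul_mem 2 (hF 0))
      (fun _ _ => abs_nonneg _) (fun m => hD_le (n + m))
  have hH_anti : ∀ n, H (n + 1) ≤ H n := fun n z =>
    ciSup_le fun m => by simpa only [add_assoc, add_comm 1 m] using le_ciSup (hbdd n z) (m + 1)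
  have hH_lim : ∀ z, Tendsto (fun n => H n z) atTop (𝓝 0) := fun z => by
    simpa only [H, D, Pi.abs_apply, Pi.sub_apply] using tendsto_iSup_abs_sub_tail (hlim z)
  have hIH : Tendsto (fun n => I (H n)) atTop (𝓝 0) :=
    hI.2.2.2.2 H hH (fun n _ => Real.iSup_nonneg fun _ => abs_nonneg _) hH_anti hH_lim
  have hbound : ∀ n, |I (F n) - I f| ≤ I (H n) := fun n => by
    rw [← hI.map_sub (hF n) hf]
    exact hI.abs_map_le_of_abs_le (hI.1.sub_mem (hF n) hf) (hH n)
      fun z => by simpa only [add_zero] using le_ciSup (hbdd n z) 0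
  exact tendsto_sub_nhds_zero_iff.mp (squeeze_zero_norm hbound hIH)

end IsDaniell

section Product

variable {X Y : Type*} {V : Set (X → ℝ)} {W : Set (Y → ℝ)} {J : (X → ℝ) → ℝ} {K : (Y → ℝ) → ℝ}
  {F : ℕ → X × Y → ℝ} {f : X × Y → ℝ}

lemma tendsto_partialIntegral_of_dominated (hW : IsLebesgue W) (hK : IsDaniell W K)
    (hF : ∀ n x, (fun y => F n (x, y)) ∈ W) (hdom : ∀ n, |F (n + 1)| ≤ F 0)
    (hlim : ∀ p, Tendsto (fun n => F n p) atTop (𝓝 (f p))) (x : X) :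
    Tendsto (fun n => K (fun y => F n (x, y))) atTop (𝓝 (K (fun y => f (x, y)))) :=
  hK.tendsto_of_dominated hW (fun n => hF n x) (fun n y => hdom n (x, y)) fun y => hlim (x, y)

lemma abs_partialIntegral_le_of_dominated (hK : IsDaniell W K)
    (hF : ∀ n x, (fun y => F n (x, y)) ∈ W) (hdom : ∀ n, |F (n + 1)| ≤ F 0) (n : ℕ) :
    |fun x => K (fun y => F (n + 1) (x, y))| ≤ fun x => K (fun y => F 0 (x, y)) := fun x =>
  hK.abs_map_le_of_abs_le (hF (n + 1) x) (hF 0 x) fun y => hdom n (x, y)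

theorem Mset.limit_mem_and_tendsto (hV : IsLebesgue V) (hW : IsLebesgue W)
    (hJ : IsDaniell V J) (hK : IsDaniell W K)
    (hF : ∀ n, F n ∈ Mset V W K) (hdom : ∀ n, |F (n + 1)| ≤ F 0)
    (hlim : ∀ p, Tendsto (fun n => F n p) atTop (𝓝 (f p))) :
    f ∈ Mset V W K ∧
      Tendsto (fun n => J (fun x => K (fun y => F n (x, y)))) atTop
        (𝓝 (J (fun x => K (fun y => f (x, y))))) := by
  have hsec : ∀ n x, (fun y => F n (x, y)) ∈ W := fun n => (hF n).1
  have hKlim := tendsto_partialIntegral_of_dominated hW hK hsec hdom hlim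
  have hKdom := abs_partialIntegral_le_of_dominated hK hsec hdom
  have hKf : (fun x => K (fun y => f (x, y))) ∈ V := hV.2 ⟨_, fun n => (hF n).2.1, hKdom, hKlim⟩
  obtain ⟨g, hg, h, hh, hg0, hh0, hF0⟩ := (hF 0).2.2
  refine ⟨⟨fun x => hW.2 ⟨_, fun n => hsec n x, fun n y => hdom n (x, y), fun y => hlim (x, y)⟩,
    hKf, g, hg, h, hh, hg0, hh0, ?_⟩, hJ.tendsto_of_dominated hV (fun n => (hF n).2.1) hKdom hKlim⟩
  exact (abs_limit_le_head_of_dominated hdom hlim).trans (le_abs_self _ |>.trans hF0)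

end Product

theorem stmt17 {X Y : Type*} (V : Set (X → ℝ)) (W : Set (Y → ℝ))
    (J : (X → ℝ) → ℝ) (K : (Y → ℝ) → ℝ)
    (hV : IsLebesgue V) (hW : IsLebesgue W)
    (hJ : IsDaniell V J) (hK : IsDaniell W K) :
    Pdom (Mset V W K) ⊆ Mset V W K ∧
    ∀ (F : ℕ → X × Y → ℝ) (f : X × Y → ℝ),
      (∀ n, F n ∈ Mset V W K) → (∀ n, |F (n + 1)| ≤ F 0) →
      (∀ p, Tendsto (fun n => F n p) atTop (𝓝 (f p))) →
      Tendsto (fun n => J (fun x => K (fun y => F n (x, y)))) atTop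
        (𝓝 (J (fun x => K (fun y => f (x, y))))) :=
  ⟨fun _ ⟨_, hF, hdom, hlim⟩ => (Mset.limit_mem_and_tendsto hV hW hJ hK hF hdom hlim).1,
    fun _ _ hF hdom hlim => (Mset.limit_mem_and_tendsto hV hW hJ hK hF hdom hlim).2⟩
end
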